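/- arXiv:1106.3774 — 6 statements merged into one kernel-verified Lean document; each statement's English description precedes it below -/
import Mathlib

section
/- For every integer n ≥ 1, the number of regions of the type A_{n-1} Shi arrangement S^A_n equals the number of parking functions of length n. -/
/-- The complement of the type `A_{n-1}` Shi arrangement in `ℝ^n`. -/
def shiComplementA (n : ℕ) : Set (Fin n → ℝ) :=
  {x | ∀ i j : Fin n, i < j → x i - x j ≠ 0 ∧ x i - x j ≠ 1}

/-- `a : Fin n → ℕ` is a parking function of length `n`: its entries lie in `{1,…,n}`
and its increasing rearrangement `b₁ ≤ ⋯ ≤ bₙ` satisfies `bᵢ ≤ i`. -/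
def IsParkingFunction (n : ℕ) (a : Fin n → ℕ) : Prop :=
  (∀ i, a i ∈ Finset.Icc 1 n) ∧
    ∃ g : Equiv.Perm (Fin n), Monotone (fun i => a (g i)) ∧ ∀ i : Fin n, a (g i) ≤ (i : ℕ) + 1

/-!
A region of the Shi arrangement is determined by the permutation `v` listing its coordinates
increasingly and by which inversions (positions `p < q` with `v q < v p`) are shorter than `1`.
Encode distances by the reach function `t`, where `t p` is the last position within distance
`1` of position `p`: every region has a least reach function, and the pairs `(v, t)` arising
this way are exactly those in which `v` decreases along every arc `low t q → q` of `t`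
(`IsCompatible`); every such pair is realised by a point.

The arcs split the positions into chains. Labelling the coordinate `v q` by the first position
of the chain of `q` turns `(v, t)` into a parking function, and this is a bijection: `t` is
recovered from the chain lengths, because each new position continues the earliest chain that
is still open, and `v` is recovered from the labels because it decreases along chains.
-/

noncomputable def IsLocallyConstant.connectedComponentsEquivRange {X S : Type*}
    [TopologicalSpace X] {f : X → S} (hf : IsLocallyConstant f)
    (hfib : ∀ x, IsPreconnected (f ⁻¹' {f x})) : ConnectedComponents X ≃ Set.range f := by
  have key : ∀ x y : X, (x : ConnectedComponents X) = y ↔ f x = f y := fun x y => by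
    rw [ConnectedComponents.coe_eq_coe']
    exact ⟨fun h => hf.apply_eq_of_isPreconnected isPreconnected_connectedComponent h
      mem_connectedComponent, fun h => (hfib y).subset_connectedComponent rfl h⟩
  refine Equiv.ofBijective (Quotient.lift (Set.rangeFactorization f) fun x y hxy =>
    Subtype.ext ((key x y).1 (Quotient.sound hxy))) ⟨fun c c' h => ?_, ?_⟩
  · obtain ⟨x, rfl⟩ := ConnectedComponents.surjective_coe c
    obtain ⟨y, rfl⟩ := ConnectedComponents.surjective_coe c'
    exact (key x y).2 (congrArg Subtype.val h)
  · rintro ⟨_, x, rfl⟩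
    exact ⟨x, rfl⟩

open Finset

namespace Shi

variable {n : ℕ}

theorem perm_eq_of_lt_iff {w w' : Equiv.Perm (Fin n)} (h : ∀ i j, w i < w j ↔ w' i < w' j) :
    w = w' := by
  have hmono : StrictMono (w.symm.trans w') := fun k l hkl => by simpa [← h] using hkl
  ext k
  simpa using congrArg Fin.val (hmono.apply_eq (x := w k)).symm

section Relabel

variable {α : Type*} [LinearOrder α] {f h : Fin n → α} {v : Equiv.Perm (Fin n)}

/-- The permutation `v` with `f ∘ v = h` that reverses the order inside every fibre of `h`
(when `f` and `h` have the same sorted values, `relabel_spec`). -/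
def relabel (f h : Fin n → α) : Equiv.Perm (Fin n) :=
  (Tuple.sort fun q => toLex (h q, q)).symm.trans
    (Tuple.sort fun i => toLex (f i, OrderDual.toDual i))

theorem eq_relabel (hv : ∀ q, f (v q) = h q)
    (hanti : ∀ q q', h q = h q' → q < q' → v q' < v q) : v = relabel f h := by
  set σA := Tuple.sort fun q => toLex (h q, q)
  have hsort : σA.trans v = Tuple.sort fun i => toLex (f i, OrderDual.toDual i) := by
    refine Tuple.eq_sort_iff.2 ⟨fun k k' hk => ?_, fun k k' hk he => ?_⟩
    · have := Tuple.monotone_sort (fun q => toLex (h q, q)) hk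
      simp only [Function.comp_apply, Equiv.trans_apply, Prod.Lex.toLex_le_toLex', hv] at this ⊢
      refine ⟨this.1, fun heq => ?_⟩
      rcases (this.2 heq).eq_or_lt with e | lt
      · rw [e]
      · exact (hanti _ _ heq lt).le
    · have := congrArg (fun x => OrderDual.ofDual (ofLex x).2) he
      exact absurd ((σA.trans v).injective this) hk.ne
  ext q
  rw [relabel, Equiv.trans_apply, ← hsort, Equiv.trans_apply, Equiv.apply_symm_apply]

theorem relabel_spec (hfh : f ∘ Tuple.sort f = h ∘ Tuple.sort h) :
    (∀ q, f (relabel f h q) = h q) ∧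
      ∀ q q', h q = h q' → q < q' → relabel f h q' < relabel f h q := by
  set σA := Tuple.sort fun q => toLex (h q, q)
  set σB := Tuple.sort fun i => toLex (f i, OrderDual.toDual i)
  have hA : StrictMono ((fun q => toLex (h q, q)) ∘ σA) :=
    (Tuple.monotone_sort _).strictMono_of_injective <|
      (toLex.injective.comp fun _ _ e => (Prod.ext_iff.1 e).2).comp σA.injective
  have hB : StrictMono ((fun i => toLex (f i, OrderDual.toDual i)) ∘ σB) :=
    (Tuple.monotone_sort _).strictMono_of_injective <|
      (toLex.injective.comp fun _ _ e => (Prod.ext_iff.1 e).2).comp σB.injective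
  have hfB : f ∘ σB = h ∘ σA := by
    rw [Tuple.comp_sort_eq_comp_iff_monotone.2 (Prod.Lex.monotone_fst_ofLex.comp hB.monotone),
      hfh, Tuple.comp_sort_eq_comp_iff_monotone.2 (Prod.Lex.monotone_fst_ofLex.comp hA.monotone)]
  have hval : ∀ q, f (relabel f h q) = h q := fun q => by
    simpa [relabel] using congrFun hfB (σA.symm q)
  refine ⟨hval, fun q q' he hlt => ?_⟩
  have h1 : σA.symm q < σA.symm q' := hA.lt_iff_lt.1 <| by
    simpa using Prod.Lex.toLex_lt_toLex.2 (Or.inr ⟨he, hlt⟩)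
  have h2 := hB h1
  have hr : ∀ q, σB (σA.symm q) = relabel f h q := fun _ => rfl
  simp only [Function.comp_apply, Prod.Lex.toLex_lt_toLex, hr, hval, he, lt_irrefl, false_or,
    OrderDual.toDual_lt_toDual] at h2
  exact h2.2

end Relabel

section Reach

/-- A reach function: `t p` is read as the last position within distance `1` of position `p`
among increasingly listed reals. -/
def IsAdmissible (t : Fin n → Fin n) : Prop := Monotone t ∧ ∀ p, p ≤ t p

/-- The first position whose reach covers `q`; the `insert q` only makes the set nonempty, and
for admissible `t` this is the lower adjoint of `t` (`gc_low`). -/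
def low (t : Fin n → Fin n) (q : Fin n) : Fin n :=
  (insert q (univ.filter fun p => q ≤ t p)).min' (insert_nonempty _ _)

/-- `q` is the end of the arc `low t q → q`. -/
def IsTarget (t : Fin n → Fin n) (q : Fin n) : Prop := low t q < q ∧ t (low t q) = q

open Classical in
/-- The first position of the chain of arcs through `q`. -/
noncomputable def head (t : Fin n → Fin n) (q : Fin n) : Fin n :=
  if h : IsTarget t q then
    have := h.1
    head t (low t q)
  else q
termination_by q

noncomputable def mult (t : Fin n → Fin n) (z : Fin n) : ℕ := #{q | head t q = z}

def IsCompatible (v : Equiv.Perm (Fin n)) (t : Fin n → Fin n) : Prop :=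
  ∀ q, IsTarget t q → v q < v (low t q)

variable {t t' : Fin n → Fin n} {v : Equiv.Perm (Fin n)} {p q q' c d : Fin n}

theorem low_le_iff (ht : IsAdmissible t) : low t q ≤ p ↔ q ≤ t p := by
  constructor
  · intro h
    rcases mem_insert.mp (min'_mem (insert q (univ.filter fun p => q ≤ t p))
      (insert_nonempty _ _)) with hq | hq
    · have hq : low t q = q := hq
      exact (hq ▸ h).trans (ht.2 p)
    · have hq : q ≤ t (low t q) := (mem_filter.mp hq).2
      exact hq.trans (ht.1 h)
  · intro h
    apply min'_le
    exact mem_insert_of_mem (mem_filter.mpr ⟨mem_univ _, h⟩)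

theorem gc_low (ht : IsAdmissible t) : GaloisConnection (low t) t := fun _ _ => low_le_iff ht

theorem low_reach_le (ht : IsAdmissible t) (p : Fin n) : low t (t p) ≤ p := (gc_low ht).l_u_le p

theorem isTarget_reach (ht : IsAdmissible t) (hp : p < t p) : IsTarget t (t p) :=
  ⟨(low_reach_le ht p).trans_lt hp,
    le_antisymm (ht.1 (low_reach_le ht p)) ((gc_low ht).le_u_l _)⟩

theorem head_of_isTarget (h : IsTarget t q) : head t q = head t (low t q) := by
  rw [head, dif_pos h]

theorem head_of_not_isTarget (h : ¬ IsTarget t q) : head t q = q := by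
  rw [head, dif_neg h]

theorem head_le (q : Fin n) : head t q ≤ q := by
  induction q using WellFoundedLT.induction with
  | _ q ih =>
    by_cases h : IsTarget t q
    · rw [head_of_isTarget h]; exact (ih _ h.1).trans h.1.le
    · rw [head_of_not_isTarget h]

theorem isTarget_of_head_lt (h : head t q < q) : IsTarget t q := by
  by_contra hq
  rw [head_of_not_isTarget hq] at h
  exact h.false

theorem not_isTarget_head (q : Fin n) : ¬ IsTarget t (head t q) := by
  induction q using WellFoundedLT.induction with
  | _ q ih =>
    by_cases h : IsTarget t q
    · rw [head_of_isTarget h]; exact ih _ h.1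
    · rwa [head_of_not_isTarget h]

theorem mult_pos_iff : 0 < mult t q ↔ ¬ IsTarget t q := by
  simp only [mult, card_pos]
  constructor
  · rintro ⟨c, hc⟩
    rw [← (mem_filter.mp hc).2]
    exact not_isTarget_head c
  · exact fun h => ⟨q, by simpa using head_of_not_isTarget h⟩

theorem le_low_of_head_eq (ht : IsAdmissible t) (hq : IsTarget t q) (hc : head t c = head t q)
    (hcq : c < q) : c ≤ low t q := by
  induction q using WellFoundedLT.induction generalizing c with
  | _ q ih =>
    by_contra! hlt
    have hcT : IsTarget t c := isTarget_of_head_lt <| by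
      rw [hc, head_of_isTarget hq]
      exact (head_le _).trans_lt hlt
    have hle : low t c ≤ low t q := (gc_low ht).monotone_l hcq.le
    rcases hle.eq_or_lt with heq | hlt'
    · exact hcq.ne (by rw [← hcT.2, heq, hq.2])
    · have := ih c hcq hcT (by rw [hc, head_of_isTarget hq]) hlt
      exact (this.trans_lt hlt').false

theorem lt_reach_of_head_eq (ht : IsAdmissible t) (hcd : c < d) (h : head t c = head t d) :
    c < t c ∧ head t (t c) = head t c := by
  induction d using WellFoundedLT.induction with
  | _ d ih =>
    have hd : IsTarget t d := isTarget_of_head_lt (h ▸ (head_le c).trans_lt hcd)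
    rcases (le_low_of_head_eq ht hd h hcd).eq_or_lt with he | hlt
    · rw [he, hd.2, ← he]
      exact ⟨hcd, h.symm⟩
    · exact ih _ hd.1 hlt (by rw [h, head_of_isTarget hd])

theorem isTarget_iff_of_mult_eq (hm : ∀ z, mult t z = mult t' z) :
    IsTarget t q ↔ IsTarget t' q := by
  rw [← not_iff_not, ← mult_pos_iff, ← mult_pos_iff, hm]

theorem low_le_low_of_mult_eq (ht : IsAdmissible t) (ht' : IsAdmissible t')
    (hm : ∀ z, mult t z = mult t' z) (hq : IsTarget t q)
    (hbelow : ∀ c < q, head t c = head t' c) : low t' q ≤ low t q := by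
  -- Otherwise `t' p < q`. The chain of `p` has as many elements for `t'` as for `t`, where it
  -- contains `q`, so for `t'` it continues after `p` by the arc to `t' p`. As `t` and `t'` agree
  -- below `q`, `t' p` would lie in the `t`-chain of `q` strictly between `p = low t q` and `q`.
  set p := low t q
  by_contra! hp
  have hreach : t' p < q := not_le.mp fun h => hp.not_ge ((low_le_iff ht').2 h)
  have hp' : head t' p = head t q := by rw [← hbelow p hq.1, head_of_isTarget hq]
  obtain ⟨d, hd, hqd⟩ : ∃ d, head t' d = head t q ∧ q ≤ d := by
    by_contra! hall
    have hsub : ({c | head t' c = head t q} : Finset _) ⊂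
        ({c | head t c = head t q} : Finset _) := by
      refine (ssubset_iff_of_subset fun c hc => ?_).mpr ⟨q, by simp, fun hq' => ?_⟩
      · simp only [mem_filter, mem_univ, true_and] at hc ⊢
        rwa [hbelow c (hall c hc)]
      · exact (hall q (mem_filter.mp hq').2).false
    exact (card_lt_card hsub).ne (hm _).symm
  obtain ⟨hlt, hfib⟩ := lt_reach_of_head_eq ht' (hq.1.trans_le hqd) (hp'.trans hd.symm)
  have : t' p ≤ p := le_low_of_head_eq ht hq (by rw [hbelow _ hreach, hfib, hp']) hreach
  exact (hlt.trans_le this).false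

theorem head_eq_of_mult_eq (ht : IsAdmissible t) (ht' : IsAdmissible t')
    (hm : ∀ z, mult t z = mult t' z) : head t = head t' := by
  funext q
  induction q using WellFoundedLT.induction with
  | _ q ih =>
    by_cases hq : IsTarget t q
    · have hq' : IsTarget t' q := (isTarget_iff_of_mult_eq hm).1 hq
      have hlow : low t q = low t' q := le_antisymm
        (low_le_low_of_mult_eq ht' ht (fun z => (hm z).symm) hq' fun c hc => (ih c hc).symm)
        (low_le_low_of_mult_eq ht ht' hm hq ih)
      rw [head_of_isTarget hq, head_of_isTarget hq', hlow, ih _ (hlow ▸ hq.1)]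
    · rw [head_of_not_isTarget hq,
        head_of_not_isTarget (mt (isTarget_iff_of_mult_eq hm).2 hq)]

theorem reach_le_of_mult_eq (ht : IsAdmissible t) (ht' : IsAdmissible t')
    (hm : ∀ z, mult t z = mult t' z) (p : Fin n) : t p ≤ t' p := by
  rcases (ht.2 p).eq_or_lt with he | hlt
  · exact he ▸ ht'.2 p
  · have := low_le_low_of_mult_eq ht ht' hm (isTarget_reach ht hlt)
      fun c _ => congrFun (head_eq_of_mult_eq ht ht' hm) c
    exact (low_le_iff ht').1 (this.trans (low_reach_le ht p))

theorem eq_of_mult_eq (ht : IsAdmissible t) (ht' : IsAdmissible t')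
    (hm : ∀ z, mult t z = mult t' z) : t = t' :=
  funext fun p => le_antisymm (reach_le_of_mult_eq ht ht' hm p)
    (reach_le_of_mult_eq ht' ht (fun z => (hm z).symm) p)

theorem lt_of_head_eq (ht : IsAdmissible t) (hv : IsCompatible v t) (h : head t q = head t q')
    (hqq' : q < q') : v q' < v q := by
  induction q' using WellFoundedLT.induction with
  | _ q' ih =>
    have hq' : IsTarget t q' := isTarget_of_head_lt (h ▸ (head_le q).trans_lt hqq')
    rcases (le_low_of_head_eq ht hq' h hqq').eq_or_lt with he | hlt
    · exact he ▸ hv q' hq'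
    · exact (hv q' hq').trans (ih _ hq'.1 (by rw [h, head_of_isTarget hq']) hlt)

end Reach

section Parking

variable {h : Fin n → Fin n} {t : Fin n → Fin n} {v : Equiv.Perm (Fin n)}

/-- A parking function with values shifted down to `0, …, n - 1`. -/
def IsParking (f : Fin n → Fin n) : Prop := ∀ k, f (Tuple.sort f k) ≤ k

theorem comp_sort_le_of_le (hh : ∀ q, h q ≤ q) (k : Fin n) : h (Tuple.sort h k) ≤ k := by
  -- otherwise the `k + 1` positions `q ≤ k` would all be sorted strictly before `k`
  by_contra! hk
  have hmaps : ∀ q ∈ Iic k, (Tuple.sort h).symm q ∈ Iio k := fun q hq => by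
    simp only [mem_Iic, mem_Iio] at hq ⊢
    by_contra! hle
    have := Tuple.monotone_sort h hle
    simp only [Function.comp_apply, Equiv.apply_symm_apply] at this
    exact ((this.trans (hh q)).trans hq).not_gt hk
  have := card_le_card_of_injOn _ hmaps (Tuple.sort h).symm.injective.injOn
  simp at this

theorem isParking_iff_exists_perm {f : Fin n → Fin n} :
    IsParking f ↔ ∃ g : Equiv.Perm (Fin n), Monotone (f ∘ g) ∧ ∀ k, f (g k) ≤ k := by
  refine ⟨fun hf => ⟨_, Tuple.monotone_sort f, hf⟩, fun ⟨g, hg, hgle⟩ k => ?_⟩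
  have := congrFun (Tuple.comp_sort_eq_comp_iff_monotone.2 hg) k
  simp only [Function.comp_apply] at this
  exact this ▸ hgle k

def parkingEquiv :
    {f : Fin n → Fin n // IsParking f} ≃ {a : Fin n → ℕ // IsParkingFunction n a} where
  toFun f := ⟨fun i => f.1 i + 1, fun i => by simp, Tuple.sort f.1,
    fun _ _ hij => by simpa using Tuple.monotone_sort f.1 hij, fun i => by simpa using f.2 i⟩
  invFun a := ⟨fun i => ⟨a.1 i - 1, by have := mem_Icc.1 (a.2.1 i); omega⟩, by
    obtain ⟨g, hg, hgle⟩ := a.2.2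
    refine isParking_iff_exists_perm.2 ⟨g, fun i j hij => ?_, fun k => ?_⟩
    · simpa using Nat.sub_le_sub_right (hg hij) 1
    · rw [Fin.le_def]
      have := hgle k
      dsimp only
      omega⟩
  left_inv f := by ext; simp
  right_inv a := by ext i; have := mem_Icc.1 (a.2.1 i); simp; omega

def admissibleEquiv : {t : Fin n → Fin n // IsAdmissible t} ≃
    {b : Fin n → Fin n // Monotone b ∧ ∀ k, b k ≤ k} where
  toFun t := ⟨fun k => (t.1 k.rev).rev,
    fun _ _ h => Fin.rev_le_rev.2 (t.2.1 (Fin.rev_le_rev.2 h)),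
    fun k => by simpa using Fin.rev_le_rev.2 (t.2.2 k.rev)⟩
  invFun b := ⟨fun p => (b.1 p.rev).rev,
    fun _ _ h => Fin.rev_le_rev.2 (b.2.1 (Fin.rev_le_rev.2 h)),
    fun p => by simpa using Fin.rev_le_rev.2 (b.2.2 p.rev)⟩
  left_inv t := by ext; simp
  right_inv b := by ext; simp

theorem mult_eq_card_comp_perm (σ : Equiv.Perm (Fin n)) (z : Fin n) :
    mult t z = #{k | head t (σ k) = z} :=
  (card_equiv σ fun _ => by simp).symm

theorem exists_isAdmissible_sorted_head_eq {b : Fin n → Fin n}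
    (hb : Monotone b ∧ ∀ k, b k ≤ k) :
    ∃ t, IsAdmissible t ∧ head t ∘ Tuple.sort (head t) = b := by
  -- `t ↦ sorted heads` is injective between two sets that `admissibleEquiv` shows equinumerous
  let F : {t : Fin n → Fin n // IsAdmissible t} →
      {b : Fin n → Fin n // Monotone b ∧ ∀ k, b k ≤ k} :=
    fun t => ⟨head t.1 ∘ Tuple.sort (head t.1), Tuple.monotone_sort _, comp_sort_le_of_le head_le⟩
  have hF : F.Injective := fun t t' h => Subtype.ext <| eq_of_mult_eq t.2 t'.2 fun z => by
    rw [mult_eq_card_comp_perm (Tuple.sort (head t.1)),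
      mult_eq_card_comp_perm (Tuple.sort (head t'.1))]
    exact congrArg (fun g => #{k | g k = z}) (congrArg Subtype.val h)
  obtain ⟨t, ht⟩ := ((Nat.bijective_iff_injective_and_card F).2
    ⟨hF, Nat.card_congr admissibleEquiv⟩).2 ⟨b, hb⟩
  exact ⟨t.1, t.2, congrArg Subtype.val ht⟩

theorem eq_relabel_of_isCompatible (ht : IsAdmissible t) (hv : IsCompatible v t) :
    v = relabel (head t ∘ v.symm) (head t) :=
  eq_relabel (fun q => by simp) fun _ _ => lt_of_head_eq ht hv

/-- A Shi region in coded form: `perm` lists the coordinates increasingly and `reach` is the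
least reach function of the region (`canonReach`). -/
@[ext]
structure CompatiblePair (n : ℕ) where
  perm : Equiv.Perm (Fin n)
  reach : Fin n → Fin n
  isAdmissible : IsAdmissible reach
  isCompatible : IsCompatible perm reach

noncomputable def CompatiblePair.toParking (c : CompatiblePair n) :
    {f : Fin n → Fin n // IsParking f} :=
  ⟨head c.reach ∘ c.perm.symm, fun k =>
    (congrFun (Tuple.comp_perm_comp_sort_eq_comp_sort (f := head c.reach) (σ := c.perm.symm))
      k).trans_le (comp_sort_le_of_le head_le k)⟩

theorem CompatiblePair.toParking_injective : Function.Injective (toParking (n := n)) := by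
  rintro ⟨v, t, ht, hv⟩ ⟨v', t', ht', hv'⟩ h
  have hf : head t ∘ v.symm = head t' ∘ v'.symm := congrArg Subtype.val h
  obtain rfl : t = t' := eq_of_mult_eq ht ht' fun z => by
    rw [mult_eq_card_comp_perm v.symm, mult_eq_card_comp_perm v'.symm]
    exact congrArg (fun g => #{k | g k = z}) hf
  exact CompatiblePair.ext
    ((eq_relabel_of_isCompatible ht hv).trans (hf ▸ (eq_relabel_of_isCompatible ht hv').symm)) rfl

theorem CompatiblePair.toParking_surjective : Function.Surjective (toParking (n := n)) := by
  rintro ⟨f, hf⟩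
  obtain ⟨t, ht, hsort⟩ := exists_isAdmissible_sorted_head_eq ⟨Tuple.monotone_sort f, hf⟩
  obtain ⟨hval, hanti⟩ := relabel_spec hsort.symm
  refine ⟨⟨relabel f (head t), t, ht, fun q hq => hanti _ _ (head_of_isTarget hq).symm hq.1⟩,
    ?_⟩
  refine Subtype.ext (funext fun i => ?_)
  simp [toParking, ← hval]

end Parking

section Signs

open Topology Filter

def shiOffset (i j : Fin n) : ℝ := if i < j then 1 else 0

/-- For `i ≠ j` the hyperplanes `x i - x j = shiOffset i j` are exactly those of the Shi
arrangement, each met once; `shiSign x` records on which side of each of them `x` lies. -/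
def shiSign (x : Fin n → ℝ) (i j : Fin n) : Prop := x i < x j + shiOffset i j

theorem mem_shiComplementA_iff {x : Fin n → ℝ} :
    x ∈ shiComplementA n ↔ ∀ i j, i ≠ j → x i ≠ x j + shiOffset i j := by
  refine ⟨fun hx i j hij => ?_, fun hx i j hij => ⟨fun h => ?_, fun h => ?_⟩⟩
  · rcases hij.lt_or_gt with hlt | hgt
    · simpa [shiOffset, hlt, sub_eq_iff_eq_add'] using (hx i j hlt).2
    · simpa [shiOffset, hgt.not_gt, sub_eq_zero, eq_comm] using (hx j i hgt).1
  · exact hx j i hij.ne' (by simp [shiOffset, hij.not_gt]; linarith)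
  · exact hx i j hij.ne (by simp [shiOffset, hij]; linarith)

theorem injective_of_mem_shiComplementA (hx : x ∈ shiComplementA n) : Function.Injective x := by
  intro i j h
  by_contra hij
  rcases lt_or_gt_of_ne hij with hlt | hlt
  · exact (hx i j hlt).1 (by rw [h, sub_self])
  · exact (hx j i hlt).1 (by rw [h, sub_self])

theorem shiSign_eventuallyEq {x : Fin n → ℝ} (hx : x ∈ shiComplementA n) :
    ∀ᶠ y in 𝓝 x, shiSign y = shiSign x := by
  have h : ∀ i j, ∀ᶠ y in 𝓝 x, (shiSign y i j ↔ shiSign x i j) := by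
    intro i j
    rcases eq_or_ne i j with rfl | hij
    · simp [shiSign, shiOffset]
    have hc : Continuous fun y : Fin n → ℝ => y j + shiOffset i j := by fun_prop
    rcases (mem_shiComplementA_iff.1 hx i j hij).lt_or_gt with hlt | hgt
    · filter_upwards [(isOpen_lt (continuous_apply i) hc).mem_nhds hlt] with y hy
      exact iff_of_true hy hlt
    · filter_upwards [(isOpen_lt hc (continuous_apply i)).mem_nhds hgt] with y hy
      exact iff_of_false hy.not_gt hgt.not_gt
  filter_upwards [eventually_all.2 fun i => eventually_all.2 (h i)] with y hy
  ext i j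
  exact hy i j

theorem isLocallyConstant_shiSign :
    IsLocallyConstant fun x : shiComplementA n => shiSign x.1 :=
  (IsLocallyConstant.iff_eventually_eq _).2 fun x =>
    (continuous_subtype_val.tendsto x).eventually (shiSign_eventuallyEq x.2)

theorem convex_shiSign_fiber (s : Fin n → Fin n → Prop) :
    Convex ℝ {y | y ∈ shiComplementA n ∧ shiSign y = s} := by
  rintro y ⟨hy, rfl⟩ z ⟨hz, hzs⟩ a b ha hb hab
  have key : ∀ i j, i ≠ j → (shiSign (a • y + b • z) i j ↔ shiSign y i j) ∧
      (a • y + b • z) i ≠ (a • y + b • z) j + shiOffset i j := by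
    intro i j hij
    have hyz : shiSign z i j ↔ shiSign y i j := by rw [hzs]
    simp only [shiSign, Pi.add_apply, Pi.smul_apply, smul_eq_mul] at hyz ⊢
    rcases (mem_shiComplementA_iff.1 hy i j hij).lt_or_gt with h1 | h1
    · have := convex_Ioi (0 : ℝ) (sub_pos.2 h1) (sub_pos.2 (hyz.2 h1)) ha hb hab
      simp only [Set.mem_Ioi, smul_eq_mul] at this
      have h : a * y i + b * z i < a * y j + b * z j + shiOffset i j := by
        linear_combination this + shiOffset i j * hab
      exact ⟨iff_of_true h h1, h.ne⟩
    · have h2 : z j + shiOffset i j < z i :=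
        lt_of_le_of_ne (not_lt.1 (mt hyz.1 h1.not_gt)) (mem_shiComplementA_iff.1 hz i j hij).symm
      have := convex_Ioi (0 : ℝ) (sub_pos.2 h1) (sub_pos.2 h2) ha hb hab
      simp only [Set.mem_Ioi, smul_eq_mul] at this
      have h : a * y j + b * z j + shiOffset i j < a * y i + b * z i := by
        linear_combination this - shiOffset i j * hab
      exact ⟨iff_of_false h.not_gt h1.not_gt, h.ne'⟩
  refine ⟨mem_shiComplementA_iff.2 fun i j hij => (key i j hij).2, ?_⟩
  ext i j
  rcases eq_or_ne i j with rfl | hij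
  · simp [shiSign, shiOffset]
  · exact (key i j hij).1

theorem isPreconnected_shiSign_fiber (x : shiComplementA n) :
    IsPreconnected ((fun y : shiComplementA n => shiSign y.1) ⁻¹' {shiSign x.1}) := by
  rw [← Topology.IsInducing.subtypeVal.isPreconnected_image]
  convert (convex_shiSign_fiber (shiSign x.1)).isPreconnected
  ext y
  simp only [Set.mem_image, Set.mem_preimage, Set.mem_singleton_iff, Set.mem_ofPred_eq]
  exact ⟨fun ⟨y', hy', e⟩ => e ▸ ⟨y'.2, hy'⟩, fun ⟨hy, hy'⟩ => ⟨⟨y, hy⟩, hy', rfl⟩⟩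

end Signs

section Realization

def RealizesUpTo (t : Fin n → Fin n) (y : Fin n → ℝ) (m : ℕ) : Prop :=
  StrictMono y ∧ ∀ p q : Fin n, p ≤ q → (q : ℕ) < m → (y q - y p < 1 ↔ q ≤ t p) ∧ y q - y p ≠ 1

variable {t : Fin n → Fin n}

theorem exists_next_value (ht : IsAdmissible t) {y : Fin n → ℝ} {m : Fin n}
    (hy : RealizesUpTo t y m) :
    ∃ z, (∀ p < m, y p < z) ∧ ∀ p < m, (z - y p < 1 ↔ m ≤ t p) ∧ z - y p ≠ 1 := by
  -- `z` must exceed every earlier value, and exceed `y p + 1` exactly for the `p` whose reach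
  -- stops before `m`; since `t` is monotone these lower bounds lie below the upper bounds.
  obtain ⟨z, hA, hB⟩ := Finset.exists_between'
    (({p | p < m} : Finset _).image y ∪ ({p | p < m ∧ t p < m} : Finset _).image (y · + 1))
    (({p | p < m ∧ m ≤ t p} : Finset _).image (y · + 1)) <| by
    simp only [mem_union, mem_image, mem_filter, mem_univ, true_and]
    rintro _ (⟨p', hp', rfl⟩ | ⟨p', ⟨hp', htp'⟩, rfl⟩) _ ⟨p, ⟨hp, htp⟩, rfl⟩
    · rcases le_or_gt p' p with hle | hlt
      · linarith [hy.1.monotone hle]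
      · linarith [(hy.2 p p' hlt.le hp').1.2 (hp'.le.trans htp)]
    · have : p' < p := lt_of_not_ge fun hle => (htp'.trans_le htp).not_ge (ht.1 hle)
      linarith [hy.1 this]
  simp only [mem_union, mem_image, mem_filter, mem_univ, true_and] at hA hB
  refine ⟨z, fun p hp => hA _ (Or.inl ⟨p, hp, rfl⟩), fun p hp => ?_⟩
  rcases le_or_gt m (t p) with htp | htp
  · have := hB _ ⟨p, ⟨hp, htp⟩, rfl⟩
    exact ⟨iff_of_true (by linarith) htp, by linarith⟩
  · have := hA _ (Or.inr ⟨p, ⟨hp, htp⟩, rfl⟩)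
    exact ⟨iff_of_false (by linarith) htp.not_ge, by linarith⟩

theorem exists_realizesUpTo (ht : IsAdmissible t) (m : ℕ) : ∃ y, RealizesUpTo t y m := by
  induction m with
  | zero => exact ⟨fun k => k, fun _ _ h => by simpa using h, by simp⟩
  | succ m ih =>
    obtain ⟨y, hy⟩ := ih
    by_cases hm : m < n
    swap
    · exact ⟨y, hy.1, fun p q hpq hq => hy.2 p q hpq (by omega)⟩
    set M : Fin n := ⟨m, hm⟩
    obtain ⟨z, hzy, hz⟩ := exists_next_value ht (m := M) hy
    refine ⟨fun k => if k < M then y k else z + (k - m : ℝ), fun k l hkl => ?_,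
      fun p q hpq hq => ?_⟩
    · simp only
      split_ifs with hk hl hl
      · exact hy.1 hkl
      · have : (m : ℝ) ≤ l := by exact_mod_cast not_lt.1 hl
        linarith [hzy k hk]
      · exact absurd (hkl.trans hl) hk
      · have : (k : ℝ) < l := by exact_mod_cast hkl
        linarith
    · rcases (Nat.lt_succ_iff.1 hq).lt_or_eq with hq | hq
      · have hp : p < M := lt_of_le_of_lt hpq hq
        simpa [hp, show q < M from hq] using hy.2 p q hpq hq
      · obtain rfl : q = M := Fin.ext hq
        rcases hpq.lt_or_eq with hp | rfl
        · simpa [hp, M] using hz p hp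
        · simpa using ht.2 M

end Realization

section Canonical

/-- The sign pattern of the points whose coordinates, listed increasingly by `v`, have reach
function `t`. -/
def shiPattern (v : Equiv.Perm (Fin n)) (t : Fin n → Fin n) (i j : Fin n) : Prop :=
  if i < j then v.symm i ≤ t (v.symm j) else v.symm i < v.symm j

variable {x y : Fin n → ℝ} {v : Equiv.Perm (Fin n)} {t T : Fin n → Fin n}
  {s : Fin n → Fin n → Prop} {p p' q : Fin n}

theorem shiSign_eq_shiPattern (hx : StrictMono (x ∘ v)) (hT : ∀ p, p ≤ T p)
    (hinv : ∀ p q, p < q → v q < v p → (x (v q) < x (v p) + 1 ↔ q ≤ T p)) :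
    shiSign x = shiPattern v T := by
  ext i j
  obtain ⟨a, rfl⟩ := v.surjective i
  obtain ⟨b, rfl⟩ := v.surjective j
  simp only [shiSign, shiPattern, shiOffset, Equiv.symm_apply_apply]
  split_ifs with h
  · rcases le_or_gt a b with hab | hba
    · exact iff_of_true (by linarith [show x (v a) ≤ x (v b) from hx.monotone hab])
        (hab.trans (hT b))
    · exact hinv b a hba h
  · simpa using hx.lt_iff_lt

theorem RealizesUpTo.shiSign_eq (hy : RealizesUpTo t y n) (ht : ∀ p, p ≤ t p) :
    y ∘ v.symm ∈ shiComplementA n ∧ shiSign (y ∘ v.symm) = shiPattern v t := by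
  have hmono : StrictMono ((y ∘ v.symm) ∘ v) := by
    convert hy.1
    ext
    simp
  refine ⟨mem_shiComplementA_iff.2 fun i j hij => ?_,
    shiSign_eq_shiPattern hmono ht fun p q hpq _ => ?_⟩
  · obtain ⟨a, rfl⟩ := v.surjective i
    obtain ⟨b, rfl⟩ := v.surjective j
    have hab : a ≠ b := fun h => hij (h ▸ rfl)
    simp only [Function.comp_apply, Equiv.symm_apply_apply, shiOffset]
    split_ifs
    · rcases hab.lt_or_gt with h | h
      · linarith [hy.1 h]
      · have := (hy.2 b a h.le a.isLt).2
        contrapose! this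
        linarith
    · simpa using hy.1.injective.ne hab
  · simpa [sub_lt_iff_lt_add'] using (hy.2 p q hpq.le q.isLt).1

def IsForcedReach (v : Equiv.Perm (Fin n)) (s : Fin n → Fin n → Prop) (p q : Fin n) : Prop :=
  q ≤ p ∨ ∃ p' ≤ p, p' < q ∧ v q < v p' ∧ s (v q) (v p')

open Classical in
/-- The least admissible reach function for which all inversions declared short by `s` are
short. -/
noncomputable def canonReach (v : Equiv.Perm (Fin n)) (s : Fin n → Fin n → Prop) (p : Fin n) :
    Fin n :=
  (univ.filter (IsForcedReach v s p)).max' ⟨p, by simp [IsForcedReach]⟩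

theorem le_canonReach_of_isForcedReach (h : IsForcedReach v s p q) : q ≤ canonReach v s p :=
  le_max' _ _ (by simpa using h)

theorem le_canonReach (p : Fin n) : p ≤ canonReach v s p :=
  le_canonReach_of_isForcedReach (Or.inl le_rfl)

theorem le_canonReach_of (hp' : p' ≤ p) (hp'q : p' < q) (hv : v q < v p') (hs : s (v q) (v p')) :
    q ≤ canonReach v s p :=
  le_canonReach_of_isForcedReach (Or.inr ⟨p', hp', hp'q, hv, hs⟩)

open Classical in
theorem isForcedReach_canonReach (p : Fin n) : IsForcedReach v s p (canonReach v s p) :=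
  (mem_filter.1 (max'_mem (univ.filter (IsForcedReach v s p)) _)).2

theorem isAdmissible_canonReach : IsAdmissible (canonReach v s) := by
  refine ⟨fun p p' hpp' => le_canonReach_of_isForcedReach ?_, le_canonReach⟩
  rcases isForcedReach_canonReach (v := v) (s := s) p with hq | ⟨p'', hp'', h⟩
  exacts [Or.inl (hq.trans hpp'), Or.inr ⟨p'', hp''.trans hpp', h⟩]

theorem canonReach_le (ht : IsAdmissible t)
    (h : ∀ p q, p < q → v q < v p → s (v q) (v p) → q ≤ t p) (p : Fin n) :
    canonReach v s p ≤ t p := by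
  rcases isForcedReach_canonReach (v := v) (s := s) p with hle | ⟨p', hp', hp'q, hv, hs⟩
  · exact hle.trans (ht.2 p)
  · exact (h p' _ hp'q hv hs).trans (ht.1 hp')

theorem isCompatible_canonReach : IsCompatible v (canonReach v s) := by
  intro q hq
  rcases isForcedReach_canonReach (v := v) (s := s) (low (canonReach v s) q) with
    hle | ⟨p', hp', hp'q, hv, hs⟩
  · exact absurd (hq.2.symm.trans_le hle) hq.1.not_ge
  rw [hq.2] at hp'q hv hs
  rcases hp'.eq_or_lt with rfl | hlt
  · exact hv
  · have := (low_le_iff isAdmissible_canonReach).2 (le_canonReach_of le_rfl hp'q hv hs)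
    exact absurd this hlt.not_ge

theorem canonReach_shiPattern (ht : IsAdmissible t) (hv : IsCompatible v t) :
    canonReach v (shiPattern v t) = t := by
  have hs : ∀ p q, v q < v p → (shiPattern v t (v q) (v p) ↔ q ≤ t p) := fun p q h => by
    simp [shiPattern, h]
  -- each jump of `t` ends an arc, along which `v` decreases, so it is forced
  funext p
  refine le_antisymm (canonReach_le ht (fun p q _ h1 h2 => (hs p q h1).1 h2) p) ?_
  rcases (ht.2 p).eq_or_lt with he | hlt
  · exact he ▸ le_canonReach p
  · have hq := isTarget_reach ht hlt
    exact le_canonReach_of (low_reach_le ht p) hq.1 (hv _ hq) ((hs _ _ (hv _ hq)).2 hq.2.ge)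

theorem shiSign_eq_shiPattern_canonReach (hx : x ∈ shiComplementA n) :
    shiSign x = shiPattern (Tuple.sort x) (canonReach (Tuple.sort x) (shiSign x)) := by
  set v := Tuple.sort x
  have hmono : StrictMono (x ∘ v) := (Tuple.monotone_sort x).strictMono_of_injective
    ((injective_of_mem_shiComplementA hx).comp v.injective)
  refine shiSign_eq_shiPattern hmono le_canonReach fun p q hpq hv => ?_
  have hsign : ∀ a b, v a < v b → (shiSign x (v a) (v b) ↔ x (v a) < x (v b) + 1) :=
    fun a b h => by simp [shiSign, shiOffset, h]
  refine ⟨fun h => le_canonReach_of le_rfl hpq hv ((hsign _ _ hv).2 h), fun h => ?_⟩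
  rcases isForcedReach_canonReach (v := v) (s := shiSign x) p with hle | ⟨p', hp', -, hv', hs⟩
  · exact absurd (h.trans hle) hpq.not_ge
  · have h1 : x (v q) ≤ x (v (canonReach v (shiSign x) p)) := hmono.monotone h
    have h2 : x (v p') ≤ x (v p) := hmono.monotone hp'
    linarith [(hsign _ _ hv').1 hs]

end Canonical

theorem CompatiblePair.eq_of_shiPattern_eq {c c' : CompatiblePair n}
    (h : shiPattern c.perm c.reach = shiPattern c'.perm c'.reach) : c = c' := by
  have hv : c.perm = c'.perm := by
    suffices c.perm.symm = c'.perm.symm by simpa using congrArg Equiv.symm this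
    -- the entries with `j < i` of a pattern record the order of `v.symm i` and `v.symm j`
    refine perm_eq_of_lt_iff fun i j => ?_
    rcases lt_trichotomy i j with hij | rfl | hij
    · have := congrFun (congrFun h j) i
      simp only [shiPattern, hij.not_gt, if_false] at this
      rw [lt_iff_le_and_ne, lt_iff_le_and_ne, ← not_lt, ← not_lt, this]
      simp [hij.ne]
    · simp
    · have := congrFun (congrFun h i) j
      simpa [shiPattern, hij.not_gt] using this
  obtain ⟨v, t, ht, hvt⟩ := c
  obtain ⟨v', t', ht', hvt'⟩ := c'
  dsimp only at hv h
  subst hv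
  have := (canonReach_shiPattern ht hvt).symm.trans (h ▸ canonReach_shiPattern ht' hvt')
  subst this
  rfl

def CompatiblePair.toShiSign (c : CompatiblePair n) :
    Set.range fun x : shiComplementA n => shiSign x.1 :=
  ⟨shiPattern c.perm c.reach, by
    obtain ⟨y, hy⟩ := exists_realizesUpTo c.isAdmissible n
    obtain ⟨hmem, hsign⟩ := hy.shiSign_eq (v := c.perm) c.isAdmissible.2
    exact ⟨⟨_, hmem⟩, hsign⟩⟩

theorem CompatiblePair.toShiSign_bijective : Function.Bijective (toShiSign (n := n)) := by
  refine ⟨fun c c' h => eq_of_shiPattern_eq (congrArg Subtype.val h), ?_⟩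
  rintro ⟨_, x, rfl⟩
  exact ⟨⟨_, _, isAdmissible_canonReach, isCompatible_canonReach⟩,
    Subtype.ext (shiSign_eq_shiPattern_canonReach x.2).symm⟩

end Shi

theorem card_regions_shiA_eq_card_parkingFunctions_general (n : ℕ) :
    Nat.card (ConnectedComponents ↥(shiComplementA n)) =
      Nat.card {a : Fin n → ℕ // IsParkingFunction n a} := by
  rw [Nat.card_congr (Shi.isLocallyConstant_shiSign.connectedComponentsEquivRange
      Shi.isPreconnected_shiSign_fiber),
    ← Nat.card_congr (Equiv.ofBijective _ Shi.CompatiblePair.toShiSign_bijective),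
    ← Nat.card_congr Shi.parkingEquiv,
    Nat.card_congr (Equiv.ofBijective _ ⟨Shi.CompatiblePair.toParking_injective,
      Shi.CompatiblePair.toParking_surjective⟩)]

/-- The number of regions of the type `A_{n-1}` Shi arrangement equals the number of
parking functions of length `n`. -/
theorem card_regions_shiA_eq_card_parkingFunctions (n : ℕ) (hn : 1 ≤ n) :
    Nat.card (ConnectedComponents ↥(shiComplementA n)) =
      Nat.card {a : Fin n → ℕ // IsParkingFunction n a} :=
  card_regions_shiA_eq_card_parkingFunctions_general n
end

section
/- For every integer n ≥ 1 and every integer k, (n+1) times the number of parking functions a of length n with d(a) = k equals the number of sequences a ∈ A(n) with d(a) = k. -/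
/-- `d(a)`: the number of distinct values among the entries of the sequence `a`. -/
def numDistinct (n : ℕ) (a : Fin n → ℕ) : ℕ :=
  (Finset.image a Finset.univ).card

/-!
Pollak's circle argument. Write a sequence of `A(n)` as `b + 1` with `b : Fin n → Fin (n + 1)`;
the group `Fin (n + 1)` acts on such `b` by adding a constant, which preserves the number of
distinct values, so it suffices that every orbit contains exactly one parking function and has
`n + 1` elements. Let `W x` be the number of entries of the periodic extension of `b` below `x`,
minus `x`. Then `b - s` is a parking function iff `s` is a minimum of `W` on the window
`[s, s + n]`, and since `W` drops by exactly `1` per period, exactly one `s ∈ [0, n]` has this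
property: the first minimum of `W` on `[0, n]`.
-/

open Finset

section CrossSection

variable {G X : Type*} [AddGroup G] [AddAction G X]

theorem card_eq_card_mul_card_of_existsUnique_vadd_mem (S : Set X)
    (hS : ∀ x : X, ∃! g : G, g +ᵥ x ∈ S) (p : X → Prop)
    (hp : ∀ (g : G) x, p (g +ᵥ x) ↔ p x) :
    Nat.card {x // p x} = Nat.card G * Nat.card {x // x ∈ S ∧ p x} := by
  choose g hgS hg_unique using hS
  have hg_vadd (h : G) (s : X) (hs : s ∈ S) : g (h +ᵥ s) = -h :=
    (hg_unique _ _ (by simpa using hs)).symm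
  let e : {x // p x} ≃ {x // x ∈ S ∧ p x} × G :=
    { toFun x := (⟨g x.1 +ᵥ x.1, hgS x.1, (hp _ _).2 x.2⟩, -g x.1)
      invFun y := ⟨y.2 +ᵥ y.1.1, (hp _ _).2 y.1.2.2⟩
      left_inv x := Subtype.ext (neg_vadd_vadd _ _)
      right_inv := fun ⟨⟨s, hs, _⟩, h⟩ => by
        ext <;> simp [hg_vadd h s hs] }
  rw [Nat.card_congr e, Nat.card_prod, mul_comm]

end CrossSection

theorem existsUnique_forall_le_add_of_add_eq_sub_one {m : ℕ} [NeZero m] (W : ℕ → ℤ)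
    (hW : ∀ x < m, W (x + m) = W x - 1) : ∃! s : Fin m, ∀ j < m, W s ≤ W (s + j) := by
  have hunique {a b : ℕ} (hab : a < b) (hb : b < m) (ha_min : ∀ j < m, W a ≤ W (a + j))
      (hb_min : ∀ j < m, W b ≤ W (b + j)) : False := by
    have h₁ := ha_min (b - a) (by omega)
    have h₂ := hb_min (a + m - b) (by omega)
    rw [Nat.add_sub_cancel' hab.le] at h₁
    rw [show b + (a + m - b) = a + m by omega, hW a (by omega)] at h₂
    omega
  have hmin : ∃ s < m, ∀ y < m, W s ≤ W y := by
    obtain ⟨x, hx, hx_min⟩ := (range m).exists_min_image W (nonempty_range_iff.2 (NeZero.ne m))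
    exact ⟨x, mem_range.1 hx, fun y hy => hx_min y (mem_range.2 hy)⟩
  obtain ⟨hs, hs_min⟩ := Nat.find_spec hmin
  -- the first minimum beats everything to its left strictly, which survives the drift `-1`
  have hs_first (y : ℕ) (hy : y < Nat.find hmin) : W (Nat.find hmin) < W y :=
    lt_of_not_ge fun h => Nat.find_min hmin hy ⟨hy.trans hs, fun z hz => h.trans (hs_min z hz)⟩
  have hs_window : ∀ j < m, W (Nat.find hmin) ≤ W (Nat.find hmin + j) := by
    intro j hj
    by_cases hjm : Nat.find hmin + j < m
    · exact hs_min _ hjm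
    · have h := hW (Nat.find hmin + j - m) (by omega)
      rw [Nat.sub_add_cancel (by omega)] at h
      have := hs_first (Nat.find hmin + j - m) (by omega)
      omega
  refine ⟨⟨Nat.find hmin, hs⟩, hs_window, fun t ht => Fin.ext ?_⟩
  rcases lt_trichotomy (t : ℕ) (Nat.find hmin) with h | h | h
  · exact (hunique h hs ht hs_window).elim
  · exact h
  · exact (hunique h t.isLt hs_window ht).elim

section Parking

variable {n m : ℕ}

def oneBased (b : Fin n → Fin m) : Fin n → ℕ := fun i => b i + 1

theorem oneBased_injective : Function.Injective (oneBased : (Fin n → Fin m) → Fin n → ℕ) :=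
  fun b c h => funext fun i => Fin.ext (by simpa [oneBased] using congrFun h i)

theorem oneBased_mem_Icc (b : Fin n → Fin m) (i : Fin n) : oneBased b i ∈ Icc 1 m := by
  simp [oneBased, Nat.succ_le_of_lt (b i).isLt]

theorem range_oneBased :
    Set.range (oneBased : (Fin n → Fin m) → Fin n → ℕ) = {a | ∀ i, a i ∈ Icc 1 m} := by
  refine Set.Subset.antisymm (Set.range_subset_iff.2 oneBased_mem_Icc) fun a ha => ?_
  refine ⟨fun i => ⟨a i - 1, by have := mem_Icc.1 (ha i); omega⟩, funext fun i => ?_⟩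
  have := mem_Icc.1 (ha i)
  simp only [oneBased]
  omega

theorem card_subtype_oneBased (q : (Fin n → ℕ) → Prop)
    (hq : ∀ a, q a → ∀ i, a i ∈ Icc 1 m) :
    Nat.card {b : Fin n → Fin m // q (oneBased b)} = Nat.card {a // q a} := by
  have := Set.ncard_preimage_of_injective_subset_range (s := {a | q a}) oneBased_injective
    (by rw [range_oneBased]; exact hq)
  rwa [← Nat.card_coe_set_eq, ← Nat.card_coe_set_eq] at this

theorem numDistinct_oneBased (b : Fin n → Fin m) :
    numDistinct n (oneBased b) = #(univ.image b) := by
  have hinj : Function.Injective fun x : Fin m => (x : ℕ) + 1 :=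
    fun x y h => Fin.ext (by simpa using h)
  rw [← card_image_of_injective _ hinj, image_image]
  rfl

theorem numDistinct_oneBased_vadd (t : Fin m) (b : Fin n → Fin m) :
    numDistinct n (oneBased (t +ᵥ b)) = numDistinct n (oneBased b) := by
  rw [numDistinct_oneBased, numDistinct_oneBased,
    ← card_image_of_injective (univ.image b) (add_right_injective t), image_image]
  rfl

theorem isParkingFunction_iff_card (a : Fin n → ℕ) :
    IsParkingFunction n a ↔ (∀ i, 1 ≤ a i) ∧ ∀ j ≤ n, j ≤ #{i | a i ≤ j} := by
  have card_comp (g : Equiv.Perm (Fin n)) (j : ℕ) : #{i | a (g i) ≤ j} = #{i | a i ≤ j} :=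
    card_equiv g (by simp)
  constructor
  · rintro ⟨hmem, g, -, hle⟩
    refine ⟨fun i => (mem_Icc.1 (hmem i)).1, fun j hj => ?_⟩
    calc j = #{i : Fin n | (i : ℕ) < j} := by simp [Fin.card_filter_val_lt, hj]
      _ ≤ #{i | a (g i) ≤ j} := card_le_card fun i hi => by
          simp only [mem_filter, mem_univ, true_and] at hi ⊢
          linarith [hle i]
      _ = #{i | a i ≤ j} := card_comp g j
  · rintro ⟨hpos, hcount⟩
    set g := Tuple.sort a
    have hmono : Monotone fun i => a (g i) := Tuple.monotone_sort a
    have hsorted (i : Fin n) : a (g i) ≤ i + 1 := by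
      by_contra! hi
      have hfew : #{i' | a (g i') ≤ i + 1} ≤ i :=
        calc #{i' | a (g i') ≤ i + 1} ≤ #(Iio i) := card_le_card fun i' hi' => by
              simp only [mem_filter, mem_univ, true_and, mem_Iio] at hi' ⊢
              by_contra! hii'
              exact (hmono hii').not_gt (show a (g i') < a (g i) by omega)
          _ = i := Fin.card_Iio i
      have := hcount (i + 1) i.isLt
      rw [← card_comp g] at this
      omega
    refine ⟨fun i => mem_Icc.2 ⟨hpos i, ?_⟩, g, hmono, hsorted⟩
    simpa using (hsorted (g.symm i)).trans (g.symm i).isLt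

theorem isParkingFunction_oneBased_iff (b : Fin n → Fin m) :
    IsParkingFunction n (oneBased b) ↔ ∀ j ≤ n, j ≤ #{i | (b i : ℕ) < j} := by
  simp [isParkingFunction_iff_card, oneBased]

end Parking

section CyclicWalk

variable {n : ℕ} (c : Fin n → Fin (n + 1))

/-- The number of entries of the periodic extension `c + (n + 1) ℕ` below `x`, minus `x`; only the
first two periods are counted, which is exact for `x ≤ 2 (n + 1)`. -/
def cyclicWalk (x : ℕ) : ℤ :=
  #{i | (c i : ℕ) < x} + #{i | (c i : ℕ) + (n + 1) < x} - x

theorem cyclicWalk_add_period {x : ℕ} (hx : x < n + 1) :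
    cyclicWalk c (x + (n + 1)) = cyclicWalk c x - 1 := by
  have h₁ : #{i | (c i : ℕ) < x + (n + 1)} = n := by
    rw [filter_true_of_mem fun i _ => by have := (c i).isLt; omega, card_univ, Fintype.card_fin]
  have h₂ : #{i | (c i : ℕ) + (n + 1) < x} = 0 := by
    rw [card_eq_zero, filter_eq_empty_iff]
    intro i _
    omega
  simp only [cyclicWalk, h₁, h₂, add_lt_add_iff_right]
  push_cast
  ring

theorem card_sub_lt_eq_cyclicWalk_sub (s : Fin (n + 1)) {j : ℕ} (hj : j ≤ n) :
    (#{i | ((c i - s : Fin (n + 1)) : ℕ) < j} : ℤ) =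
      cyclicWalk c (s + j) - cyclicWalk c s + j := by
  -- `c i - s < j` iff one of the lifts `c i`, `c i + (n + 1)` lies in `[s, s + j)`
  have hterm (i : Fin n) :
      ((if ((c i - s : Fin (n + 1)) : ℕ) < j then 1 else 0) +
          ((if (c i : ℕ) < s then 1 else 0) + (if (c i : ℕ) + (n + 1) < s then 1 else 0))) =
        (if (c i : ℕ) < s + j then 1 else 0) +
          (if (c i : ℕ) + (n + 1) < s + j then 1 else 0) := by
    have := (c i).isLt
    have := s.isLt
    rcases le_or_gt s (c i) with h | h
    · rw [Fin.sub_val_of_le h]; split_ifs <;> omega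
    · rw [Fin.coe_sub_iff_lt.2 h]; split_ifs <;> omega
  have hsum := sum_congr rfl fun i (_ : i ∈ univ) => hterm i
  simp only [sum_add_distrib, ← card_filter] at hsum
  simp only [cyclicWalk]
  push_cast
  omega

theorem isParkingFunction_oneBased_sub_iff (s : Fin (n + 1)) :
    IsParkingFunction n (oneBased fun i => c i - s) ↔
      ∀ j < n + 1, cyclicWalk c s ≤ cyclicWalk c (s + j) := by
  simp only [isParkingFunction_oneBased_iff, Nat.lt_succ_iff]
  refine forall₂_congr fun j hj => ?_
  have := card_sub_lt_eq_cyclicWalk_sub c s hj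
  omega

theorem existsUnique_isParkingFunction_oneBased_vadd :
    ∃! t : Fin (n + 1), IsParkingFunction n (oneBased (t +ᵥ c)) := by
  have h := existsUnique_forall_le_add_of_add_eq_sub_one (cyclicWalk c)
    fun _ hx => cyclicWalk_add_period c hx
  simp only [← isParkingFunction_oneBased_sub_iff] at h
  refine ((Equiv.neg _).existsUnique_congr fun s => ?_).1 h
  rw [Equiv.neg_apply,
    show -s +ᵥ c = fun i => c i - s from funext fun i => neg_add_eq_sub s (c i)]

end CyclicWalk

theorem parkingFunctions_distinct_mul_general (n : ℕ) (k : ℤ) :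
    (n + 1) * Nat.card {a : Fin n → ℕ //
        IsParkingFunction n a ∧ (numDistinct n a : ℤ) = k} =
      Nat.card {a : Fin n → ℕ //
        (∀ i, a i ∈ Finset.Icc 1 (n + 1)) ∧ (numDistinct n a : ℤ) = k} := by
  calc (n + 1) * Nat.card {a : Fin n → ℕ //
          IsParkingFunction n a ∧ (numDistinct n a : ℤ) = k}
      = Nat.card (Fin (n + 1)) * Nat.card {b : Fin n → Fin (n + 1) //
          IsParkingFunction n (oneBased b) ∧ (numDistinct n (oneBased b) : ℤ) = k} := by
        rw [Nat.card_fin]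
        congr 1
        exact (card_subtype_oneBased _ fun a ha i => Icc_subset_Icc_right n.le_succ (ha.1.1 i)).symm
    _ = Nat.card {b : Fin n → Fin (n + 1) // (numDistinct n (oneBased b) : ℤ) = k} :=
        (card_eq_card_mul_card_of_existsUnique_vadd_mem {b | IsParkingFunction n (oneBased b)}
          existsUnique_isParkingFunction_oneBased_vadd _ fun t b => by
            rw [numDistinct_oneBased_vadd]).symm
    _ = Nat.card {a : Fin n → ℕ //
          (∀ i, a i ∈ Finset.Icc 1 (n + 1)) ∧ (numDistinct n a : ℤ) = k} := by
        rw [← card_subtype_oneBased _ fun a ha => ha.1]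
        simp only [oneBased_mem_Icc, implies_true, true_and]

/-- For every integer `k`, `(n+1)` times the number of parking functions of length `n`
with exactly `k` distinct entries equals the number of sequences in
`A(n) = {(a₁,…,aₙ) : aᵢ ∈ {1,…,n+1}}` with exactly `k` distinct entries. -/
theorem parkingFunctions_distinct_mul (n : ℕ) (hn : 1 ≤ n) (k : ℤ) :
    (n + 1) * Nat.card {a : Fin n → ℕ //
        IsParkingFunction n a ∧ (numDistinct n a : ℤ) = k} =
      Nat.card {a : Fin n → ℕ //
        (∀ i, a i ∈ Finset.Icc 1 (n + 1)) ∧ (numDistinct n a : ℤ) = k} :=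
  parkingFunctions_distinct_mul_general n k
end

section
/- For every integer n ≥ 1 and every integer m ≥ 0, the number of regions of the type A_{n-1} Shi arrangement S^A_n with exactly m ceilings equals the number of regions of S^A_n with exactly m floors. -/
/-- The regions of the type `A_{n-1}` Shi arrangement. -/
def regionsA (n : ℕ) : Set (Set (Fin n → ℝ)) :=
  {R | ∃ x ∈ shiComplementA n, R = connectedComponentIn (shiComplementA n) x}

/-- `H` is a wall of the region `R`. -/
def IsWall {n : ℕ} (H R : Set (Fin n → ℝ)) : Prop :=
  ∃ p ∈ H, ∃ U ∈ nhds p, H ∩ U ⊆ closure R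

/-- The hyperplane `{x | f x = 1}` is a ceiling of `R`: a wall of `R` with `R` on
the same side as the origin. -/
def IsCeilingH {n : ℕ} (f : (Fin n → ℝ) → ℝ) (R : Set (Fin n → ℝ)) : Prop :=
  IsWall {x | f x = 1} R ∧ ∀ x ∈ R, f x < 1

/-- The hyperplane `{x | f x = 1}` is a floor of `R`: a wall of `R` with `R` on
the opposite side from the origin. -/
def IsFloorH {n : ℕ} (f : (Fin n → ℝ) → ℝ) (R : Set (Fin n → ℝ)) : Prop :=
  IsWall {x | f x = 1} R ∧ ∀ x ∈ R, 1 < f x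

/-- `c(R)`: the number of ceilings of a region of the type `A_{n-1}` Shi arrangement. -/
noncomputable def numCeilingsA (n : ℕ) (R : Set (Fin n → ℝ)) : ℕ :=
  Nat.card {p : Fin n × Fin n // p.1 < p.2 ∧ IsCeilingH (fun x => x p.1 - x p.2) R}

/-- `f(R)`: the number of floors of a region of the type `A_{n-1}` Shi arrangement. -/
noncomputable def numFloorsA (n : ℕ) (R : Set (Fin n → ℝ)) : ℕ :=
  Nat.card {p : Fin n × Fin n // p.1 < p.2 ∧ IsFloorH (fun x => x p.1 - x p.2) R}

/-!
A region of the Shi arrangement is determined by the order of the coordinates together with its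
far pairs, the pairs `i < j` with `x i - x j > 1`. Reading a pair as the interval between its two
values, the far pairs form an up-set (for inclusion of intervals) among the inversions of the
order, and every such up-set occurs. The floors are the minimal far pairs and the ceilings the
maximal non-far inversions. An up-set is determined both by its minimal elements and by the
maximal elements of its complement, and every antichain arises either way; so the region with the
same order whose far pairs are generated by the ceilings of `R` has as floors exactly the ceilings
of `R`, and this is a bijection.
-/

open Set Filter Topology

namespace ShiArrangement

lemma card_eq_of_forall_existsUnique {α β : Type*} {r : α → β → Prop} (h₁ : ∀ a, ∃! b, r a b)
    (h₂ : ∀ b, ∃! a, r a b) : Nat.card α = Nat.card β := by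
  obtain ⟨f, hf⟩ := forall_existsUnique_iff.1 h₁
  exact Nat.card_eq_of_bijective f
    ((Function.bijective_iff_existsUnique f).2 fun b => (existsUnique_congr fun _ => hf).1 (h₂ b))

/-- The values are chosen one at a time, each in an interval that is nonempty because `K` is
monotone. -/
theorem exists_semiorder_repr {K : ℕ → ℕ} (hK : Monotone K) (N : ℕ) :
    ∃ v : ℕ → ℝ, ∀ a b, a < b → b ≤ N →
      v a < v b ∧ (a < K b → 1 < v b - v a) ∧ (K b ≤ a → v b - v a < 1) := by
  induction N with
  | zero => exact ⟨0, fun a b hab hb => by omega⟩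
  | succ N ih =>
    obtain ⟨v, hv⟩ := ih
    have hle : ∀ a b, a ≤ b → b ≤ N → v a ≤ v b := fun a b hab hb =>
      hab.lt_or_eq.elim (fun h => (hv a b h hb).1.le) (fun h => h ▸ le_rfl)
    set k := K (N + 1)
    obtain ⟨c, hlo, hhi⟩ := Order.exists_between_finsets
      ((Finset.range (N + 1)).image v ∪ (Finset.range k).image (v · + 1))
      ((Finset.Ico k (N + 1)).image (v · + 1)) (by
        simp only [Finset.mem_union, Finset.mem_image, Finset.mem_range, Finset.mem_Ico]
        rintro _ (⟨a, ha, rfl⟩ | ⟨a, ha, rfl⟩) _ ⟨b, ⟨hkb, hb⟩, rfl⟩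
        · rcases le_or_gt a b with hab | hba
          · linarith [hle a b hab (by omega)]
          · linarith [(hv b a hba (by omega)).2.2 ((hK (by omega : a ≤ N + 1)).trans hkb)]
        · linarith [(hv a b (by omega) (by omega)).1])
    simp only [Finset.mem_union, Finset.mem_image, Finset.mem_range, Finset.mem_Ico] at hlo hhi
    refine ⟨fun b => if b ≤ N then v b else c, fun a b hab hb => ?_⟩
    rcases (show b ≤ N ∨ b = N + 1 by omega) with hb | rfl
    · simpa only [if_pos hb, if_pos (hab.le.trans hb)] using hv a b hab hb
    · simp only [if_pos (show a ≤ N by omega), if_neg (show ¬ N + 1 ≤ N by omega)]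
      exact ⟨hlo _ (Or.inl ⟨a, by omega, rfl⟩), fun h => by linarith [hlo _ (Or.inr ⟨a, h, rfl⟩)],
        fun h => by linarith [hhi _ ⟨a, ⟨h, hab⟩, rfl⟩]⟩

/-! ### Sides and cells -/

/-- The open interval among `(-∞, 0)`, `(0, 1)`, `(1, ∞)` containing `a`, when `a ≠ 0, 1`. -/
def shiSide (a : ℝ) : Set ℝ :=
  if a < 0 then Iio 0 else if a < 1 then Ioo 0 1 else Ioi 1

lemma isOpen_shiSide (a : ℝ) : IsOpen (shiSide a) := by
  unfold shiSide; split_ifs <;> first | exact isOpen_Iio | exact isOpen_Ioo | exact isOpen_Ioi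

lemma convex_shiSide (a : ℝ) : Convex ℝ (shiSide a) := by
  unfold shiSide
  split_ifs <;> first | exact convex_Iio _ | exact convex_Ioo _ _ | exact convex_Ioi _

lemma zero_notMem_shiSide (a : ℝ) : (0 : ℝ) ∉ shiSide a := by
  unfold shiSide; split_ifs <;> simp

lemma one_notMem_shiSide (a : ℝ) : (1 : ℝ) ∉ shiSide a := by
  unfold shiSide; split_ifs <;> simp

lemma shiSide_eq_of_mem {a b : ℝ} (h : b ∈ shiSide a) : shiSide b = shiSide a := by
  unfold shiSide at *
  split_ifs at * <;> simp only [mem_Iio, mem_Ioo, mem_Ioi] at h <;> first | rfl | linarith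

lemma mem_shiSide_iff {a b : ℝ} (ha₁ : a ≠ 1) (hb₀ : b ≠ 0) (hb₁ : b ≠ 1) :
    b ∈ shiSide a ↔ ((a < 0 ↔ b < 0) ∧ (1 < a ↔ 1 < b)) := by
  have := lt_or_gt_of_ne hb₀
  have := lt_or_gt_of_ne hb₁
  have := lt_or_gt_of_ne ha₁
  unfold shiSide; split_ifs <;> simp only [mem_Iio, mem_Ioo, mem_Ioi] <;> grind

lemma mem_shiSide_self {a : ℝ} (h₀ : a ≠ 0) (h₁ : a ≠ 1) : a ∈ shiSide a :=
  (mem_shiSide_iff h₁ h₀ h₁).2 ⟨Iff.rfl, Iff.rfl⟩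

variable {n : ℕ}

lemma injective_of_mem_shiComplementA {x : Fin n → ℝ} (hx : x ∈ shiComplementA n) :
    Function.Injective x := by
  intro i j hij
  by_contra hne
  rcases lt_or_gt_of_ne hne with h | h
  · exact (hx i j h).1 (by rw [hij, sub_self])
  · exact (hx j i h).1 (by rw [hij, sub_self])

def cell (x : Fin n → ℝ) : Set (Fin n → ℝ) :=
  {y | ∀ i j, i < j → y i - y j ∈ shiSide (x i - x j)}

def cellExcept (x : Fin n → ℝ) (i j : Fin n) : Set (Fin n → ℝ) :=
  {y | ∀ k l, k < l → (k, l) ≠ (i, j) → y k - y l ∈ shiSide (x k - x l)}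

lemma convex_sub_mem_shiSide (k l : Fin n) (a : ℝ) :
    Convex ℝ {y : Fin n → ℝ | y k - y l ∈ shiSide a} := by
  intro y hy z hz s t hs ht hst
  show (s • y + t • z) k - (s • y + t • z) l ∈ shiSide a
  convert convex_shiSide a hy hz hs ht hst using 1
  simp only [Pi.add_apply, Pi.smul_apply, smul_eq_mul]
  ring

lemma convex_cell (x : Fin n → ℝ) : Convex ℝ (cell x) := by
  simp only [cell, ofPred_forall]
  exact convex_iInter fun i => convex_iInter fun j => convex_iInter fun _ =>
    convex_sub_mem_shiSide i j _

lemma convex_cellExcept (x : Fin n → ℝ) (i j : Fin n) : Convex ℝ (cellExcept x i j) := by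
  simp only [cellExcept, ofPred_forall]
  exact convex_iInter fun k => convex_iInter fun l => convex_iInter fun _ =>
    convex_iInter fun _ => convex_sub_mem_shiSide k l _

lemma isOpen_cellExcept (x : Fin n → ℝ) (i j : Fin n) : IsOpen (cellExcept x i j) := by
  simp only [cellExcept, ofPred_forall]
  exact isOpen_iInter_of_finite fun k => isOpen_iInter_of_finite fun l =>
    isOpen_iInter_of_finite fun _ => isOpen_iInter_of_finite fun _ =>
      (isOpen_shiSide _).preimage (by fun_prop)

lemma cell_subset_shiComplementA (x : Fin n → ℝ) : cell x ⊆ shiComplementA n :=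
  fun _ hy i j hij => ⟨fun h => zero_notMem_shiSide _ (h ▸ hy i j hij),
    fun h => one_notMem_shiSide _ (h ▸ hy i j hij)⟩

lemma mem_cell_self {x : Fin n → ℝ} (hx : x ∈ shiComplementA n) : x ∈ cell x :=
  fun i j hij => mem_shiSide_self (hx i j hij).1 (hx i j hij).2

lemma cell_eq_of_mem {x y : Fin n → ℝ} (hy : y ∈ cell x) : cell y = cell x := by
  ext z
  exact forall₃_congr fun i j hij => by rw [shiSide_eq_of_mem (hy i j hij)]

lemma subset_shiSide_of_isPreconnected {s : Set ℝ} (hs : IsPreconnected s) {a : ℝ} (ha : a ∈ s)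
    (h₀ : (0 : ℝ) ∉ s) (h₁ : (1 : ℝ) ∉ s) : s ⊆ shiSide a := by
  intro b hb
  have hab := hs.ordConnected.uIcc_subset ha hb
  have h₀' : (0 : ℝ) ∉ uIcc a b := fun h => h₀ (hab h)
  have h₁' : (1 : ℝ) ∉ uIcc a b := fun h => h₁ (hab h)
  rw [mem_uIcc] at h₀' h₁'
  rw [mem_shiSide_iff (ne_of_mem_of_not_mem ha h₁) (ne_of_mem_of_not_mem hb h₀)
    (ne_of_mem_of_not_mem hb h₁)]
  grind

lemma connectedComponentIn_eq_cell {x : Fin n → ℝ} (hx : x ∈ shiComplementA n) :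
    connectedComponentIn (shiComplementA n) x = cell x := by
  refine subset_antisymm (fun y hy i j hij => ?_) ((convex_cell x).isPreconnected
    |>.subset_connectedComponentIn (mem_cell_self hx) (cell_subset_shiComplementA x))
  have hC := connectedComponentIn_subset (shiComplementA n) x
  have hgap : Continuous fun z : Fin n → ℝ => z i - z j := by fun_prop
  refine subset_shiSide_of_isPreconnected
    (isPreconnected_connectedComponentIn.image _ hgap.continuousOn)
    (mem_image_of_mem _ (mem_connectedComponentIn hx)) ?_ ?_ (mem_image_of_mem _ hy)
  · rintro ⟨z, hz, h⟩; exact (hC hz i j hij).1 h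
  · rintro ⟨z, hz, h⟩; exact (hC hz i j hij).2 h

lemma mem_regionsA_iff {R : Set (Fin n → ℝ)} :
    R ∈ regionsA n ↔ ∃ x ∈ shiComplementA n, R = cell x := by
  simp only [regionsA, mem_ofPred_eq]
  exact exists_congr fun x => and_congr_right fun hx => by rw [connectedComponentIn_eq_cell hx]

/-! ### Far pairs -/

def SameOrder (x y : Fin n → ℝ) : Prop := ∀ i j, x i < x j ↔ y i < y j

/-- Reading a pair `p` as the interval `[x p.2, x p.1]`, the interval of `p` lies in that of `q`. -/
def Nested (x : Fin n → ℝ) (p q : Fin n × Fin n) : Prop := x p.1 ≤ x q.1 ∧ x q.2 ≤ x p.2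

def Far (x : Fin n → ℝ) (p : Fin n × Fin n) : Prop := p.1 < p.2 ∧ 1 < x p.1 - x p.2

def Close (x : Fin n → ℝ) (p : Fin n × Fin n) : Prop := p.1 < p.2 ∧ x p.2 < x p.1 ∧ ¬ Far x p

def MaxClose (x : Fin n → ℝ) (p : Fin n × Fin n) : Prop :=
  Close x p ∧ ∀ q, Close x q → Nested x p q → q = p

def MinFar (x : Fin n → ℝ) (p : Fin n × Fin n) : Prop :=
  Far x p ∧ ∀ q, Far x q → Nested x q p → q = p

lemma SameOrder.symm {x y : Fin n → ℝ} (h : SameOrder x y) : SameOrder y x :=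
  fun i j => (h i j).symm

lemma SameOrder.trans {x y z : Fin n → ℝ} (h : SameOrder x y) (h' : SameOrder y z) :
    SameOrder x z :=
  fun i j => (h i j).trans (h' i j)

lemma SameOrder.le_iff {x y : Fin n → ℝ} (h : SameOrder x y) (i j : Fin n) :
    x i ≤ x j ↔ y i ≤ y j := by
  simpa only [not_lt] using (h j i).not

lemma SameOrder.nested_iff {x y : Fin n → ℝ} (h : SameOrder x y) {p q : Fin n × Fin n} :
    Nested x p q ↔ Nested y p q := by
  simp only [Nested, h.le_iff]

lemma Nested.refl (x : Fin n → ℝ) (p : Fin n × Fin n) : Nested x p p := ⟨le_rfl, le_rfl⟩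

lemma Nested.trans {x : Fin n → ℝ} {p q r : Fin n × Fin n} (h : Nested x p q)
    (h' : Nested x q r) : Nested x p r :=
  ⟨h.1.trans h'.1, h'.2.trans h.2⟩

lemma Nested.antisymm {x : Fin n → ℝ} (hx : Function.Injective x) {p q : Fin n × Fin n}
    (h : Nested x p q) (h' : Nested x q p) : p = q :=
  Prod.ext (hx (h.1.antisymm h'.1)) (hx (h'.2.antisymm h.2))

lemma Nested.sub_le {x : Fin n → ℝ} {p q : Fin n × Fin n} (h : Nested x p q) :
    x p.1 - x p.2 ≤ x q.1 - x q.2 := by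
  linarith [h.1, h.2]

lemma Far.lt {x : Fin n → ℝ} {p : Fin n × Fin n} (h : Far x p) : x p.2 < x p.1 := by
  linarith [h.2]

lemma Close.sub_lt_one {x : Fin n → ℝ} (hx : x ∈ shiComplementA n) {p : Fin n × Fin n}
    (h : Close x p) : x p.1 - x p.2 < 1 :=
  (not_lt.1 fun h' => h.2.2 ⟨h.1, h'⟩).lt_of_ne (hx p.1 p.2 h.1).2

lemma MaxClose.eq_of_nested {x : Fin n → ℝ} {p q : Fin n × Fin n} (hp : MaxClose x p)
    (hq : MaxClose x q) (h : Nested x q p) : q = p :=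
  (hq.2 p hp.1 h).symm

lemma MinFar.eq_of_nested {x : Fin n → ℝ} {p q : Fin n × Fin n} (hp : MinFar x p)
    (hq : MinFar x q) (h : Nested x q p) : q = p :=
  hp.2 q hq.1 h

lemma close_congr {x y : Fin n → ℝ} (ho : SameOrder x y) (hf : ∀ p, Far x p ↔ Far y p)
    {p : Fin n × Fin n} : Close x p ↔ Close y p := by
  simp only [Close, ho _ _, hf]

lemma maxClose_congr {x y : Fin n → ℝ} (ho : SameOrder x y) (hf : ∀ p, Far x p ↔ Far y p)
    {p : Fin n × Fin n} : MaxClose x p ↔ MaxClose y p := by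
  simp only [MaxClose, close_congr ho hf, ho.nested_iff]

lemma minFar_congr {x y : Fin n → ℝ} (ho : SameOrder x y) (hf : ∀ p, Far x p ↔ Far y p)
    {p : Fin n × Fin n} : MinFar x p ↔ MinFar y p := by
  simp only [MinFar, hf, ho.nested_iff]

lemma sub_mem_shiSide_iff {x y : Fin n → ℝ} (hx : x ∈ shiComplementA n)
    (hy : y ∈ shiComplementA n) {i j : Fin n} (hij : i < j) :
    y i - y j ∈ shiSide (x i - x j) ↔
      ((x i < x j ↔ y i < y j) ∧ (Far x (i, j) ↔ Far y (i, j))) := by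
  rw [mem_shiSide_iff (hx i j hij).2 (hy i j hij).1 (hy i j hij).2]
  simp only [Far, sub_neg, hij, true_and]

lemma mem_cell_iff {x y : Fin n → ℝ} (hx : x ∈ shiComplementA n) (hy : y ∈ shiComplementA n) :
    y ∈ cell x ↔ SameOrder x y ∧ ∀ p, Far x p ↔ Far y p := by
  refine ⟨fun h => ⟨fun i j => ?_, fun p => ?_⟩,
    fun h i j hij => (sub_mem_shiSide_iff hx hy hij).2 ⟨h.1 i j, h.2 _⟩⟩
  · rcases lt_trichotomy i j with hij | rfl | hji
    · exact ((sub_mem_shiSide_iff hx hy hij).1 (h i j hij)).1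
    · simp
    · have hx' := (injective_of_mem_shiComplementA hx).ne hji.ne
      have hy' := (injective_of_mem_shiComplementA hy).ne hji.ne
      rw [← not_le, hx'.le_iff_lt, ((sub_mem_shiSide_iff hx hy hji).1 (h j i hji)).1,
        ← hy'.le_iff_lt, not_le]
  · by_cases hp : p.1 < p.2
    · exact ((sub_mem_shiSide_iff hx hy hp).1 (h _ _ hp)).2
    · simp only [Far, hp, false_and]

lemma exists_maxClose {x : Fin n → ℝ} (hx : Function.Injective x) {p : Fin n × Fin n}
    (hp : Close x p) : ∃ q, MaxClose x q ∧ Nested x p q := by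
  let : Preorder (Fin n × Fin n) := Preorder.lift fun p => (x p.1, OrderDual.toDual (x p.2))
  obtain ⟨q, hpq, hq⟩ := Finite.exists_le_maximal hp
  exact ⟨q, ⟨hq.1, fun r hr hqr => Nested.antisymm hx (hq.2 hr hqr) hqr⟩, hpq⟩

lemma exists_minFar {x : Fin n → ℝ} (hx : Function.Injective x) {p : Fin n × Fin n}
    (hp : Far x p) : ∃ q, MinFar x q ∧ Nested x q p := by
  let : Preorder (Fin n × Fin n) := Preorder.lift fun p => (x p.1, OrderDual.toDual (x p.2))
  obtain ⟨q, hqp, hq⟩ := Finite.exists_le_minimal hp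
  exact ⟨q, ⟨hq.1, fun r hr hrq => Nested.antisymm hx hrq (hq.2 hr hrq)⟩, hqp⟩

lemma far_iff_exists_minFar {x : Fin n → ℝ} (hx : Function.Injective x) {p : Fin n × Fin n} :
    Far x p ↔ p.1 < p.2 ∧ ∃ q, MinFar x q ∧ Nested x q p :=
  ⟨fun h => ⟨h.1, exists_minFar hx h⟩, fun ⟨hp, _, hq, hqp⟩ => ⟨hp, hq.1.2.trans_le hqp.sub_le⟩⟩

lemma far_iff_forall_maxClose {x : Fin n → ℝ} (hx : x ∈ shiComplementA n) {p : Fin n × Fin n} :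
    Far x p ↔ p.1 < p.2 ∧ x p.2 < x p.1 ∧ ∀ q, MaxClose x q → ¬ Nested x p q := by
  refine ⟨fun h => ⟨h.1, h.lt, fun q hq hpq => ?_⟩, fun ⟨hp, hlt, h⟩ => ?_⟩
  · linarith [h.2, hpq.sub_le, hq.1.sub_lt_one hx]
  · by_contra hf
    obtain ⟨q, hq, hpq⟩ := exists_maxClose (injective_of_mem_shiComplementA hx) ⟨hp, hlt, hf⟩
    exact h q hq hpq

lemma mem_cell_of_maxClose_iff {x y : Fin n → ℝ} (hx : x ∈ shiComplementA n)
    (hy : y ∈ shiComplementA n) (ho : SameOrder x y) (h : ∀ p, MaxClose x p ↔ MaxClose y p) :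
    y ∈ cell x :=
  (mem_cell_iff hx hy).2 ⟨ho, fun p => by
    simp only [far_iff_forall_maxClose hx, far_iff_forall_maxClose hy, h, ho _ _, ho.nested_iff]⟩

lemma mem_cell_of_minFar_iff {x y : Fin n → ℝ} (hx : x ∈ shiComplementA n)
    (hy : y ∈ shiComplementA n) (ho : SameOrder x y) (h : ∀ p, MinFar x p ↔ MinFar y p) :
    y ∈ cell x :=
  (mem_cell_iff hx hy).2 ⟨ho, fun p => by
    simp only [far_iff_exists_minFar (injective_of_mem_shiComplementA hx),
      far_iff_exists_minFar (injective_of_mem_shiComplementA hy), h, ho.nested_iff]⟩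

/-! ### Realising up-sets of far pairs -/

noncomputable def rank (x : Fin n → ℝ) (i : Fin n) : ℕ :=
  (Finset.univ.filter fun k => x k < x i).card

lemma rank_le_rank {x : Fin n → ℝ} {i j : Fin n} (h : x i ≤ x j) : rank x i ≤ rank x j :=
  Finset.card_le_card fun k hk => by
    simp only [Finset.mem_filter] at hk ⊢
    exact ⟨hk.1, hk.2.trans_le h⟩

lemma rank_lt_rank {x : Fin n → ℝ} {i j : Fin n} (h : x i < x j) : rank x i < rank x j :=
  Finset.card_lt_card ⟨fun k hk => by
      simp only [Finset.mem_filter] at hk ⊢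
      exact ⟨hk.1, hk.2.trans h⟩,
    fun hsub => lt_irrefl (x i) (Finset.mem_filter.1 (hsub (by simpa using h))).2⟩

lemma rank_le_rank_iff {x : Fin n → ℝ} {i j : Fin n} : rank x i ≤ rank x j ↔ x i ≤ x j :=
  ⟨fun h => not_lt.1 fun h' => (rank_lt_rank h').not_ge h, rank_le_rank⟩

lemma rank_le_card (x : Fin n → ℝ) (i : Fin n) : rank x i ≤ n :=
  (Finset.card_filter_le _ _).trans (Finset.card_fin n).le

/-- The point is `fun i => v (rank x i)` for the `v` of `exists_semiorder_repr`, where `K b` is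
chosen so that `rank x m < K (rank x l)` exactly when `U (l, m)`. -/
theorem exists_sameOrder_far_iff {x : Fin n → ℝ} (hx : x ∈ shiComplementA n)
    {U : Fin n × Fin n → Prop} (hUlt : ∀ p, U p → x p.2 < x p.1)
    (hUup : ∀ p q, U p → Nested x p q → U q) :
    ∃ y ∈ shiComplementA n, SameOrder x y ∧ ∀ p, Far y p ↔ p.1 < p.2 ∧ U p := by
  classical
  have hinj := injective_of_mem_shiComplementA hx
  set K : ℕ → ℕ := fun b =>
    (Finset.univ.filter fun p : Fin n × Fin n => U p ∧ rank x p.1 ≤ b).sup (rank x ·.2 + 1)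
  have hK : Monotone K := fun b b' h => Finset.sup_mono fun p hp => by
    simp only [Finset.mem_filter] at hp ⊢; exact ⟨hp.1, hp.2.1, hp.2.2.trans h⟩
  have hKU : ∀ l m, rank x m < K (rank x l) ↔ U (l, m) := fun l m => by
    simp only [K, Finset.lt_sup_iff, Finset.mem_filter, Finset.mem_univ, true_and,
      Nat.lt_succ_iff, rank_le_rank_iff]
    exact ⟨fun ⟨p, ⟨hp, h₁⟩, h₂⟩ => hUup p _ hp ⟨h₁, h₂⟩, fun h => ⟨_, ⟨h, le_rfl⟩, le_rfl⟩⟩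
  obtain ⟨v, hv⟩ := exists_semiorder_repr hK n
  set y : Fin n → ℝ := fun i => v (rank x i)
  have hy : ∀ l m, x m < x l → y m < y l ∧ (1 < y l - y m ↔ U (l, m)) ∧ y l - y m ≠ 1 := by
    intro l m h
    obtain ⟨hlt, hfar, hclose⟩ := hv _ _ (rank_lt_rank h) (rank_le_card x l)
    by_cases hU : U (l, m)
    · have := hfar ((hKU l m).2 hU)
      exact ⟨hlt, iff_of_true this hU, this.ne'⟩
    · have := hclose (not_lt.1 (mt (hKU l m).1 hU))
      exact ⟨hlt, iff_of_false this.not_gt hU, this.ne⟩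
  have ho : SameOrder x y := fun i j => by
    refine ⟨fun h => (hy j i h).1, fun h => not_le.1 fun h' => h.not_ge ?_⟩
    rcases h'.lt_or_eq with h' | h'
    · exact (hy i j h').1.le
    · rw [hinj h']
  refine ⟨y, fun i j hij => ?_, ho, fun p => ?_⟩
  · rcases lt_or_gt_of_ne (hinj.ne hij.ne) with h | h
    · have := (ho i j).1 h
      constructor <;> intro <;> linarith
    · exact ⟨by linarith [(hy i j h).1], (hy i j h).2.2⟩
  · by_cases h : x p.2 < x p.1
    · simp only [Far, (hy p.1 p.2 h).2.1]
    · have := (ho.le_iff p.1 p.2).1 (not_lt.1 h)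
      exact iff_of_false (fun hf => by linarith [hf.2]) fun hU => h (hUlt p hU.2)

/-! ### Walls, ceilings and floors -/

lemma sameOrder_of_mem_cell {x y : Fin n → ℝ} (hx : x ∈ shiComplementA n) (hy : y ∈ cell x) :
    SameOrder x y :=
  ((mem_cell_iff hx (cell_subset_shiComplementA x hy)).1 hy).1

lemma far_iff_of_mem_cell {x y : Fin n → ℝ} (hx : x ∈ shiComplementA n) (hy : y ∈ cell x)
    (p : Fin n × Fin n) : Far x p ↔ Far y p :=
  ((mem_cell_iff hx (cell_subset_shiComplementA x hy)).1 hy).2 p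

lemma le_of_mem_closure_cell {x w : Fin n → ℝ} (hx : x ∈ shiComplementA n) {k l : Fin n}
    (h : x k ≤ x l) (hw : w ∈ closure (cell x)) : w k ≤ w l := by
  have hS : IsClosed {w : Fin n → ℝ | w k ≤ w l} := isClosed_le (by fun_prop) (by fun_prop)
  exact closure_minimal (fun y hy => ((sameOrder_of_mem_cell hx hy).le_iff k l).1 h) hS hw

lemma Nested.of_mem_closure_cell {x w : Fin n → ℝ} (hx : x ∈ shiComplementA n)
    {p q : Fin n × Fin n} (h : Nested x p q) (hw : w ∈ closure (cell x)) : Nested w p q :=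
  ⟨le_of_mem_closure_cell hx h.1 hw, le_of_mem_closure_cell hx h.2 hw⟩

lemma one_le_sub_of_mem_closure_cell {x w : Fin n → ℝ} (hx : x ∈ shiComplementA n)
    {p : Fin n × Fin n} (h : Far x p) (hw : w ∈ closure (cell x)) : 1 ≤ w p.1 - w p.2 := by
  have hS : IsClosed {w : Fin n → ℝ | 1 ≤ w p.1 - w p.2} := isClosed_le (by fun_prop) (by fun_prop)
  exact closure_minimal (fun y hy => ((far_iff_of_mem_cell hx hy p).1 h).2.le) hS hw

lemma sub_le_one_of_mem_closure_cell {x w : Fin n → ℝ} (hx : x ∈ shiComplementA n)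
    {p : Fin n × Fin n} (hp : p.1 < p.2) (h : ¬ Far x p) (hw : w ∈ closure (cell x)) :
    w p.1 - w p.2 ≤ 1 := by
  have hS : IsClosed {w : Fin n → ℝ | w p.1 - w p.2 ≤ 1} := isClosed_le (by fun_prop) (by fun_prop)
  exact closure_minimal
    (fun y hy => not_lt.1 fun h' => h ((far_iff_of_mem_cell hx hy p).2 ⟨hp, h'⟩)) hS hw

/-- Within the hyperplane `w i - w j = 1`, a coordinate outside `{i, j}` can be moved freely. -/
lemma eq_of_forall_sub_eq_one {p : Fin n → ℝ} {U : Set (Fin n → ℝ)} (hU : U ∈ 𝓝 p)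
    {i j k l : Fin n} (hij : i < j) (hkl : k < l) (hp : p i - p j = 1)
    (h : ∀ w ∈ U, w i - w j = 1 → w k - w l = 1) : (k, l) = (i, j) := by
  by_contra hne
  obtain ⟨c, hc, hci, hcj⟩ : ∃ c, (c = k ∨ c = l) ∧ c ≠ i ∧ c ≠ j := by
    by_cases hk : k ≠ i ∧ k ≠ j
    · exact ⟨k, Or.inl rfl, hk⟩
    · refine ⟨l, Or.inr rfl, ?_⟩
      simp only [ne_eq, Prod.mk.injEq, Fin.ext_iff, Fin.lt_def] at *
      omega
  have hmove : Tendsto (fun t : ℝ => Function.update p c (p c + t)) (𝓝 0) (𝓝 p) := by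
    have : Continuous fun t : ℝ => Function.update p c (p c + t) :=
      continuous_const.update c (by fun_prop)
    simpa using this.tendsto 0
  obtain ⟨t, ht, ht0⟩ := ((hmove.mono_left nhdsWithin_le_nhds).eventually_mem hU |>.and
    (self_mem_nhdsWithin : {t : ℝ | t ≠ 0} ∈ 𝓝[≠] 0)).exists
  have h₀ := h p (mem_of_mem_nhds hU) hp
  have h₁ := h _ ht (by simpa [Function.update_of_ne, hci.symm, hcj.symm] using hp)
  rcases hc with rfl | rfl
  · simp [Function.update_of_ne, hkl.ne'] at h₁
    exact ht0 (show t = 0 by linarith)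
  · simp [Function.update_of_ne, hkl.ne] at h₁
    exact ht0 (show t = 0 by linarith)

lemma lt_of_isWall_cell {x : Fin n → ℝ} (hx : x ∈ shiComplementA n) {i j : Fin n}
    (hW : IsWall {w | w i - w j = 1} (cell x)) : x j < x i := by
  obtain ⟨p, hp, U, hU, hsub⟩ := hW
  by_contra h
  have := le_of_mem_closure_cell hx (not_lt.1 h) (hsub ⟨hp, mem_of_mem_nhds hU⟩)
  simp only [mem_ofPred_eq] at hp
  linarith

lemma eq_of_isWall_cell {x : Fin n → ℝ} {i j k l : Fin n} (hij : i < j) (hkl : k < l)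
    (hW : IsWall {w | w i - w j = 1} (cell x))
    (h : ∀ w ∈ closure (cell x), w i - w j = 1 → w k - w l = 1) : (k, l) = (i, j) := by
  obtain ⟨p, hp, U, hU, hsub⟩ := hW
  exact eq_of_forall_sub_eq_one hU hij hkl hp fun w hw hw₁ => h w (hsub ⟨hw₁, hw⟩) hw₁

lemma maxClose_of_isWall_cell {x : Fin n → ℝ} (hx : x ∈ shiComplementA n) {i j : Fin n}
    (hij : i < j) (hW : IsWall {w | w i - w j = 1} (cell x)) (h : ¬ Far x (i, j)) :
    MaxClose x (i, j) := by
  refine ⟨⟨hij, lt_of_isWall_cell hx hW, h⟩,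
    fun q hq hnest => eq_of_isWall_cell hij hq.1 hW fun w hw hw₁ => ?_⟩
  have := (hnest.of_mem_closure_cell hx hw).sub_le
  linarith [sub_le_one_of_mem_closure_cell hx hq.1 hq.2.2 hw]

lemma minFar_of_isWall_cell {x : Fin n → ℝ} (hx : x ∈ shiComplementA n) {i j : Fin n}
    (hij : i < j) (hW : IsWall {w | w i - w j = 1} (cell x)) (h : Far x (i, j)) :
    MinFar x (i, j) := by
  refine ⟨h, fun q hq hnest => eq_of_isWall_cell hij hq.1 hW fun w hw hw₁ => ?_⟩
  have := (hnest.of_mem_closure_cell hx hw).sub_le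
  linarith [one_le_sub_of_mem_closure_cell hx hq hw]

lemma openSegment_one_subset_shiSide {g : ℝ} (h₀ : 0 < g) (h₁ : g ≠ 1) :
    openSegment ℝ 1 g ⊆ shiSide g := by
  unfold shiSide
  rw [if_neg h₀.not_gt]
  rcases lt_or_gt_of_ne h₁ with h | h
  · rw [if_pos h, openSegment_symm, openSegment_eq_Ioo h]
    exact Ioo_subset_Ioo_left h₀.le
  · rw [if_neg h.not_gt, openSegment_eq_Ioo h]
    exact Ioo_subset_Ioi_self

/-- The segment from `x` to `y` meets the hyperplane in a point `z`; near `z` the hyperplane lies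
in the closure of the cell, since every `w` on it is a limit of the open segment from `w` to `x`. -/
theorem isWall_cell_of_mem_cellExcept {x y : Fin n → ℝ} (hx : x ∈ shiComplementA n) {i j : Fin n}
    (hlt : x j < x i) (hy : y ∈ cellExcept x i j) (h₁ : (1 : ℝ) ∈ uIcc (x i - x j) (y i - y j)) :
    IsWall {w | w i - w j = 1} (cell x) := by
  have hxO : x ∈ cellExcept x i j := fun k l hkl _ => mem_cell_self hx k l hkl
  have hgap : Continuous fun z : Fin n → ℝ => z i - z j := by fun_prop
  obtain ⟨z, hz, hz₁⟩ :=
    ((convex_segment x y).isPreconnected.image _ hgap.continuousOn).ordConnected.uIcc_subset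
      (mem_image_of_mem _ (left_mem_segment ℝ x y)) (mem_image_of_mem _ (right_mem_segment ℝ x y))
      h₁
  refine ⟨z, hz₁, _, (isOpen_cellExcept x i j).mem_nhds
    ((convex_cellExcept x i j).segment_subset hxO hy hz), ?_⟩
  rintro w ⟨hw₁, hw⟩
  refine closure_mono ?_ (segment_subset_closure_openSegment (left_mem_segment ℝ w x))
  rintro _ ⟨a, b, ha, hb, hab, rfl⟩ k l hkl
  by_cases he : (k, l) = (i, j)
  · obtain ⟨rfl, rfl⟩ := Prod.ext_iff.1 he
    refine openSegment_one_subset_shiSide (sub_pos.2 hlt) (hx k l hkl).2 ⟨a, b, ha, hb, hab, ?_⟩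
    simp only [mem_ofPred_eq] at hw₁
    simp only [Pi.add_apply, Pi.smul_apply, smul_eq_mul, ← hw₁]
    ring
  · exact (convex_cellExcept x i j).openSegment_subset hw hxO ⟨a, b, ha, hb, hab, rfl⟩ k l hkl he

/-- The neighbouring region across a ceiling has the same far pairs plus `(i, j)`. -/
theorem isCeilingH_cell_iff {x : Fin n → ℝ} (hx : x ∈ shiComplementA n) {i j : Fin n}
    (hij : i < j) : IsCeilingH (fun z => z i - z j) (cell x) ↔ MaxClose x (i, j) := by
  refine ⟨fun ⟨hW, hside⟩ => maxClose_of_isWall_cell hx hij hW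
    fun hf => (hside x (mem_cell_self hx)).not_gt hf.2, fun h => ⟨?_, fun y hy => ?_⟩⟩
  · obtain ⟨y, hyC, ho, hf⟩ := exists_sameOrder_far_iff hx
      (U := fun p => 1 < x p.1 - x p.2 ∨ Nested x (i, j) p)
      (fun p hp => hp.elim (fun h' => by linarith) fun h' => by linarith [h'.1, h'.2, h.1.2.1])
      (fun p q hp hpq => hp.imp (fun h' => h'.trans_le hpq.sub_le) fun h' => h'.trans hpq)
    refine isWall_cell_of_mem_cellExcept hx h.1.2.1 (y := y) (fun k l hkl hne => ?_) ?_
    · refine (sub_mem_shiSide_iff hx hyC hkl).2 ⟨ho k l, ?_⟩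
      rw [hf]
      refine ⟨fun h' => ⟨hkl, Or.inl h'.2⟩, fun ⟨_, h'⟩ => ⟨hkl, h'.elim id fun hn => ?_⟩⟩
      by_contra hf
      exact hne (h.2 _ ⟨hkl, by linarith [hn.1, hn.2, h.1.2.1], fun hF => hf hF.2⟩ hn)
    · exact mem_uIcc.2 (Or.inl ⟨(h.1.sub_lt_one hx).le,
        ((hf (i, j)).2 ⟨hij, Or.inr (Nested.refl x _)⟩).2.le⟩)
  · exact ((close_congr (sameOrder_of_mem_cell hx hy) (far_iff_of_mem_cell hx hy)).1 h.1).sub_lt_one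
      (cell_subset_shiComplementA x hy)

/-- The neighbouring region across a floor has the same far pairs except `(i, j)`. -/
theorem isFloorH_cell_iff {x : Fin n → ℝ} (hx : x ∈ shiComplementA n) {i j : Fin n}
    (hij : i < j) : IsFloorH (fun z => z i - z j) (cell x) ↔ MinFar x (i, j) := by
  refine ⟨fun ⟨hW, hside⟩ => minFar_of_isWall_cell hx hij hW ⟨hij, hside x (mem_cell_self hx)⟩,
    fun h => ⟨?_, fun y hy => ((far_iff_of_mem_cell hx hy _).1 h.1).2⟩⟩
  obtain ⟨y, hyC, ho, hf⟩ := exists_sameOrder_far_iff hx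
    (U := fun p => 1 < x p.1 - x p.2 ∧ ¬ Nested x p (i, j))
    (fun p hp => by linarith [hp.1])
    (fun p q hp hpq => ⟨hp.1.trans_le hpq.sub_le, fun hq => hp.2 (hpq.trans hq)⟩)
  refine isWall_cell_of_mem_cellExcept hx h.1.lt (y := y) (fun k l hkl hne => ?_) ?_
  · refine (sub_mem_shiSide_iff hx hyC hkl).2 ⟨ho k l, ?_⟩
    rw [hf]
    exact ⟨fun h' => ⟨hkl, h'.2, fun hn => hne (h.2 _ h' hn)⟩, fun ⟨_, h'⟩ => ⟨hkl, h'.1⟩⟩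
  · have : ¬ Far y (i, j) := fun hF => ((hf _).1 hF).2.2 (Nested.refl x _)
    exact mem_uIcc.2 (Or.inr ⟨not_lt.1 fun h' => this ⟨hij, h'⟩, h.1.2.le⟩)

lemma numCeilingsA_cell {x : Fin n → ℝ} (hx : x ∈ shiComplementA n) :
    numCeilingsA n (cell x) = Nat.card {p // MaxClose x p} :=
  Nat.card_congr <| Equiv.subtypeEquivRight fun _ =>
    ⟨fun h => (isCeilingH_cell_iff hx h.1).1 h.2,
      fun h => ⟨h.1.1, (isCeilingH_cell_iff hx h.1.1).2 h⟩⟩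

lemma numFloorsA_cell {x : Fin n → ℝ} (hx : x ∈ shiComplementA n) :
    numFloorsA n (cell x) = Nat.card {p // MinFar x p} :=
  Nat.card_congr <| Equiv.subtypeEquivRight fun _ =>
    ⟨fun h => (isFloorH_cell_iff hx h.1).1 h.2,
      fun h => ⟨h.1.1, (isFloorH_cell_iff hx h.1.1).2 h⟩⟩

/-! ### Duality -/

/-- The region of `y` has as floors the ceilings of the region of `x`. -/
def IsDual (x y : Fin n → ℝ) : Prop := SameOrder x y ∧ ∀ p, MinFar y p ↔ MaxClose x p

/-- Realise the up-set generated by the ceilings of `x`. -/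
lemma exists_isDual_right {x : Fin n → ℝ} (hx : x ∈ shiComplementA n) :
    ∃ y ∈ shiComplementA n, IsDual x y := by
  obtain ⟨y, hy, ho, hf⟩ := exists_sameOrder_far_iff hx
    (U := fun p => ∃ q, MaxClose x q ∧ Nested x q p)
    (fun p ⟨q, hq, hqp⟩ => by linarith [hqp.1, hqp.2, hq.1.2.1])
    (fun p p' ⟨q, hq, hqp⟩ hpp' => ⟨q, hq, hqp.trans hpp'⟩)
  have hmax : ∀ {p}, MaxClose x p → Far y p := fun hp => (hf _).2 ⟨hp.1.1, _, hp, Nested.refl x _⟩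
  refine ⟨y, hy, ho, fun p => ⟨fun ⟨hp, hmin⟩ => ?_, fun hp => ⟨hmax hp, fun q hq hqp => ?_⟩⟩⟩
  · obtain ⟨-, q, hq, hqp⟩ := (hf p).1 hp
    rwa [← hmin q (hmax hq) (ho.nested_iff.1 hqp)]
  · obtain ⟨-, r, hr, hrq⟩ := (hf q).1 hq
    have hqp := ho.nested_iff.2 hqp
    obtain rfl := hp.eq_of_nested hr (hrq.trans hqp)
    exact hqp.antisymm (injective_of_mem_shiComplementA hx) hrq

/-- Realise the complement of the down-set generated by the floors of `y`. -/
lemma exists_isDual_left {y : Fin n → ℝ} (hy : y ∈ shiComplementA n) :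
    ∃ x ∈ shiComplementA n, IsDual x y := by
  obtain ⟨x, hx, ho, hf⟩ := exists_sameOrder_far_iff hy
    (U := fun p => y p.2 < y p.1 ∧ ∀ q, MinFar y q → ¬ Nested y p q)
    (fun p hp => hp.1)
    (fun p p' hp hpp' => ⟨by linarith [hp.1, hpp'.1, hpp'.2],
      fun q hq hp'q => hp.2 q hq (hpp'.trans hp'q)⟩)
  have hclose : ∀ {p}, Close x p ↔ p.1 < p.2 ∧ y p.2 < y p.1 ∧ ∃ q, MinFar y q ∧ Nested y p q :=
    fun {p} => by simp only [Close, hf, ← ho _ _, not_and, not_forall, not_not]; tauto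
  refine ⟨x, hx, ho.symm, fun p => ⟨fun hp => ⟨hclose.2 ⟨hp.1.1, hp.1.lt, p, hp, Nested.refl y _⟩,
    fun q hq hpq => ?_⟩, fun hp => ?_⟩⟩
  · obtain ⟨-, -, r, hr, hqr⟩ := hclose.1 hq
    have hpq := ho.nested_iff.2 hpq
    obtain rfl := hr.eq_of_nested hp (hpq.trans hqr)
    exact hqr.antisymm (injective_of_mem_shiComplementA hy) hpq
  · obtain ⟨-, -, q, hq, hpq⟩ := hclose.1 hp.1
    rwa [← hp.2 q (hclose.2 ⟨hq.1.1, hq.1.lt, q, hq, Nested.refl y _⟩) (ho.nested_iff.1 hpq)]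

lemma IsDual.congr {x y x' y' : Fin n → ℝ} (hx : x ∈ shiComplementA n)
    (hy : y ∈ shiComplementA n) (h : IsDual x y) (hx' : x' ∈ cell x) (hy' : y' ∈ cell y) :
    IsDual x' y' := by
  have hox := sameOrder_of_mem_cell hx hx'
  have hoy := sameOrder_of_mem_cell hy hy'
  refine ⟨hox.symm.trans (h.1.trans hoy), fun p => ?_⟩
  rw [← minFar_congr hoy (far_iff_of_mem_cell hy hy'), h.2,
    maxClose_congr hox (far_iff_of_mem_cell hx hx')]

lemma IsDual.mem_cell_left {x x' y : Fin n → ℝ} (hx : x ∈ shiComplementA n)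
    (hx' : x' ∈ shiComplementA n) (h : IsDual x y) (h' : IsDual x' y) : x' ∈ cell x :=
  mem_cell_of_maxClose_iff hx hx' (h.1.trans h'.1.symm) fun p => (h.2 p).symm.trans (h'.2 p)

lemma IsDual.mem_cell_right {x y y' : Fin n → ℝ} (hy : y ∈ shiComplementA n)
    (hy' : y' ∈ shiComplementA n) (h : IsDual x y) (h' : IsDual x y') : y' ∈ cell y :=
  mem_cell_of_minFar_iff hy hy' (h.1.symm.trans h'.1) fun p => (h.2 p).trans (h'.2 p).symm

def IsDualRegion (R R' : Set (Fin n → ℝ)) : Prop := ∀ x ∈ R, ∀ y ∈ R', IsDual x y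

lemma exists_isDualRegion_right {R : Set (Fin n → ℝ)} (hR : R ∈ regionsA n) :
    ∃ R' ∈ regionsA n, IsDualRegion R R' := by
  obtain ⟨x, hx, rfl⟩ := mem_regionsA_iff.1 hR
  obtain ⟨y, hy, h⟩ := exists_isDual_right hx
  exact ⟨cell y, mem_regionsA_iff.2 ⟨y, hy, rfl⟩, fun _ hx' _ hy' => h.congr hx hy hx' hy'⟩

lemma exists_isDualRegion_left {R' : Set (Fin n → ℝ)} (hR' : R' ∈ regionsA n) :
    ∃ R ∈ regionsA n, IsDualRegion R R' := by
  obtain ⟨y, hy, rfl⟩ := mem_regionsA_iff.1 hR'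
  obtain ⟨x, hx, h⟩ := exists_isDual_left hy
  exact ⟨cell x, mem_regionsA_iff.2 ⟨x, hx, rfl⟩, fun _ hx' _ hy' => h.congr hx hy hx' hy'⟩

lemma IsDualRegion.left_unique {R₁ R₂ R' : Set (Fin n → ℝ)} (hR₁ : R₁ ∈ regionsA n)
    (hR₂ : R₂ ∈ regionsA n) (hR' : R' ∈ regionsA n) (h₁ : IsDualRegion R₁ R')
    (h₂ : IsDualRegion R₂ R') : R₁ = R₂ := by
  obtain ⟨x₁, hx₁, rfl⟩ := mem_regionsA_iff.1 hR₁
  obtain ⟨x₂, hx₂, rfl⟩ := mem_regionsA_iff.1 hR₂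
  obtain ⟨y, hy, rfl⟩ := mem_regionsA_iff.1 hR'
  have hy' := mem_cell_self hy
  exact (cell_eq_of_mem ((h₁ _ (mem_cell_self hx₁) _ hy').mem_cell_left hx₁ hx₂
    (h₂ _ (mem_cell_self hx₂) _ hy'))).symm

lemma IsDualRegion.right_unique {R R'₁ R'₂ : Set (Fin n → ℝ)} (hR : R ∈ regionsA n)
    (hR'₁ : R'₁ ∈ regionsA n) (hR'₂ : R'₂ ∈ regionsA n) (h₁ : IsDualRegion R R'₁)
    (h₂ : IsDualRegion R R'₂) : R'₁ = R'₂ := by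
  obtain ⟨x, hx, rfl⟩ := mem_regionsA_iff.1 hR
  obtain ⟨y₁, hy₁, rfl⟩ := mem_regionsA_iff.1 hR'₁
  obtain ⟨y₂, hy₂, rfl⟩ := mem_regionsA_iff.1 hR'₂
  have hx' := mem_cell_self hx
  exact (cell_eq_of_mem ((h₁ _ hx' _ (mem_cell_self hy₁)).mem_cell_right hy₁ hy₂
    (h₂ _ hx' _ (mem_cell_self hy₂)))).symm

lemma IsDualRegion.numFloorsA_eq {R R' : Set (Fin n → ℝ)} (hR : R ∈ regionsA n)
    (hR' : R' ∈ regionsA n) (h : IsDualRegion R R') : numFloorsA n R' = numCeilingsA n R := by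
  obtain ⟨x, hx, rfl⟩ := mem_regionsA_iff.1 hR
  obtain ⟨y, hy, rfl⟩ := mem_regionsA_iff.1 hR'
  rw [numFloorsA_cell hy, numCeilingsA_cell hx]
  exact Nat.card_congr (Equiv.subtypeEquivRight (h x (mem_cell_self hx) y (mem_cell_self hy)).2)

end ShiArrangement

open ShiArrangement in
theorem card_regions_ceilings_eq_card_regions_floors_general (n : ℕ) (m : ℕ) :
    Nat.card {R : Set (Fin n → ℝ) // R ∈ regionsA n ∧ numCeilingsA n R = m} =
      Nat.card {R : Set (Fin n → ℝ) // R ∈ regionsA n ∧ numFloorsA n R = m} := by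
  refine card_eq_of_forall_existsUnique (r := fun R R' => IsDualRegion R.1 R'.1)
    (fun ⟨R, hR, hc⟩ => ?_) (fun ⟨R', hR', hf⟩ => ?_)
  · obtain ⟨R', hR', h⟩ := exists_isDualRegion_right hR
    exact ⟨⟨R', hR', (h.numFloorsA_eq hR hR').trans hc⟩, h,
      fun S hS => Subtype.ext (hS.right_unique hR S.2.1 hR' h)⟩
  · obtain ⟨R, hR, h⟩ := exists_isDualRegion_left hR'
    exact ⟨⟨R, hR, (h.numFloorsA_eq hR hR').symm.trans hf⟩, h,
      fun S hS => Subtype.ext (hS.left_unique S.2.1 hR hR' h)⟩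

/-- The number of regions of the type `A_{n-1}` Shi arrangement with exactly `m`
ceilings equals the number of regions with exactly `m` floors. -/
theorem card_regions_ceilings_eq_card_regions_floors (n : ℕ) (hn : 1 ≤ n) (m : ℕ) :
    Nat.card {R : Set (Fin n → ℝ) // R ∈ regionsA n ∧ numCeilingsA n R = m} =
      Nat.card {R : Set (Fin n → ℝ) // R ∈ regionsA n ∧ numFloorsA n R = m} :=
  card_regions_ceilings_eq_card_regions_floors_general n m
end

section
/- For every integer n ≥ 1 and every permutation w of [n], the number of connected components of the open set {x ∈ ℝ^n : x_{w(1)} > x_{w(2)} > ⋯ > x_{w(n)} and x_i − x_j ≠ 1 for all 1 ≤ i < j ≤ n} equals j(Q_w), the number of antichains of the poset Q_w. -/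
/-- The partial order of the poset `Q_w`: `(i,j) ≤ (r,s)` iff `r ≤ i` and `j ≤ s`. -/
def QwLe {n : ℕ} (p q : Fin n × Fin n) : Prop :=
  q.1 ≤ p.1 ∧ p.2 ≤ q.2

/-- `A` is an antichain of the poset
`Q_w = {(i,j) : i < j, w(i) < w(j)}` ordered by `(i,j) ≤ (r,s)` iff `r ≤ i ∧ j ≤ s`:
all elements of `A` lie in `Q_w` and are pairwise incomparable. -/
def IsAntichainQw (n : ℕ) (w : Equiv.Perm (Fin n)) (A : Set (Fin n × Fin n)) : Prop :=
  (∀ p ∈ A, p.1 < p.2 ∧ w p.1 < w p.2) ∧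
    ∀ p ∈ A, ∀ q ∈ A, p ≠ q → ¬QwLe p q ∧ ¬QwLe q p

/-- `j(Q_w)`: the number of antichains of the poset `Q_w`. -/
noncomputable def jQw (n : ℕ) (w : Equiv.Perm (Fin n)) : ℕ :=
  Nat.card {A : Set (Fin n × Fin n) // IsAntichainQw n w A}

/-- The part of the complement of the Shi arrangement inside the cone `wC^A`:
points with `x_{w(1)} > ⋯ > x_{w(n)}` and `xᵢ - xⱼ ≠ 1` for all `i < j`. -/
def coneShiA (n : ℕ) (w : Equiv.Perm (Fin n)) : Set (Fin n → ℝ) :=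
  {x | (∀ i j : Fin n, i < j → x (w j) < x (w i)) ∧
       ∀ i j : Fin n, i < j → x i - x j ≠ 1}

namespace ShiAux

variable {n : ℕ}

def Qw (w : Equiv.Perm (Fin n)) : Set (Fin n × Fin n) :=
  {p | p.1 < p.2 ∧ w p.1 < w p.2}

def IsUpSet (w : Equiv.Perm (Fin n)) (S : Set (Fin n × Fin n)) : Prop :=
  S ⊆ Qw w ∧ ∀ p ∈ S, ∀ q ∈ Qw w, QwLe p q → q ∈ S

theorem qwle_refl (p : Fin n × Fin n) : QwLe p p := ⟨le_refl _, le_refl _⟩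

theorem qwle_trans {p q r : Fin n × Fin n} (h1 : QwLe p q) (h2 : QwLe q r) : QwLe p r :=
  ⟨h2.1.trans h1.1, h1.2.trans h2.2⟩

theorem qwle_antisymm {p q : Fin n × Fin n} (h1 : QwLe p q) (h2 : QwLe q p) : p = q :=
  Prod.ext (le_antisymm h2.1 h1.1) (le_antisymm h1.2 h2.2)

def mins (S : Set (Fin n × Fin n)) : Set (Fin n × Fin n) :=
  {p | p ∈ S ∧ ∀ q ∈ S, QwLe q p → q = p}

def upCl (w : Equiv.Perm (Fin n)) (A : Set (Fin n × Fin n)) : Set (Fin n × Fin n) :=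
  {q | q ∈ Qw w ∧ ∃ p ∈ A, QwLe p q}

theorem exists_min_below {w : Equiv.Perm (Fin n)} {S : Set (Fin n × Fin n)}
    (hS : S ⊆ Qw w) {q : Fin n × Fin n} (hq : q ∈ S) :
    ∃ p ∈ mins S, QwLe p q := by
  obtain ⟨k, hk⟩ : ∃ k, (q.2 : ℕ) - (q.1 : ℕ) = k := ⟨_, rfl⟩
  induction k using Nat.strong_induction_on generalizing q with
  | _ k ih =>
    by_cases hmin : ∀ r ∈ S, QwLe r q → r = q
    · exact ⟨q, ⟨hq, hmin⟩, qwle_refl q⟩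
    · push_neg at hmin
      obtain ⟨r, hrS, hrq, hrne⟩ := hmin
      have hrQ := hS hrS
      have hqQ := hS hq
      have hlt : (r.2 : ℕ) - (r.1 : ℕ) < k := by
        have h1 : (q.1 : ℕ) ≤ r.1 := hrq.1
        have h2 : (r.2 : ℕ) ≤ q.2 := hrq.2
        have h3 : (r.1 : ℕ) < r.2 := hrQ.1
        have h4 : (q.1 : ℕ) < q.2 := hqQ.1
        rcases lt_or_eq_of_le h1 with h | h
        · omega
        · rcases lt_or_eq_of_le h2 with h' | h'
          · omega
          · exact absurd (Prod.ext (Fin.val_injective h.symm) (Fin.val_injective h')) hrne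
      obtain ⟨p, hp, hpr⟩ := ih _ hlt hrS rfl
      exact ⟨p, hp, qwle_trans hpr hrq⟩

theorem isUpSet_upCl (w : Equiv.Perm (Fin n)) {A : Set (Fin n × Fin n)}
    (hA : IsAntichainQw n w A) : IsUpSet w (upCl w A) := by
  constructor
  · intro q hq; exact hq.1
  · rintro p ⟨hpQ, a, haA, hap⟩ q hqQ hpq
    exact ⟨hqQ, a, haA, qwle_trans hap hpq⟩

theorem isAntichain_mins (w : Equiv.Perm (Fin n)) {S : Set (Fin n × Fin n)}
    (hS : IsUpSet w S) : IsAntichainQw n w (mins S) := by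
  constructor
  · intro p hp; exact hS.1 hp.1
  · intro p hp q hq hne
    constructor
    · intro h; exact hne (hq.2 p hp.1 h)
    · intro h; exact hne ((hp.2 q hq.1 h).symm)

theorem mins_upCl (w : Equiv.Perm (Fin n)) {A : Set (Fin n × Fin n)}
    (hA : IsAntichainQw n w A) : mins (upCl w A) = A := by
  ext p
  constructor
  · rintro ⟨⟨hpQ, a, haA, hap⟩, hmin⟩
    have haQ : a ∈ Qw w := hA.1 a haA
    have : a = p := hmin a ⟨haQ, a, haA, qwle_refl a⟩ hap
    exact this ▸ haA
  · intro hpA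
    have hpQ : p ∈ Qw w := hA.1 p hpA
    refine ⟨⟨hpQ, p, hpA, qwle_refl p⟩, ?_⟩
    rintro q ⟨hqQ, a, haA, haq⟩ hqp
    have hap : QwLe a p := qwle_trans haq hqp
    have : a = p := by
      by_contra hne
      exact (hA.2 a haA p hpA hne).1 hap
    subst this
    exact qwle_antisymm hqp haq

theorem upCl_mins (w : Equiv.Perm (Fin n)) {S : Set (Fin n × Fin n)}
    (hS : IsUpSet w S) : upCl w (mins S) = S := by
  ext q
  constructor
  · rintro ⟨hqQ, p, hpM, hpq⟩
    exact hS.2 p hpM.1 q hqQ hpq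
  · intro hqS
    obtain ⟨p, hp, hpq⟩ := exists_min_below hS.1 hqS
    exact ⟨hS.1 hqS, p, hp, hpq⟩

noncomputable def antichainEquivUpSet (w : Equiv.Perm (Fin n)) :
    {A : Set (Fin n × Fin n) // IsAntichainQw n w A} ≃
      {S : Set (Fin n × Fin n) // IsUpSet w S} where
  toFun A := ⟨upCl w A.1, isUpSet_upCl w A.2⟩
  invFun S := ⟨mins S.1, isAntichain_mins w S.2⟩
  left_inv A := Subtype.ext (mins_upCl w A.2)
  right_inv S := Subtype.ext (upCl_mins w S.2)

/-- no element of `S` lies inside the interval `[a, c]`. -/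
def NoS (S : Set (Fin n × Fin n)) (a c : Fin n) : Prop :=
  ∀ p ∈ S, ¬(a ≤ p.1 ∧ p.2 ≤ c)

def Phi (S : Set (Fin n × Fin n)) (b : ℕ) (y : Fin n → ℝ) : Prop :=
  ∀ a c : Fin n, a < c → (c : ℕ) < b →
    y c < y a ∧ ((a, c) ∈ S → 1 < y a - y c) ∧ (NoS S a c → y a - y c < 1)

theorem exists_phi (w : Equiv.Perm (Fin n)) (S : Set (Fin n × Fin n))
    (hS : IsUpSet w S) : ∀ b : ℕ, ∃ y : Fin n → ℝ, Phi S b y := by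
  classical
  intro b
  induction b with
  | zero => exact ⟨0, fun a c _ hc => absurd hc (Nat.not_lt_zero _)⟩
  | succ b ih =>
    obtain ⟨y, hy⟩ := ih
    by_cases hb : b < n
    · set i : Fin n := ⟨b, hb⟩ with hi
      by_cases hA : ∃ a : Fin n, a < i
      · -- build constraints
        obtain ⟨a₀, ha₀⟩ := hA
        set A : Finset (Fin n) := Finset.univ.filter (· < i) with hAdef
        have hAne : A.Nonempty := ⟨a₀, by simp [hAdef, ha₀]⟩
        set f : Fin n → ℝ := fun a => if (a, i) ∈ S then y a - 1 else y a with hf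
        set U : ℝ := A.inf' hAne f with hU
        set LB : Finset ℝ :=
          insert (U - 2) ((A.filter (fun a => NoS S a i)).image (fun a => y a - 1)) with hLB
        set L : ℝ := LB.max' ⟨U - 2, Finset.mem_insert_self _ _⟩ with hL
        -- key fact: every lower bound is < every upper bound
        have hmemA : ∀ a : Fin n, a < i → a ∈ A := by
          intro a ha; simp [hAdef, ha]
        have hvalb : ∀ a : Fin n, a < i → (a : ℕ) < b := fun a ha => ha
        have hLU : L < U := by
          rw [hL]
          apply Finset.max'_lt_iff _ _ |>.mpr
          intro l hl
          rw [hLB] at hl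
          rcases Finset.mem_insert.mp hl with rfl | hl
          · -- U - 2 < U
            linarith
          · obtain ⟨a, haf, rfl⟩ := Finset.mem_image.mp hl
            obtain ⟨haA, haN⟩ := Finset.mem_filter.mp haf
            have hai : a < i := (Finset.mem_filter.mp haA).2
            -- show y a - 1 < f a' for all a' ∈ A
            rw [hU]
            apply lt_of_lt_of_le ?_ (le_refl _)
            rw [Finset.lt_inf'_iff]
            intro a' ha'A
            have ha'i : a' < i := (Finset.mem_filter.mp ha'A).2
            rw [hf]
            by_cases hs : (a', i) ∈ S
            · simp only [hs, if_pos]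
              have ha'a : a' < a := by
                by_contra hle
                push_neg at hle
                exact haN (a', i) hs ⟨hle, le_refl i⟩
              have := (hy a' a ha'a (hvalb a hai)).1
              linarith
            · simp only [hs, if_neg, if_false]
              rcases lt_trichotomy a a' with h | h | h
              · have hN : NoS S a a' := by
                  intro p hp ⟨h1, h2⟩
                  exact haN p hp ⟨h1, h2.trans (le_of_lt ha'i)⟩
                have := (hy a a' h (hvalb a' ha'i)).2.2 hN
                linarith
              · subst h; linarith
              · have := (hy a' a h (hvalb a hai)).1
                linarith
        set v : ℝ := (L + U) / 2 with hv
        have hvU : v < U := by rw [hv]; linarith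
        have hLv : L < v := by rw [hv]; linarith
        refine ⟨Function.update y i v, ?_⟩
        intro a c hac hcb
        have hane : a ≠ i := by
          intro h; subst h
          have h1 : (b : ℕ) < (c : ℕ) := hac
          omega
        have hya : Function.update y i v a = y a := Function.update_of_ne hane _ _
        by_cases hci : c = i
        · subst hci
          have hai : a < i := hac
          have haA : a ∈ A := hmemA a hai
          have hyc : Function.update y i v i = v := Function.update_self _ _ _
          rw [hya, hyc]
          have hUle : U ≤ f a := Finset.inf'_le _ haA
          refine ⟨?_, ?_, ?_⟩
          · -- v < y a
            have : f a ≤ y a := by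
              rw [hf]; by_cases hs : (a, i) ∈ S <;> simp [hs] <;> linarith
            linarith
          · intro hs
            have : f a = y a - 1 := by rw [hf]; simp [hs]
            rw [this] at hUle; linarith
          · intro hN
            have : y a - 1 ∈ LB := by
              rw [hLB]
              apply Finset.mem_insert_of_mem
              exact Finset.mem_image.mpr ⟨a, Finset.mem_filter.mpr ⟨haA, hN⟩, rfl⟩
            have : y a - 1 ≤ L := Finset.le_max' _ _ this
            linarith
        · have hcne : c ≠ i := hci
          have hcb' : (c : ℕ) < b := by
            have : (c : ℕ) ≠ b := fun h => hcne (Fin.ext h)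
            omega
          have hyc : Function.update y i v c = y c := Function.update_of_ne hcne _ _
          rw [hya, hyc]
          exact hy a c hac hcb'
      · -- i is 0: no constraints for c = i
        push_neg at hA
        refine ⟨y, ?_⟩
        intro a c hac hcb
        by_cases hci : c = i
        · subst hci; exact absurd hac (by simpa using hA a)
        · have : (c : ℕ) < b := by
            have : (c : ℕ) ≠ b := fun h => hci (Fin.ext h)
            omega
          exact hy a c hac this
    · refine ⟨y, ?_⟩
      intro a c hac hcb
      have : (c : ℕ) < b := lt_of_lt_of_le c.isLt (le_of_not_gt hb)
      exact hy a c hac this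

variable (w : Equiv.Perm (Fin n))

/-- The up-set read off from a point. -/
def Sfun (w : Equiv.Perm (Fin n)) (x : Fin n → ℝ) : Set (Fin n × Fin n) :=
  {p | p ∈ Qw w ∧ 1 < x (w p.1) - x (w p.2)}

theorem mono_of_cone {x : Fin n → ℝ} (hx : x ∈ coneShiA n w) {a a' : Fin n} (h : a ≤ a') :
    x (w a') ≤ x (w a) := by
  rcases lt_or_eq_of_le h with h | h
  · exact le_of_lt (hx.1 a a' h)
  · rw [h]

theorem notMem_lt {x : Fin n → ℝ} (hx : x ∈ coneShiA n w) {p : Fin n × Fin n}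
    (hp : p ∈ Qw w) (hps : p ∉ Sfun w x) : x (w p.1) - x (w p.2) < 1 := by
  have hne : x (w p.1) - x (w p.2) ≠ 1 := hx.2 (w p.1) (w p.2) hp.2
  have : ¬ (1 < x (w p.1) - x (w p.2)) := fun h => hps ⟨hp, h⟩
  push_neg at this
  exact lt_of_le_of_ne this hne

theorem isUpSet_Sfun {x : Fin n → ℝ} (hx : x ∈ coneShiA n w) : IsUpSet w (Sfun w x) := by
  constructor
  · intro p hp; exact hp.1
  · rintro p ⟨hpQ, hpx⟩ q hqQ ⟨h1, h2⟩
    refine ⟨hqQ, ?_⟩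
    have e1 : x (w p.1) ≤ x (w q.1) := mono_of_cone w hx h1
    have e2 : x (w q.2) ≤ x (w p.2) := mono_of_cone w hx h2
    linarith

/-- the point realizing an up-set, built from `y` satisfying `Phi`. -/
theorem realize (S : Set (Fin n × Fin n)) (hS : IsUpSet w S)
    (y : Fin n → ℝ)
    (hy : ∀ a c : Fin n, a < c →
      y c < y a ∧ ((a, c) ∈ S → 1 < y a - y c) ∧
        ((∀ p ∈ S, ¬(a ≤ p.1 ∧ p.2 ≤ c)) → y a - y c < 1)) :
    ∃ x ∈ coneShiA n w, Sfun w x = S := by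
  refine ⟨fun idx => y (w.symm idx), ⟨?_, ?_⟩, ?_⟩
  · intro i j hij
    simp only [Equiv.symm_apply_apply]
    exact (hy i j hij).1
  · intro i j hij
    show y (w.symm i) - y (w.symm j) ≠ 1
    set a := w.symm i with ha
    set c := w.symm j with hc
    have hwa : w a = i := w.apply_symm_apply i
    have hwc : w c = j := w.apply_symm_apply j
    rcases lt_trichotomy a c with h | h | h
    · have hQ : (a, c) ∈ Qw w := ⟨h, by rw [hwa, hwc]; exact hij⟩
      by_cases hs : (a, c) ∈ S
      · have := (hy a c h).2.1 hs; intro he; linarith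
      · have hN : ∀ p ∈ S, ¬(a ≤ p.1 ∧ p.2 ≤ c) := by
          intro p hp ⟨h1, h2⟩
          exact hs (hS.2 p hp (a, c) hQ ⟨h1, h2⟩)
        have := (hy a c h).2.2 hN; intro he; linarith
    · rw [← hwa, ← hwc, h] at hij; exact absurd hij (lt_irrefl _)
    · have := (hy c a h).1; intro he; linarith
  · ext p
    simp only [Sfun, Set.mem_setOf_eq, Equiv.symm_apply_apply]
    constructor
    · rintro ⟨hpQ, hlt⟩
      by_contra hs
      have hN : ∀ q ∈ S, ¬(p.1 ≤ q.1 ∧ q.2 ≤ p.2) := by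
        intro q hq ⟨h1, h2⟩
        exact hs (hS.2 q hq p hpQ ⟨h1, h2⟩)
      have := (hy p.1 p.2 hpQ.1).2.2 hN
      linarith
    · intro hs
      exact ⟨hS.1 hs, (hy p.1 p.2 (hS.1 hs).1).2.1 hs⟩

-- topological part
theorem clopen_fiber (x : ↥(coneShiA n w)) :
    IsClopen {z : ↥(coneShiA n w) | Sfun w z.val = Sfun w x.val} := by
  classical
  have hd : ∀ p : Fin n × Fin n, Continuous fun z : ↥(coneShiA n w) => z.val (w p.1) - z.val (w p.2) := by
    intro p
    exact ((continuous_apply (w p.1)).comp continuous_subtype_val).sub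
      ((continuous_apply (w p.2)).comp continuous_subtype_val)
  constructor
  · -- closed: complement is open
    rw [← isOpen_compl_iff]
    have : {z : ↥(coneShiA n w) | Sfun w z.val = Sfun w x.val}ᶜ =
        ⋃ p : Fin n × Fin n, {z : ↥(coneShiA n w) | p ∈ Qw w ∧
          ((p ∈ Sfun w x.val ∧ z.val (w p.1) - z.val (w p.2) < 1) ∨
           (p ∉ Sfun w x.val ∧ 1 < z.val (w p.1) - z.val (w p.2)))} := by
      ext z
      simp only [Set.mem_compl_iff, Set.mem_setOf_eq, Set.mem_iUnion]
      constructor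
      · intro hne
        by_contra hall
        apply hne
        ext p
        by_cases hp : p ∈ Qw w
        · have hd1 : z.val (w p.1) - z.val (w p.2) ≠ 1 := z.2.2 (w p.1) (w p.2) hp.2
          by_cases hsx : p ∈ Sfun w x.val
          · have hgt : 1 < z.val (w p.1) - z.val (w p.2) := by
              by_contra hle
              push_neg at hle
              exact hall ⟨p, hp, Or.inl ⟨hsx, lt_of_le_of_ne hle hd1⟩⟩
            exact ⟨fun _ => hsx, fun _ => ⟨hp, hgt⟩⟩
          · have hlt : z.val (w p.1) - z.val (w p.2) < 1 := by
              by_contra hle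
              push_neg at hle
              exact hall ⟨p, hp, Or.inr ⟨hsx, lt_of_le_of_ne hle (Ne.symm hd1)⟩⟩
            constructor
            · rintro ⟨_, h⟩; linarith
            · intro h; exact absurd h hsx
        · constructor
          · rintro ⟨hq, _⟩; exact absurd hq hp
          · rintro ⟨hq, _⟩; exact absurd hq hp
      · rintro ⟨p, hpQ, hcase⟩ heq
        rcases hcase with ⟨hsx, hlt⟩ | ⟨hsx, hlt⟩
        · have : p ∈ Sfun w z.val := heq ▸ hsx
          linarith [this.2]
        · have : p ∈ Sfun w z.val := ⟨hpQ, hlt⟩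
          exact hsx (heq ▸ this)
    rw [this]
    apply isOpen_iUnion
    intro p
    by_cases hp : p ∈ Qw w
    · by_cases hs : p ∈ Sfun w x.val
      · have : {z : ↥(coneShiA n w) | p ∈ Qw w ∧
          ((p ∈ Sfun w x.val ∧ z.val (w p.1) - z.val (w p.2) < 1) ∨
           (p ∉ Sfun w x.val ∧ 1 < z.val (w p.1) - z.val (w p.2)))} =
            {z : ↥(coneShiA n w) | z.val (w p.1) - z.val (w p.2) < 1} := by
          ext z; simp only [Set.mem_setOf_eq]; tauto
        rw [this]
        exact isOpen_lt (hd p) continuous_const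
      · have : {z : ↥(coneShiA n w) | p ∈ Qw w ∧
          ((p ∈ Sfun w x.val ∧ z.val (w p.1) - z.val (w p.2) < 1) ∨
           (p ∉ Sfun w x.val ∧ 1 < z.val (w p.1) - z.val (w p.2)))} =
            {z : ↥(coneShiA n w) | 1 < z.val (w p.1) - z.val (w p.2)} := by
          ext z; simp only [Set.mem_setOf_eq]; tauto
        rw [this]
        exact isOpen_lt continuous_const (hd p)
    · have : {z : ↥(coneShiA n w) | p ∈ Qw w ∧
          ((p ∈ Sfun w x.val ∧ z.val (w p.1) - z.val (w p.2) < 1) ∨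
           (p ∉ Sfun w x.val ∧ 1 < z.val (w p.1) - z.val (w p.2)))} = ∅ := by
        ext z; simp only [Set.mem_setOf_eq, Set.mem_empty_iff_false]; tauto
      rw [this]
      exact isOpen_empty
  · -- open
    have : {z : ↥(coneShiA n w) | Sfun w z.val = Sfun w x.val} =
        ⋂ p : Fin n × Fin n, {z : ↥(coneShiA n w) | p ∈ Qw w →
          ((p ∈ Sfun w x.val ∧ 1 < z.val (w p.1) - z.val (w p.2)) ∨
           (p ∉ Sfun w x.val ∧ z.val (w p.1) - z.val (w p.2) < 1))} := by
      ext z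
      simp only [Set.mem_setOf_eq, Set.mem_iInter]
      constructor
      · intro heq p hp
        by_cases hs : p ∈ Sfun w x.val
        · left; exact ⟨hs, (heq ▸ hs : p ∈ Sfun w z.val).2⟩
        · right
          refine ⟨hs, ?_⟩
          have hzs : p ∉ Sfun w z.val := heq ▸ hs
          exact notMem_lt w z.2 hp hzs
      · intro hall
        ext p
        by_cases hp : p ∈ Qw w
        · rcases hall p hp with ⟨hsx, hlt⟩ | ⟨hsx, hlt⟩
          · exact ⟨fun _ => hsx, fun _ => ⟨hp, hlt⟩⟩
          · constructor
            · rintro ⟨_, h⟩; linarith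
            · intro h; exact absurd h hsx
        · constructor
          · rintro ⟨hq, _⟩; exact absurd hq hp
          · intro h; exact absurd h.1 hp
    rw [this]
    apply isOpen_iInter_of_finite
    intro p
    by_cases hp : p ∈ Qw w
    · by_cases hs : p ∈ Sfun w x.val
      · have : {z : ↥(coneShiA n w) | p ∈ Qw w →
          ((p ∈ Sfun w x.val ∧ 1 < z.val (w p.1) - z.val (w p.2)) ∨
           (p ∉ Sfun w x.val ∧ z.val (w p.1) - z.val (w p.2) < 1))} =
            {z : ↥(coneShiA n w) | 1 < z.val (w p.1) - z.val (w p.2)} := by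
          ext z; simp only [Set.mem_setOf_eq]; tauto
        rw [this]
        exact isOpen_lt continuous_const (hd p)
      · have : {z : ↥(coneShiA n w) | p ∈ Qw w →
          ((p ∈ Sfun w x.val ∧ 1 < z.val (w p.1) - z.val (w p.2)) ∨
           (p ∉ Sfun w x.val ∧ z.val (w p.1) - z.val (w p.2) < 1))} =
            {z : ↥(coneShiA n w) | z.val (w p.1) - z.val (w p.2) < 1} := by
          ext z; simp only [Set.mem_setOf_eq]; tauto
        rw [this]
        exact isOpen_lt (hd p) continuous_const
    · have : {z : ↥(coneShiA n w) | p ∈ Qw w →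
          ((p ∈ Sfun w x.val ∧ 1 < z.val (w p.1) - z.val (w p.2)) ∨
           (p ∉ Sfun w x.val ∧ z.val (w p.1) - z.val (w p.2) < 1))} = Set.univ := by
        ext z; simp only [Set.mem_setOf_eq, Set.mem_univ, iff_true]; tauto
      rw [this]
      exact isOpen_univ

theorem comb_lt {a b a' b' t : ℝ} (h0 : 0 ≤ t) (h1 : t ≤ 1) (ha : a < a') (hb : b < b') :
    (1 - t) * a + t * b < (1 - t) * a' + t * b' := by
  rcases eq_or_lt_of_le h0 with rfl | h
  · simpa using ha
  · nlinarith

theorem segment_mem {x₀ x₁ : Fin n → ℝ} (h₀ : x₀ ∈ coneShiA n w) (h₁ : x₁ ∈ coneShiA n w)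
    (hS : Sfun w x₀ = Sfun w x₁) {t : ℝ} (ht0 : 0 ≤ t) (ht1 : t ≤ 1) :
    (fun k => (1 - t) * x₀ k + t * x₁ k) ∈ coneShiA n w ∧
      Sfun w (fun k => (1 - t) * x₀ k + t * x₁ k) = Sfun w x₀ := by
  set z : Fin n → ℝ := fun k => (1 - t) * x₀ k + t * x₁ k with hz
  have key : ∀ p : Fin n × Fin n, p ∈ Qw w →
      (p ∈ Sfun w x₀ → 1 < z (w p.1) - z (w p.2)) ∧
      (p ∉ Sfun w x₀ → z (w p.1) - z (w p.2) < 1) := by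
    intro p hp
    have e : z (w p.1) - z (w p.2) =
        (1 - t) * (x₀ (w p.1) - x₀ (w p.2)) + t * (x₁ (w p.1) - x₁ (w p.2)) := by
      simp only [hz]; ring
    constructor
    · intro hps
      have d0 : 1 < x₀ (w p.1) - x₀ (w p.2) := hps.2
      have d1 : 1 < x₁ (w p.1) - x₁ (w p.2) := (hS ▸ hps : p ∈ Sfun w x₁).2
      rw [e]
      calc (1:ℝ) = (1 - t) * 1 + t * 1 := by ring
        _ < _ := comb_lt ht0 ht1 d0 d1
    · intro hps
      have d0 : x₀ (w p.1) - x₀ (w p.2) < 1 := notMem_lt w h₀ hp hps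
      have d1 : x₁ (w p.1) - x₁ (w p.2) < 1 := notMem_lt w h₁ hp (hS ▸ hps)
      rw [e]
      calc _ < (1 - t) * 1 + t * 1 := comb_lt ht0 ht1 d0 d1
        _ = (1:ℝ) := by ring
  have hzc : z ∈ coneShiA n w := by
    constructor
    · intro i j hij
      have e0 := h₀.1 i j hij
      have e1 := h₁.1 i j hij
      exact comb_lt ht0 ht1 e0 e1
    · intro i j hij
      set a := w.symm i with ha
      set c := w.symm j with hc
      have hwa : w a = i := w.apply_symm_apply i
      have hwc : w c = j := w.apply_symm_apply j
      rcases lt_trichotomy a c with h | h | h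
      · have hQ : (a, c) ∈ Qw w := ⟨h, by rw [hwa, hwc]; exact hij⟩
        have := key (a, c) hQ
        rw [hwa, hwc] at this
        by_cases hs : (a, c) ∈ Sfun w x₀
        · have := this.1 hs; intro he; rw [he] at this; linarith
        · have := this.2 hs; intro he; rw [he] at this; linarith
      · rw [← hwa, ← hwc, h] at hij; exact absurd hij (lt_irrefl _)
      · have e0 := h₀.1 c a h
        have e1 := h₁.1 c a h
        rw [hwa, hwc] at e0 e1
        have : z i - z j < 0 := by
          have := comb_lt ht0 ht1 e0 e1
          simp only [hz]; linarith
        intro he; rw [he] at this; linarith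
  refine ⟨hzc, ?_⟩
  ext p
  by_cases hp : p ∈ Qw w
  · constructor
    · rintro ⟨_, hlt⟩
      by_contra hs
      have := (key p hp).2 hs
      linarith
    · intro hs
      exact ⟨hp, (key p hp).1 hs⟩
  · constructor
    · rintro ⟨hq, _⟩; exact absurd hq hp
    · rintro h; exact absurd h.1 hp
  
theorem same_component {x y : ↥(coneShiA n w)} (h : Sfun w x.val = Sfun w y.val) :
    connectedComponent x = connectedComponent y := by
  set proj : ℝ → ℝ := fun t => max 0 (min 1 t) with hproj
  have hp0 : ∀ t, 0 ≤ proj t := fun t => le_max_left _ _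
  have hp1 : ∀ t, proj t ≤ 1 := fun t => max_le zero_le_one (min_le_left _ _)
  set g : ℝ → ↥(coneShiA n w) := fun t =>
    ⟨fun k => (1 - proj t) * x.val k + proj t * y.val k,
      (segment_mem w x.2 y.2 h (hp0 t) (hp1 t)).1⟩ with hg
  have hpc : Continuous proj := continuous_const.max (continuous_const.min continuous_id)
  have hcont : Continuous g := by
    apply Continuous.subtype_mk
    apply continuous_pi
    intro k
    exact ((continuous_const.sub hpc).mul continuous_const).add (hpc.mul continuous_const)
  have hgx : g 0 = x := by
    have hp : proj 0 = 0 := by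
      simp [hproj]
    apply Subtype.ext
    funext k
    show (1 - proj 0) * x.val k + proj 0 * y.val k = x.val k
    rw [hp]; ring
  have hgy : g 1 = y := by
    have hp : proj 1 = 1 := by
      simp [hproj]
    apply Subtype.ext
    funext k
    show (1 - proj 1) * x.val k + proj 1 * y.val k = y.val k
    rw [hp]; ring
  have hK : IsPreconnected (g '' Set.univ) := isPreconnected_univ.image g hcont.continuousOn
  have hxK : x ∈ g '' Set.univ := ⟨0, trivial, hgx⟩
  have hyK : y ∈ g '' Set.univ := ⟨1, trivial, hgy⟩
  exact connectedComponent_eq (hK.subset_connectedComponent hxK hyK)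
end ShiAux

open ShiAux in
/-- The number of connected components of the set of points in the cone `wC^A`
avoiding the hyperplanes `xᵢ - xⱼ = 1` equals the number of antichains of `Q_w`. -/
theorem card_components_coneShiA_eq_jQw (n : ℕ) (hn : 1 ≤ n) (w : Equiv.Perm (Fin n)) :
    Nat.card (ConnectedComponents ↥(coneShiA n w)) = jQw n w := by
  classical
  have hreal : ∀ S : {S : Set (Fin n × Fin n) // IsUpSet w S},
      ∃ x : ↥(coneShiA n w), Sfun w x.val = S.val := by
    intro S
    obtain ⟨y, hy⟩ := exists_phi w S.val S.prop n
    obtain ⟨x, hx, hSx⟩ := realize w S.val S.prop y (fun a c h => hy a c h c.isLt)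
    exact ⟨⟨x, hx⟩, hSx⟩
  choose pt hpt using hreal
  have hfiber : ∀ x y : ↥(coneShiA n w), connectedComponent x = connectedComponent y →
      Sfun w x.val = Sfun w y.val := by
    intro x y hxy
    have hclopen := clopen_fiber w y
    have hymem : y ∈ {z : ↥(coneShiA n w) | Sfun w z.val = Sfun w y.val} := rfl
    have hsub := hclopen.connectedComponent_subset hymem
    have hx : x ∈ connectedComponent y := by
      rw [← hxy]; exact mem_connectedComponent
    exact hsub hx
  have hbij : Function.Bijective
      (fun S : {S : Set (Fin n × Fin n) // IsUpSet w S} =>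
        ConnectedComponents.mk (pt S)) := by
    constructor
    · intro S T hST
      have hcc := ConnectedComponents.coe_eq_coe.mp hST
      have h2 := hfiber _ _ hcc
      rw [hpt S, hpt T] at h2
      exact Subtype.ext h2
    · intro c
      obtain ⟨x, rfl⟩ := ConnectedComponents.surjective_coe c
      refine ⟨⟨Sfun w x.val, isUpSet_Sfun w x.2⟩, ?_⟩
      apply ConnectedComponents.coe_eq_coe.mpr
      exact same_component w (by rw [hpt])
  rw [← Nat.card_eq_of_bijective _ hbij]
  unfold jQw
  exact (Nat.card_congr (antichainEquivUpSet w)).symm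
end

section
/- For every integer n ≥ 1 and every signed permutation w of [±n], the number of connected components of the open set {x ∈ ℝ^n : x_{w(-n)} > x_{w(-n+1)} > ⋯ > x_{w(-1)} > x_{w(1)} > ⋯ > x_{w(n)} (where x_{-i} := -x_i), and x_i − x_j ≠ 1, x_i + x_j ≠ 1 for all 1 ≤ i < j ≤ n, and 2x_k ≠ 1 for all 1 ≤ k ≤ n} equals j(Q^C_w), the number of symmetric antichains of the poset Q^C_w. -/
/-!
Write `z_i = x_{w(i)}`. On the cone `z` is odd and strictly decreasing on `[±n]`, and the
hyperplanes of the arrangement meeting the cone are exactly the `z_i - z_j = 1` with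
`(i, j) ∈ Q^C_w`. The pattern of a point, the set of `(i, j) ∈ Q^C_w` with `z_i - z_j > 1`,
is a symmetric filter of `Q^C_w`. It is constant on components, since each side of a
hyperplane is clopen in the cone, and the points with a given pattern form a convex set, so
patterns classify components. Every symmetric filter occurs: the values `z_{-k} = -z_k` are
chosen for `k = 1, …, n` in turn, each in an interval that the upward closure of the filter
keeps nonempty. Finally, symmetric filters correspond to symmetric antichains through their
minimal elements.
-/

/-- The set `[±n] = {-n, …, -1, 1, …, n}` inside `ℤ`. -/
def pmSet (n : ℕ) : Set ℤ :=
  {i | i ≠ 0 ∧ |i| ≤ (n : ℤ)}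

/-- `w : ℤ → ℤ` encodes a signed permutation of `[±n]`: it restricts to a bijection of
`[±n]`, satisfies `w(-i) = -w(i)`, and (as a normalization) fixes everything outside
`[±n]`. -/
def IsSignedPerm (n : ℕ) (w : ℤ → ℤ) : Prop :=
  Set.BijOn w (pmSet n) (pmSet n) ∧ (∀ i : ℤ, w (-i) = -w i) ∧
    ∀ i ∉ pmSet n, w i = i

/-- `(i,j)` is an element of the poset `Q^C_w`. -/
def QCmem (n : ℕ) (w : ℤ → ℤ) (p : ℤ × ℤ) : Prop :=
  p.1 ∈ pmSet n ∧ p.2 ∈ pmSet n ∧ p.1 < p.2 ∧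
    ((0 < w p.1 ∧ w p.1 ≤ |w p.2|) ∨ (0 < w (-p.2) ∧ w (-p.2) ≤ |w (-p.1)|))

/-- The partial order of `Q^C_w`: `(i,j) ≤ (r,s)` iff `r ≤ i` and `j ≤ s`. -/
def QCle (p q : ℤ × ℤ) : Prop :=
  q.1 ≤ p.1 ∧ p.2 ≤ q.2

/-- `A` is a symmetric antichain of `Q^C_w`: a set of pairwise incomparable elements
of `Q^C_w` closed under the involution `σ : (i,j) ↦ (-j,-i)`. -/
def IsSymAntichainQC (n : ℕ) (w : ℤ → ℤ) (A : Set (ℤ × ℤ)) : Prop :=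
  (∀ p ∈ A, QCmem n w p) ∧
    (∀ p ∈ A, ∀ q ∈ A, p ≠ q → ¬QCle p q ∧ ¬QCle q p) ∧
    ∀ p ∈ A, ((-p.2, -p.1) : ℤ × ℤ) ∈ A

/-- `j(Q^C_w)`: the number of symmetric antichains of `Q^C_w`. -/
noncomputable def jQC (n : ℕ) (w : ℤ → ℤ) : ℕ :=
  Nat.card {A : Set (ℤ × ℤ) // IsSymAntichainQC n w A}

/-- The coordinate functions `x_m` for `m ∈ [±n]`, with `x_{-i} = -x_i`. -/
def signedCoord (n : ℕ) (x : Fin n → ℝ) (m : ℤ) : ℝ :=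
  if h : 0 < m ∧ m ≤ (n : ℤ) then x ⟨(m - 1).toNat, by omega⟩
  else if h' : 0 < -m ∧ -m ≤ (n : ℤ) then -x ⟨(-m - 1).toNat, by omega⟩
  else 0

/-- The part of the complement of the type `C_n` Shi arrangement inside the cone
`wC^{BC}`: points with `x_{w(-n)} > ⋯ > x_{w(-1)} > x_{w(1)} > ⋯ > x_{w(n)}` and
avoiding the affine hyperplanes `xᵢ - xⱼ = 1`, `xᵢ + xⱼ = 1` (`i < j`), `2xₖ = 1`. -/
def coneShiC (n : ℕ) (w : ℤ → ℤ) : Set (Fin n → ℝ) :=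
  {x | (∀ i j : ℤ, i ∈ pmSet n → j ∈ pmSet n → i < j →
          signedCoord n x (w j) < signedCoord n x (w i)) ∧
       (∀ i j : Fin n, i < j → x i - x j ≠ 1 ∧ x i + x j ≠ 1) ∧
       ∀ k : Fin n, 2 * x k ≠ 1}

namespace ShiC

lemma exists_between_of_finite {α : Type*} [LinearOrder α] [DenselyOrdered α] [NoMinOrder α]
    [NoMaxOrder α] [Nonempty α] {s t : Set α} (hs : s.Finite) (ht : t.Finite)
    (hst : ∀ x ∈ s, ∀ y ∈ t, x < y) : ∃ v, (∀ x ∈ s, x < v) ∧ ∀ y ∈ t, v < y := by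
  rcases t.eq_empty_or_nonempty with rfl | ht'
  · obtain ⟨M, hM⟩ := hs.bddAbove
    obtain ⟨v, hv⟩ := exists_gt M
    exact ⟨v, fun x hx => (hM hx).trans_lt hv, by simp⟩
  rcases s.eq_empty_or_nonempty with rfl | hs'
  · obtain ⟨m, hm⟩ := ht.bddBelow
    obtain ⟨v, hv⟩ := exists_lt m
    exact ⟨v, by simp, fun y hy => hv.trans_le (hm hy)⟩
  exact hs.exists_between hs' ht ht' hst

lemma isLinearMap_apply_sub_apply {ι : Type*} (i j : ι) :
    IsLinearMap ℝ fun f : ι → ℝ => f i - f j :=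
  (LinearMap.proj (R := ℝ) (φ := fun _ : ι => ℝ) i - LinearMap.proj j).isLinear

lemma convex_setOf_strictAntiOn {ι : Type*} [Preorder ι] (s : Set ι) :
    Convex ℝ {f : ι → ℝ | StrictAntiOn f s} := by
  simp only [StrictAntiOn, Set.ofPred_forall]
  refine convex_iInter fun i => convex_iInter fun _ => convex_iInter fun j =>
    convex_iInter fun _ => convex_iInter fun _ => ?_
  simpa only [sub_neg] using convex_halfSpace_lt (isLinearMap_apply_sub_apply j i) 0

lemma card_connectedComponents_eq_card_range {X β : Type*} [TopologicalSpace X] (f : X → β)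
    (hf : ∀ x y, connectedComponent x = connectedComponent y ↔ f x = f y) :
    Nat.card (ConnectedComponents X) = Nat.card (Set.range f) :=
  Nat.card_congr ((Quotient.congrRight hf).trans (Setoid.quotientKerEquivRange f))

lemma connectedComponent_eq_of_isPreconnected {X : Type*} [TopologicalSpace X] {F s : Set X}
    (hs : IsPreconnected s) (hsF : s ⊆ F) {a b : F} (ha : (a : X) ∈ s) (hb : (b : X) ∈ s) :
    connectedComponent a = connectedComponent b := by
  obtain ⟨b', hb', hbb'⟩ := connectedComponentIn_eq_image a.2 ▸
    hs.subset_connectedComponentIn ha hsF hb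
  rw [Subtype.ext hbb'] at hb'
  exact connectedComponent_eq hb'

section pmSet

variable {k : ℕ} {i : ℤ}

lemma mem_pmSet : i ∈ pmSet k ↔ i ≠ 0 ∧ -(k : ℤ) ≤ i ∧ i ≤ k := by
  simp [pmSet, abs_le]

lemma neg_mem_pmSet (h : i ∈ pmSet k) : -i ∈ pmSet k := by
  rw [mem_pmSet] at h ⊢; omega

lemma pmSet_zero : pmSet 0 = ∅ :=
  Set.eq_empty_of_forall_notMem fun i hi => by rw [mem_pmSet] at hi; omega

lemma pmSet_finite (k : ℕ) : (pmSet k).Finite :=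
  (Set.finite_Icc (-(k : ℤ)) k).subset fun i hi => by rw [mem_pmSet] at hi; exact ⟨hi.2.1, hi.2.2⟩

lemma mem_Icc_of_mem_pmSet_succ (hi : i ∈ pmSet (k + 1)) :
    i ∈ Set.Icc (-((k : ℤ) + 1)) ((k : ℤ) + 1) := by
  rw [mem_pmSet] at hi; push_cast at hi; exact ⟨hi.2.1, hi.2.2⟩

lemma mem_pmSet_of_mem_pmSet_succ (hi : i ∈ pmSet (k + 1)) (h₁ : -((k : ℤ) + 1) < i)
    (h₂ : i < (k : ℤ) + 1) : i ∈ pmSet k := by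
  rw [mem_pmSet] at hi ⊢; push_cast at hi; omega

lemma natCast_add_one_mem_pmSet (a : Fin k) : (a : ℤ) + 1 ∈ pmSet k := by
  rw [mem_pmSet]; omega

lemma exists_fin_of_mem_pmSet (hi : i ∈ pmSet k) :
    ∃ a : Fin k, i = (a : ℤ) + 1 ∨ i = -((a : ℤ) + 1) := by
  rw [mem_pmSet] at hi
  rcases hi.1.lt_or_gt with hneg | hpos
  · exact ⟨⟨(-i - 1).toNat, by omega⟩, Or.inr (by simp only; omega)⟩
  · exact ⟨⟨(i - 1).toNat, by omega⟩, Or.inl (by simp only; omega)⟩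

end pmSet

/-- The involution `σ : (i, j) ↦ (-j, -i)`. -/
def negSwap (p : ℤ × ℤ) : ℤ × ℤ := (-p.2, -p.1)

@[simp] lemma negSwap_negSwap (p : ℤ × ℤ) : negSwap (negSwap p) = p := by simp [negSwap]

lemma QCle.refl (p : ℤ × ℤ) : QCle p p := ⟨le_rfl, le_rfl⟩

lemma QCle.trans {p q r : ℤ × ℤ} (hpq : QCle p q) (hqr : QCle q r) : QCle p r :=
  ⟨hqr.1.trans hpq.1, hpq.2.trans hqr.2⟩

lemma QCle.antisymm {p q : ℤ × ℤ} (hpq : QCle p q) (hqp : QCle q p) : p = q :=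
  Prod.ext (le_antisymm hqp.1 hpq.1) (le_antisymm hpq.2 hqp.2)

lemma QCle.negSwap {p q : ℤ × ℤ} (h : QCle p q) : QCle (negSwap p) (negSwap q) :=
  ⟨neg_le_neg h.2, neg_le_neg h.1⟩

lemma QCmem.negSwap {n : ℕ} {w : ℤ → ℤ} {p : ℤ × ℤ} (h : QCmem n w p) :
    QCmem n w (negSwap p) := by
  obtain ⟨h1, h2, h12, h⟩ := h
  refine ⟨neg_mem_pmSet h2, neg_mem_pmSet h1, neg_lt_neg h12, ?_⟩
  simpa [ShiC.negSwap, or_comm] using h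

def qcMinimals (F : Set (ℤ × ℤ)) : Set (ℤ × ℤ) :=
  {p ∈ F | ∀ q ∈ F, QCle q p → q = p}

def qcUpperClosure (A : Set (ℤ × ℤ)) : Set (ℤ × ℤ) :=
  {q | ∃ a ∈ A, QCle a q}

lemma exists_mem_qcMinimals_qcle {F : Set (ℤ × ℤ)} (hF : ∀ p ∈ F, p.1 < p.2) {p : ℤ × ℤ}
    (hp : p ∈ F) : ∃ a ∈ qcMinimals F, QCle a p := by
  induction h : (p.2 - p.1).toNat using Nat.strong_induction_on generalizing p with
  | _ k ih =>
    by_cases hmin : p ∈ qcMinimals F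
    · exact ⟨p, hmin, QCle.refl p⟩
    obtain ⟨q, hq, hqp, hne⟩ : ∃ q ∈ F, QCle q p ∧ q ≠ p := by
      simpa [qcMinimals, hp] using hmin
    have hlt : (q.2 - q.1).toNat < k := by
      rw [Ne, Prod.ext_iff] at hne
      have := hF q hq; have := hqp.1; have := hqp.2
      omega
    obtain ⟨a, ha, haq⟩ := ih _ hlt hq rfl
    exact ⟨a, ha, QCle.trans haq hqp⟩

def IsSymFilter (n : ℕ) (w : ℤ → ℤ) (F : Set (ℤ × ℤ)) : Prop :=
  (∀ p ∈ F, QCmem n w p) ∧ (∀ p ∈ F, ∀ q, QCmem n w q → QCle p q → q ∈ F) ∧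
    ∀ p ∈ F, negSwap p ∈ F

section filter

variable {n : ℕ} {w : ℤ → ℤ}

lemma isSymAntichainQC_qcMinimals {F : Set (ℤ × ℤ)} (hF : IsSymFilter n w F) :
    IsSymAntichainQC n w (qcMinimals F) := by
  obtain ⟨hQ, -, hsymm⟩ := hF
  refine ⟨fun p hp => hQ p hp.1, fun p hp q hq hne => ⟨fun h => hne (hq.2 p hp.1 h),
    fun h => hne (hp.2 q hq.1 h).symm⟩, fun p hp => ?_⟩
  change negSwap p ∈ qcMinimals F
  refine ⟨hsymm p hp.1, fun q hq hqp => ?_⟩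
  have := hp.2 _ (hsymm q hq) (by simpa using QCle.negSwap hqp)
  rw [← this, negSwap_negSwap]

lemma isSymFilter_inter_qcUpperClosure {A : Set (ℤ × ℤ)} (hA : IsSymAntichainQC n w A) :
    IsSymFilter n w ({q | QCmem n w q} ∩ qcUpperClosure A) := by
  obtain ⟨-, -, hsymm⟩ := hA
  refine ⟨fun p hp => hp.1, fun p ⟨_, a, ha, hap⟩ q hq hpq => ⟨hq, a, ha, QCle.trans hap hpq⟩,
    fun p ⟨hp, a, ha, hap⟩ => ⟨QCmem.negSwap hp, negSwap a, hsymm a ha, QCle.negSwap hap⟩⟩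

lemma inter_qcUpperClosure_qcMinimals {F : Set (ℤ × ℤ)} (hF : IsSymFilter n w F) :
    {q | QCmem n w q} ∩ qcUpperClosure (qcMinimals F) = F := by
  ext p
  refine ⟨fun ⟨hp, a, ha, hap⟩ => hF.2.1 a ha.1 p hp hap, fun hp => ⟨hF.1 p hp, ?_⟩⟩
  exact exists_mem_qcMinimals_qcle (fun q hq => (hF.1 q hq).2.2.1) hp

lemma qcMinimals_inter_qcUpperClosure {A : Set (ℤ × ℤ)} (hA : IsSymAntichainQC n w A) :
    qcMinimals ({q | QCmem n w q} ∩ qcUpperClosure A) = A := by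
  obtain ⟨hQ, hanti, -⟩ := hA
  have hsub : A ⊆ {q | QCmem n w q} ∩ qcUpperClosure A :=
    fun a ha => ⟨hQ a ha, a, ha, QCle.refl a⟩
  ext p
  constructor
  · rintro ⟨⟨-, a, ha, hap⟩, hmin⟩
    rwa [← hmin a (hsub ha) hap]
  · refine fun hp => ⟨hsub hp, ?_⟩
    rintro q ⟨-, a, ha, haq⟩ hqp
    obtain rfl : a = p := by
      by_contra hne
      exact (hanti a ha p hp hne).1 (QCle.trans haq hqp)
    exact QCle.antisymm hqp haq

end filter

def symFilterEquivSymAntichain (n : ℕ) (w : ℤ → ℤ) :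
    {F : Set (ℤ × ℤ) // IsSymFilter n w F} ≃ {A : Set (ℤ × ℤ) // IsSymAntichainQC n w A} where
  toFun F := ⟨qcMinimals F.1, isSymAntichainQC_qcMinimals F.2⟩
  invFun A := ⟨{q | QCmem n w q} ∩ qcUpperClosure A.1, isSymFilter_inter_qcUpperClosure A.2⟩
  left_inv F := Subtype.ext (inter_qcUpperClosure_qcMinimals F.2)
  right_inv A := Subtype.ext (qcMinimals_inter_qcUpperClosure A.2)

def SeparatesPair (U : Set (ℤ × ℤ)) (z : ℤ → ℝ) (p : ℤ × ℤ) : Prop :=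
  (p ∈ U → 1 < z p.1 - z p.2) ∧ (p ∉ U → z p.1 - z p.2 < 1)

lemma SeparatesPair.sub_ne_one {U : Set (ℤ × ℤ)} {z : ℤ → ℝ} {p : ℤ × ℤ}
    (h : SeparatesPair U z p) : z p.1 - z p.2 ≠ 1 := by
  by_cases hp : p ∈ U
  · exact (h.1 hp).ne'
  · exact (h.2 hp).ne

lemma convex_setOf_separatesPair (P : Set (ℤ × ℤ)) (p : ℤ × ℤ) :
    Convex ℝ {z : ℤ → ℝ | SeparatesPair P z p} := by
  by_cases hp : p ∈ P
  · simpa [SeparatesPair, hp] using convex_halfSpace_gt (isLinearMap_apply_sub_apply p.1 p.2) 1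
  · simpa [SeparatesPair, hp] using convex_halfSpace_lt (isLinearMap_apply_sub_apply p.1 p.2) 1

def IsSymUpperSet (U : Set (ℤ × ℤ)) : Prop :=
  (∀ p ∈ U, ∀ q, QCle p q → q ∈ U) ∧ ∀ p ∈ U, negSwap p ∈ U

lemma IsSymUpperSet.negSwap_mem_iff {U : Set (ℤ × ℤ)} (hU : IsSymUpperSet U) {p : ℤ × ℤ} :
    negSwap p ∈ U ↔ p ∈ U :=
  ⟨fun h => by simpa using hU.2 _ h, hU.2 p⟩

lemma separatesPair_negSwap_iff {U : Set (ℤ × ℤ)} (hU : IsSymUpperSet U) {z : ℤ → ℝ}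
    (hz : Function.Odd z) (p : ℤ × ℤ) : SeparatesPair U z (negSwap p) ↔ SeparatesPair U z p := by
  rw [SeparatesPair, SeparatesPair, hU.negSwap_mem_iff]
  simp only [negSwap, hz _, sub_neg_eq_add, neg_add_eq_sub]

structure Separates (U : Set (ℤ × ℤ)) (k : ℕ) (z : ℤ → ℝ) : Prop where
  odd : Function.Odd z
  strictAntiOn : StrictAntiOn z (pmSet k)
  separatesPair : ∀ i ∈ pmSet k, ∀ j ∈ pmSet k, i < j → SeparatesPair U z (i, j)

/-- The value `v` that `extend` puts at the new position `-(k + 1)` must lie above these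
and below `valueUpperBounds`. -/
def valueLowerBounds (U : Set (ℤ × ℤ)) (k : ℕ) (z : ℤ → ℝ) : Set ℝ :=
  {x | x = 0 ∨ (∃ a ∈ pmSet k, x = z a) ∨
    (∃ a ∈ pmSet k, (-((k : ℤ) + 1), a) ∈ U ∧ x = 1 + z a) ∨
    ((-((k : ℤ) + 1), (k : ℤ) + 1) ∈ U ∧ x = 1 / 2)}

def valueUpperBounds (U : Set (ℤ × ℤ)) (k : ℕ) (z : ℤ → ℝ) : Set ℝ :=
  {y | (∃ b ∈ pmSet k, (-((k : ℤ) + 1), b) ∉ U ∧ y = 1 + z b) ∨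
    ((-((k : ℤ) + 1), (k : ℤ) + 1) ∉ U ∧ y = 1 / 2)}

lemma valueLowerBounds_finite (U : Set (ℤ × ℤ)) (k : ℕ) (z : ℤ → ℝ) :
    (valueLowerBounds U k z).Finite := by
  have hfin := pmSet_finite k
  refine ((((Set.finite_singleton 0).union (hfin.image z)).union
    (hfin.image (1 + z ·))).union (Set.finite_singleton (1 / 2))).subset ?_
  rintro x (rfl | ⟨a, ha, rfl⟩ | ⟨a, ha, -, rfl⟩ | ⟨-, rfl⟩)
  exacts [by simp, Or.inl (Or.inl (Or.inr ⟨a, ha, rfl⟩)), Or.inl (Or.inr ⟨a, ha, rfl⟩), by simp]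

lemma valueUpperBounds_finite (U : Set (ℤ × ℤ)) (k : ℕ) (z : ℤ → ℝ) :
    (valueUpperBounds U k z).Finite := by
  refine (((pmSet_finite k).image (1 + z ·)).union (Set.finite_singleton (1 / 2))).subset ?_
  rintro y (⟨b, hb, -, rfl⟩ | ⟨-, rfl⟩)
  exacts [Or.inl ⟨b, hb, rfl⟩, by simp]

namespace Separates

variable {U : Set (ℤ × ℤ)} {k : ℕ} {z : ℤ → ℝ}

lemma congr (hz : Separates U k z) {z' : ℤ → ℝ} (hodd : Function.Odd z')
    (heq : Set.EqOn z z' (pmSet k)) : Separates U k z' where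
  odd := hodd
  strictAntiOn := hz.strictAntiOn.congr heq
  separatesPair i hi j hj hij := by
    simpa only [SeparatesPair, heq hi, heq hj] using hz.separatesPair i hi j hj hij

lemma sub_lt_one (hU : IsSymUpperSet U) (hz : Separates U k z) {a b c : ℤ} (ha : a ∈ pmSet k)
    (hb : b ∈ pmSet k) (hcb : (c, b) ∉ U) (hca : c ≤ a) (hab : a ≤ b) : z a - z b < 1 := by
  rcases hab.eq_or_lt with rfl | hab
  · simp
  exact (hz.separatesPair a ha b hb hab).2 fun h => hcb (hU.1 _ h _ ⟨hca, le_rfl⟩)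

lemma neg_one_lt_two_mul (hU : IsSymUpperSet U) (hz : Separates U k z) {b c : ℤ}
    (hb : b ∈ pmSet k) (hcb : (c, b) ∉ U) (hc : c ≤ -b) : -1 < 2 * z b := by
  rcases (mem_pmSet.1 hb).1.lt_or_gt with hneg | hpos
  · have := hz.strictAntiOn hb (neg_mem_pmSet hb) (by omega)
    rw [hz.odd] at this
    linarith
  · have := hz.sub_lt_one hU (neg_mem_pmSet hb) hb hcb hc (by omega)
    rw [hz.odd] at this
    linarith

lemma valueLowerBounds_lt_valueUpperBounds (hU : IsSymUpperSet U) (hz : Separates U k z) :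
    ∀ x ∈ valueLowerBounds U k z, ∀ y ∈ valueUpperBounds U k z, x < y := by
  set t : ℤ := -((k : ℤ) + 1)
  have ht : ∀ a ∈ pmSet k, t < a ∧ a < -t := fun a ha => by rw [mem_pmSet] at ha; omega
  rintro x hx y (⟨b, hb, hbU, rfl⟩ | ⟨hmU, rfl⟩)
  · have hb' := hz.neg_one_lt_two_mul hU hb hbU
      (by linarith [ht b hb, ht (-b) (neg_mem_pmSet hb)])
    rcases hx with rfl | ⟨a, ha, rfl⟩ | ⟨a, ha, haU, rfl⟩ | ⟨-, rfl⟩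
    · linarith
    · rcases le_or_gt a b with hab | hba
      · linarith [hz.sub_lt_one hU ha hb hbU (ht a ha).1.le hab]
      · linarith [hz.strictAntiOn hb ha hba]
    · have hba : b < a := by
        by_contra! hab
        exact hbU (hU.1 _ haU _ ⟨le_rfl, hab⟩)
      linarith [hz.strictAntiOn hb ha hba]
    · linarith
  · rcases hx with rfl | ⟨a, ha, rfl⟩ | ⟨a, ha, haU, -⟩ | ⟨hm, -⟩
    · norm_num
    · have hna := neg_mem_pmSet ha
      have := hz.neg_one_lt_two_mul hU hna (c := t)
        (fun h => hmU (hU.1 _ h _ ⟨le_rfl, (ht _ hna).2.le⟩))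
        (by rw [neg_neg]; exact (ht a ha).1.le)
      rw [hz.odd] at this
      linarith
    · exact absurd (hU.1 _ haU (t, -t) ⟨le_rfl, (ht a ha).2.le⟩) hmU
    · exact absurd hm hmU

lemma exists_value (hU : IsSymUpperSet U) (hz : Separates U k z) :
    ∃ v : ℝ, 0 < v ∧ (∀ a ∈ pmSet k, z a < v) ∧
      (∀ a ∈ pmSet k, ((-((k : ℤ) + 1), a) ∈ U → 1 + z a < v) ∧
        ((-((k : ℤ) + 1), a) ∉ U → v < 1 + z a)) ∧
      ((-((k : ℤ) + 1), (k : ℤ) + 1) ∈ U → 1 / 2 < v) ∧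
      ((-((k : ℤ) + 1), (k : ℤ) + 1) ∉ U → v < 1 / 2) := by
  obtain ⟨v, hlo, hup⟩ := exists_between_of_finite (valueLowerBounds_finite U k z)
    (valueUpperBounds_finite U k z) (hz.valueLowerBounds_lt_valueUpperBounds hU)
  exact ⟨v, hlo 0 (Or.inl rfl), fun a ha => hlo _ (Or.inr (Or.inl ⟨a, ha, rfl⟩)),
    fun a ha => ⟨fun h => hlo _ (Or.inr (Or.inr (Or.inl ⟨a, ha, h, rfl⟩))),
      fun h => hup _ (Or.inl ⟨a, ha, h, rfl⟩)⟩,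
    fun h => hlo _ (Or.inr (Or.inr (Or.inr ⟨h, rfl⟩))), fun h => hup _ (Or.inr ⟨h, rfl⟩)⟩

/-- By symmetry it suffices to check the new pairs `(-(k + 1), a)`: a pair `(i, k + 1)` is
the image under `σ` of `(-(k + 1), -i)`. -/
lemma succ (hU : IsSymUpperSet U) (hz : Separates U k z)
    (hanti : ∀ a ∈ pmSet (k + 1), -((k : ℤ) + 1) < a → z a < z (-((k : ℤ) + 1)))
    (hsep : ∀ a ∈ pmSet (k + 1), -((k : ℤ) + 1) < a → SeparatesPair U z (-((k : ℤ) + 1), a)) :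
    Separates U (k + 1) z := by
  refine ⟨hz.odd, fun i hi j hj hij => ?_, fun i hi j hj hij => ?_⟩ <;>
  rcases (mem_Icc_of_mem_pmSet_succ hi).1.eq_or_lt with rfl | hi'
  · exact hanti j hj hij
  · rcases (mem_Icc_of_mem_pmSet_succ hj).2.eq_or_lt with rfl | hj'
    · have := hanti (-i) (neg_mem_pmSet hi) (by omega)
      rw [hz.odd] at this
      rw [← neg_neg ((k : ℤ) + 1), hz.odd]
      linarith
    exact hz.strictAntiOn (mem_pmSet_of_mem_pmSet_succ hi hi' (by omega))
      (mem_pmSet_of_mem_pmSet_succ hj (by omega) hj') hij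
  · exact hsep j hj hij
  · rcases (mem_Icc_of_mem_pmSet_succ hj).2.eq_or_lt with rfl | hj'
    · have := hsep (-i) (neg_mem_pmSet hi) (by omega)
      rwa [← separatesPair_negSwap_iff hU hz.odd, negSwap, neg_neg, neg_neg] at this
    exact hz.separatesPair i (mem_pmSet_of_mem_pmSet_succ hi hi' (by omega))
      j (mem_pmSet_of_mem_pmSet_succ hj (by omega) hj') hij

end Separates

def extend (z : ℤ → ℝ) (k : ℕ) (v : ℝ) : ℤ → ℝ :=
  Function.update (Function.update z (-((k : ℤ) + 1)) v) ((k : ℤ) + 1) (-v)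

section extend

variable (z : ℤ → ℝ) (k : ℕ) (v : ℝ)

lemma extend_neg_succ : extend z k v (-((k : ℤ) + 1)) = v := by
  rw [extend, Function.update_of_ne (by omega), Function.update_self]

lemma extend_succ : extend z k v ((k : ℤ) + 1) = -v := by
  rw [extend, Function.update_self]

lemma extend_of_mem {a : ℤ} (ha : a ∈ pmSet k) : extend z k v a = z a := by
  rw [mem_pmSet] at ha
  rw [extend, Function.update_of_ne (by omega), Function.update_of_ne (by omega)]

lemma odd_extend {z : ℤ → ℝ} (hz : Function.Odd z) : Function.Odd (extend z k v) := by
  intro i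
  simp only [extend, Function.update_apply]
  split_ifs <;> first | omega | simp [hz i]

end extend

lemma exists_separates (U : Set (ℤ × ℤ)) (hU : IsSymUpperSet U) (k : ℕ) :
    ∃ z, Separates U k z := by
  induction k with
  | zero => exact ⟨0, fun i => by simp, by simp [pmSet_zero, StrictAntiOn], by simp [pmSet_zero]⟩
  | succ k ih =>
    obtain ⟨z, hz⟩ := ih
    obtain ⟨v, hv0, hzv, hsep, hmid, hmid'⟩ := hz.exists_value hU
    have hz' := hz.congr (odd_extend k v hz.odd) fun a ha => (extend_of_mem z k v ha).symm
    refine ⟨extend z k v, hz'.succ hU (fun a ha hta => ?_) (fun a ha hta => ?_)⟩ <;>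
    rcases (mem_Icc_of_mem_pmSet_succ ha).2.eq_or_lt with rfl | hak
    · rw [extend_succ, extend_neg_succ]
      linarith
    · have ha' := mem_pmSet_of_mem_pmSet_succ ha hta hak
      rw [extend_neg_succ, extend_of_mem z k v ha']
      exact hzv a ha'
    · simp only [SeparatesPair, extend_neg_succ, extend_succ]
      exact ⟨fun h => by linarith [hmid h], fun h => by linarith [hmid' h]⟩
    · have ha' := mem_pmSet_of_mem_pmSet_succ ha hta hak
      simp only [SeparatesPair, extend_neg_succ, extend_of_mem z k v ha']
      exact ⟨fun h => by linarith [(hsep a ha').1 h], fun h => by linarith [(hsep a ha').2 h]⟩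

section signedCoord

variable {n : ℕ} (x : Fin n → ℝ)

lemma signedCoord_natCast_add_one (a : Fin n) : signedCoord n x ((a : ℤ) + 1) = x a := by
  rw [signedCoord, dif_pos (by omega)]
  congr
  omega

lemma signedCoord_neg (m : ℤ) : signedCoord n x (-m) = -signedCoord n x m := by
  unfold signedCoord
  split_ifs <;> first | omega | simp

lemma signedCoord_add (y : Fin n → ℝ) (m : ℤ) :
    signedCoord n (x + y) m = signedCoord n x m + signedCoord n y m := by
  unfold signedCoord
  split_ifs <;> simp only [Pi.add_apply, neg_add, add_zero]

lemma signedCoord_smul (c : ℝ) (m : ℤ) : signedCoord n (c • x) m = c * signedCoord n x m := by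
  unfold signedCoord
  split_ifs <;> simp only [Pi.smul_apply, smul_eq_mul, mul_neg, mul_zero]

/-- The hyperplanes `x_a - x_b = 1`, `x_a + x_b = 1`, `2 x_a = 1` are the `x_α - x_β = 1`
with `0 < α ≤ |β|`, `α ≠ β`: take `β = b`, `β = -b`, `β = -a` respectively. -/
lemma signedCoord_sub_ne_one_iff :
    ((∀ i j : Fin n, i < j → x i - x j ≠ 1 ∧ x i + x j ≠ 1) ∧ ∀ k : Fin n, 2 * x k ≠ 1) ↔
      ∀ α ∈ pmSet n, ∀ β ∈ pmSet n, 0 < α → α ≤ |β| → α ≠ β →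
        signedCoord n x α - signedCoord n x β ≠ 1 := by
  constructor
  · rintro ⟨hij, hk⟩ α hα β hβ hα0 hαβ hne
    obtain ⟨a, rfl | rfl⟩ := exists_fin_of_mem_pmSet hα
    swap
    · omega
    obtain ⟨b, rfl | rfl⟩ := exists_fin_of_mem_pmSet hβ
    · rw [signedCoord_natCast_add_one, signedCoord_natCast_add_one]
      rw [abs_of_pos (by omega)] at hαβ
      exact (hij a b (by rw [Fin.lt_def]; omega)).1
    · rw [signedCoord_neg, signedCoord_natCast_add_one, signedCoord_natCast_add_one,
        sub_neg_eq_add]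
      rw [abs_neg, abs_of_pos (by omega)] at hαβ
      rcases (show (a : ℕ) ≤ b by omega).eq_or_lt with hab | hab
      · rw [Fin.ext hab, ← two_mul]
        exact hk b
      · exact (hij a b hab).2
  · intro h
    have hpos := fun a : Fin n => natCast_add_one_mem_pmSet a
    refine ⟨fun i j hij => ⟨?_, ?_⟩, fun k => ?_⟩
    · simpa only [signedCoord_natCast_add_one] using
        h _ (hpos i) _ (hpos j) (by omega) (by rw [abs_of_pos (by omega)]; omega)
          (by rw [Fin.lt_def] at hij; omega)
    · simpa only [signedCoord_neg, signedCoord_natCast_add_one, sub_neg_eq_add] using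
        h _ (hpos i) _ (neg_mem_pmSet (hpos j)) (by omega)
          (by rw [abs_neg, abs_of_pos (by omega)]; omega) (by omega)
    · simpa only [signedCoord_neg, signedCoord_natCast_add_one, sub_neg_eq_add, ← two_mul] using
        h _ (hpos k) _ (neg_mem_pmSet (hpos k)) (by omega)
          (by rw [abs_neg]; exact le_abs_self _) (by omega)

end signedCoord

def wCoord (n : ℕ) (w : ℤ → ℤ) : (Fin n → ℝ) →ₗ[ℝ] ℤ → ℝ where
  toFun x i := signedCoord n x (w i)
  map_add' x y := funext fun i => signedCoord_add x y (w i)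
  map_smul' c x := funext fun i => signedCoord_smul x c (w i)

lemma wCoord_apply (n : ℕ) (w : ℤ → ℤ) (x : Fin n → ℝ) (i : ℤ) :
    wCoord n w x i = signedCoord n x (w i) := rfl

section cone

variable {n : ℕ} {w : ℤ → ℤ}

lemma odd_wCoord (hw : IsSignedPerm n w) (x : Fin n → ℝ) : Function.Odd (wCoord n w x) :=
  fun i => by simp only [wCoord_apply, hw.2.1, signedCoord_neg]

lemma signedCoord_sub_ne_one_iff_wCoord (hw : IsSignedPerm n w) {x : Fin n → ℝ}
    (hx : StrictAntiOn (wCoord n w x) (pmSet n)) :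
    (∀ α ∈ pmSet n, ∀ β ∈ pmSet n, 0 < α → α ≤ |β| → α ≠ β →
        signedCoord n x α - signedCoord n x β ≠ 1) ↔
      ∀ p, QCmem n w p → wCoord n w x p.1 - wCoord n w x p.2 ≠ 1 := by
  constructor
  · rintro h ⟨i, j⟩ ⟨hi, hj, hij, ⟨h0, hle⟩ | ⟨h0, hle⟩⟩
    · exact h _ (hw.1.mapsTo hi) _ (hw.1.mapsTo hj) h0 hle fun e => hij.ne (hw.1.injOn hi hj e)
    · have := h _ (hw.1.mapsTo (neg_mem_pmSet hj)) _ (hw.1.mapsTo (neg_mem_pmSet hi)) h0 hle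
        fun e => hij.ne (neg_inj.mp (hw.1.injOn (neg_mem_pmSet hj) (neg_mem_pmSet hi) e)).symm
      simp only [← wCoord_apply, odd_wCoord hw x _] at this
      simpa only [neg_sub_neg] using this
  · intro h α hα β hβ h0 hle hne
    obtain ⟨i, hi, rfl⟩ := hw.1.surjOn hα
    obtain ⟨j, hj, rfl⟩ := hw.1.surjOn hβ
    rcases lt_trichotomy i j with hij | rfl | hji
    · exact h (i, j) ⟨hi, hj, hij, Or.inl ⟨h0, hle⟩⟩
    · exact absurd rfl hne
    · have := hx hj hi hji
      simp only [wCoord_apply] at this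
      linarith

lemma mem_coneShiC_iff (hw : IsSignedPerm n w) {x : Fin n → ℝ} :
    x ∈ coneShiC n w ↔ StrictAntiOn (wCoord n w x) (pmSet n) ∧
      ∀ p, QCmem n w p → wCoord n w x p.1 - wCoord n w x p.2 ≠ 1 := by
  constructor
  · rintro ⟨hanti, hne⟩
    have hanti' : StrictAntiOn (wCoord n w x) (pmSet n) := fun i hi j hj hij => hanti i j hi hj hij
    exact ⟨hanti', (signedCoord_sub_ne_one_iff_wCoord hw hanti').1
      ((signedCoord_sub_ne_one_iff x).1 hne)⟩
  · rintro ⟨hanti, hne⟩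
    exact ⟨fun i j hi hj hij => hanti hi hj hij, (signedCoord_sub_ne_one_iff x).2
      ((signedCoord_sub_ne_one_iff_wCoord hw hanti).2 hne)⟩

def shiPattern (n : ℕ) (w : ℤ → ℤ) (x : Fin n → ℝ) : Set (ℤ × ℤ) :=
  {p | QCmem n w p ∧ 1 < wCoord n w x p.1 - wCoord n w x p.2}

def Realizes (n : ℕ) (w : ℤ → ℤ) (P : Set (ℤ × ℤ)) (z : ℤ → ℝ) : Prop :=
  StrictAntiOn z (pmSet n) ∧ ∀ p, QCmem n w p → SeparatesPair P z p

lemma convex_setOf_realizes (P : Set (ℤ × ℤ)) : Convex ℝ {z | Realizes n w P z} := by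
  have : {z | Realizes n w P z} = {z : ℤ → ℝ | StrictAntiOn z (pmSet n)} ∩
      ⋂ p, ⋂ (_ : QCmem n w p), {z | SeparatesPair P z p} := by
    ext
    simp [Realizes]
  rw [this]
  exact (convex_setOf_strictAntiOn _).inter
    (convex_iInter fun p => convex_iInter fun _ => convex_setOf_separatesPair P p)

lemma realizes_wCoord_iff (hw : IsSignedPerm n w) {P : Set (ℤ × ℤ)} (hP : ∀ p ∈ P, QCmem n w p)
    {x : Fin n → ℝ} :
    Realizes n w P (wCoord n w x) ↔ x ∈ coneShiC n w ∧ shiPattern n w x = P := by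
  rw [mem_coneShiC_iff hw]
  constructor
  · rintro ⟨hanti, hsep⟩
    refine ⟨⟨hanti, fun p hp => (hsep p hp).sub_ne_one⟩, Set.ext fun p => ⟨?_, ?_⟩⟩
    · rintro ⟨hp, hgt⟩
      by_contra hpP
      linarith [(hsep p hp).2 hpP]
    · exact fun hpP => ⟨hP p hpP, (hsep p (hP p hpP)).1 hpP⟩
  · rintro ⟨⟨hanti, hne⟩, rfl⟩
    refine ⟨hanti, fun p hp => ⟨fun h => h.2, fun h => ?_⟩⟩
    exact lt_of_le_of_ne (not_lt.mp fun hgt => h ⟨hp, hgt⟩) (hne p hp)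

lemma isSymFilter_shiPattern (hw : IsSignedPerm n w) {x : Fin n → ℝ} (hx : x ∈ coneShiC n w) :
    IsSymFilter n w (shiPattern n w x) := by
  have hanti := ((mem_coneShiC_iff hw).1 hx).1.antitoneOn
  refine ⟨fun p hp => hp.1, fun p ⟨hp, hgt⟩ q hq hpq => ⟨hq, ?_⟩, fun p ⟨hp, hgt⟩ => ?_⟩
  · linarith [hanti hq.1 hp.1 hpq.1, hanti hp.2.1 hq.2.1 hpq.2]
  · refine ⟨QCmem.negSwap hp, ?_⟩
    simpa only [negSwap, odd_wCoord hw x _, neg_sub_neg] using hgt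

lemma exists_wCoord_eqOn (hw : IsSignedPerm n w) {z : ℤ → ℝ} (hz : Function.Odd z) :
    ∃ x : Fin n → ℝ, Set.EqOn (wCoord n w x) z (pmSet n) := by
  set g := Function.invFunOn w (pmSet n)
  have hg : ∀ i ∈ pmSet n, g (w i) = i := fun i hi => hw.1.injOn.leftInvOn_invFunOn hi
  refine ⟨fun a => z (g ((a : ℤ) + 1)), fun i hi => ?_⟩
  obtain ⟨a, ha | ha⟩ := exists_fin_of_mem_pmSet (hw.1.mapsTo hi)
  · rw [wCoord_apply, ha, signedCoord_natCast_add_one, ← ha, hg i hi]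
  · rw [wCoord_apply, ha, signedCoord_neg, signedCoord_natCast_add_one,
      ← neg_eq_iff_eq_neg.mpr ha, ← hw.2.1, hg _ (neg_mem_pmSet hi), hz, neg_neg]

lemma exists_shiPattern_eq (hw : IsSignedPerm n w) {F : Set (ℤ × ℤ)} (hF : IsSymFilter n w F) :
    ∃ x ∈ coneShiC n w, shiPattern n w x = F := by
  have hU : IsSymUpperSet (qcUpperClosure F) :=
    ⟨fun p ⟨a, ha, hap⟩ q hpq => ⟨a, ha, QCle.trans hap hpq⟩,
      fun p ⟨a, ha, hap⟩ => ⟨negSwap a, hF.2.2 a ha, QCle.negSwap hap⟩⟩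
  obtain ⟨z, hz⟩ := exists_separates _ hU n
  obtain ⟨x, hx⟩ := exists_wCoord_eqOn hw hz.odd
  refine ⟨x, (realizes_wCoord_iff hw hF.1).1 ⟨hz.strictAntiOn.congr hx.symm, fun p hp => ?_⟩⟩
  have hmem : p ∈ qcUpperClosure F ↔ p ∈ F :=
    ⟨fun ⟨a, ha, hap⟩ => hF.2.1 a ha p hp hap, fun h => ⟨p, h, QCle.refl p⟩⟩
  have := hz.separatesPair p.1 hp.1 p.2 hp.2.1 hp.2.2.1
  simpa only [SeparatesPair, hmem, hx hp.1, hx hp.2.1] using this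

lemma range_shiPattern (hw : IsSignedPerm n w) :
    Set.range (fun x : coneShiC n w => shiPattern n w x) = {F | IsSymFilter n w F} := by
  ext F
  refine ⟨?_, fun hF => ?_⟩
  · rintro ⟨⟨x, hx⟩, rfl⟩
    exact isSymFilter_shiPattern hw hx
  · obtain ⟨x, hx, rfl⟩ := exists_shiPattern_eq hw hF
    exact ⟨⟨x, hx⟩, rfl⟩

lemma isClopen_setOf_one_lt_wCoord_sub (hw : IsSignedPerm n w) {p : ℤ × ℤ} (hp : QCmem n w p) :
    IsClopen {x : coneShiC n w | 1 < wCoord n w x p.1 - wCoord n w x p.2} := by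
  have : Continuous (wCoord n w) := LinearMap.continuous_of_finiteDimensional _
  have hcont : Continuous fun x : coneShiC n w => wCoord n w x p.1 - wCoord n w x p.2 := by
    fun_prop
  have hle : {x : coneShiC n w | 1 < wCoord n w x p.1 - wCoord n w x p.2} =
      {x : coneShiC n w | 1 ≤ wCoord n w x p.1 - wCoord n w x p.2} := by
    ext x
    simp only [Set.mem_ofPred_eq]
    exact ⟨fun h => h.le, fun h => h.lt_of_ne (((mem_coneShiC_iff hw).1 x.2).2 p hp).symm⟩
  exact ⟨hle ▸ isClosed_le continuous_const hcont, isOpen_lt continuous_const hcont⟩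

lemma connectedComponent_eq_iff_shiPattern_eq (hw : IsSignedPerm n w) (a b : coneShiC n w) :
    connectedComponent a = connectedComponent b ↔ shiPattern n w a = shiPattern n w b := by
  constructor
  · have hsub : ∀ {a b : coneShiC n w}, connectedComponent a = connectedComponent b →
        shiPattern n w a ⊆ shiPattern n w b := fun h p ⟨hp, hgt⟩ =>
      ⟨hp, (isClopen_setOf_one_lt_wCoord_sub hw hp).connectedComponent_subset hgt
        (h ▸ mem_connectedComponent)⟩
    exact fun h => (hsub h).antisymm (hsub h.symm)
  · intro h
    have hP := (isSymFilter_shiPattern hw a.2).1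
    exact connectedComponent_eq_of_isPreconnected
      ((convex_setOf_realizes (shiPattern n w a)).linear_preimage (wCoord n w)).isPreconnected
      (fun x hx => ((realizes_wCoord_iff hw hP).1 hx).1)
      ((realizes_wCoord_iff hw hP).2 ⟨a.2, rfl⟩) ((realizes_wCoord_iff hw hP).2 ⟨b.2, h.symm⟩)

end cone

end ShiC

theorem card_components_coneShiC_eq_jQC_general (n : ℕ) (w : ℤ → ℤ)
    (hw : IsSignedPerm n w) :
    Nat.card (ConnectedComponents ↥(coneShiC n w)) = jQC n w := by
  rw [ShiC.card_connectedComponents_eq_card_range _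
      (ShiC.connectedComponent_eq_iff_shiPattern_eq hw), ShiC.range_shiPattern hw]
  exact Nat.card_congr (ShiC.symFilterEquivSymAntichain n w)

/-- The number of connected components of the part of the complement of the type `C_n`
Shi arrangement in the cone `wC^{BC}` equals the number of symmetric antichains
of `Q^C_w`. -/
theorem card_components_coneShiC_eq_jQC (n : ℕ) (hn : 1 ≤ n) (w : ℤ → ℤ)
    (hw : IsSignedPerm n w) :
    Nat.card (ConnectedComponents ↥(coneShiC n w)) = jQC n w :=
  card_components_coneShiC_eq_jQC_general n w hw
end

section
/- For every integer n ≥ 1, the sum over all integer partitions λ = (λ_1 ≥ ⋯ ≥ λ_d) of n of binom(n+1, d) · (d!/m_λ) · n!/(λ_1!⋯λ_d!) equals (n+1)^n. -/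
/-!
Expand `(1 + ⋯ + 1)^n`, with `n + 1` ones, by the multinomial theorem: it is the sum of
`n! / ∏ kᵢ!` over `k : Fin (n + 1) → ℕ` with `∑ kᵢ = n`. Group these `k` by the partition
`λ` formed by their nonzero values. The `k` in the group of `λ` are the functions whose
multiset of values is `λ` padded with `n + 1 - d` zeros; they form one orbit of the
permutation group of `Fin (n + 1)`, whose stabiliser is a product of symmetric groups of
orders `rᵢ!` and `(n + 1 - d)!`, so the orbit has
`(n + 1)! / ((n + 1 - d)! m_λ) = C(n + 1, d) d! / m_λ` elements.
-/

open Finset Equiv MulAction Nat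

/-- `m_λ = ∏ᵢ rᵢ!`, where `rᵢ` is the number of parts of size `i` in the multiset of
parts `s`. -/
def mLambda (s : Multiset ℕ) : ℕ :=
  ∏ i ∈ s.toFinset, Nat.factorial (s.count i)

namespace Multiset

variable {β : Type*} [DecidableEq β]

theorem countPerms_eq_factorial_card_div (μ : Multiset β) :
    μ.countPerms = (card μ)! / ∏ b ∈ μ.toFinset, (μ.count b)! := by
  rw [countPerms, Finsupp.multinomial_eq, Nat.multinomial, toFinsupp_support,
    ← toFinset_sum_count_eq]
  rfl

theorem prod_factorial_count_mul_countPerms (μ : Multiset β) :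
    (∏ b ∈ μ.toFinset, (μ.count b)!) * μ.countPerms = (card μ)! := by
  rw [← toFinset_sum_count_eq]
  exact Nat.multinomial_spec _ _

theorem filter_ne_eq_iff_eq_add_replicate {μ ν : Multiset β} {a : β} (ha : a ∉ ν) :
    μ.filter (a ≠ ·) = ν ↔ μ = ν + replicate (card μ - card ν) a := by
  constructor
  · rintro rfl
    have hsplit := filter_add_not (a ≠ ·) μ
    simp only [not_not, filter_eq] at hsplit
    have hcard := congrArg card hsplit
    rw [card_add, card_replicate] at hcard
    nth_rw 1 [← hsplit]
    congr
    omega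
  · intro h
    rw [h, filter_add, filter_eq_self.2 fun b hb => ?_, filter_eq_nil.2 fun b hb => ?_, add_zero]
    · simp [eq_of_mem_replicate hb]
    · rintro rfl; exact ha hb

end Multiset

section ValueMultiset

variable {α β : Type*} [Fintype α]

theorem Multiset.exists_map_univ_val_eq {μ : Multiset β}
    (h : Multiset.card μ = Fintype.card α) : ∃ f : α → β, univ.val.map f = μ := by
  induction μ using Quotient.inductionOn with | _ l
  let e : α ≃ Fin l.length := (Fintype.equivFin α).trans (finCongr h.symm)
  refine ⟨l.get ∘ e, ?_⟩
  rw [← Multiset.map_map, Multiset.map_univ_val_equiv, Fin.univ_val_map, List.ofFn_get]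
  rfl

variable [DecidableEq β]

theorem Fintype.card_fiber_eq_count_map_univ_val (f : α → β) (b : β) :
    Fintype.card {a // f a = b} = (univ.val.map f).count b := by
  rw [Fintype.card_subtype, Multiset.count_map]
  simp [Finset.card, eq_comm]

theorem exists_perm_comp_eq_of_map_univ_val_eq {f g : α → β}
    (h : univ.val.map f = univ.val.map g) : ∃ σ : Perm α, f ∘ σ = g := by
  have e (b : β) : {a // g a = b} ≃ {a // f a = b} :=
    Fintype.equivOfCardEq <| by simp only [Fintype.card_fiber_eq_count_map_univ_val, h]
  refine ⟨(sigmaFiberEquiv g).symm.trans ((sigmaCongrRight e).trans (sigmaFiberEquiv f)), ?_⟩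
  funext a
  exact (e (g a) ⟨a, rfl⟩).2

theorem DomMulAct.orbit_perm_eq_setOf_map_univ_val_eq (f : α → β) :
    orbit (Perm α)ᵈᵐᵃ f = {g | univ.val.map g = univ.val.map f} := by
  ext g
  constructor
  · rintro ⟨σ, rfl⟩
    change univ.val.map (f ∘ (DomMulAct.mk.symm σ : Perm α)) = _
    rw [← Multiset.map_map, Multiset.map_univ_val_equiv]
  · intro hg
    obtain ⟨σ, rfl⟩ := exists_perm_comp_eq_of_map_univ_val_eq hg.symm
    exact ⟨DomMulAct.mk σ, rfl⟩

variable [DecidableEq α]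

theorem DomMulAct.card_stabilizer_perm_eq_prod_factorial_count (f : α → β) :
    Nat.card (stabilizer (Perm α)ᵈᵐᵃ f) =
      ∏ b ∈ (univ.val.map f).toFinset, ((univ.val.map f).count b)! := by
  calc Nat.card (stabilizer (Perm α)ᵈᵐᵃ f) = Fintype.card {g : Perm α // f ∘ g = f} := by
        rw [← Nat.card_eq_fintype_card]
        exact Nat.card_congr
          (subtypeEquiv DomMulAct.mk fun _ => DomMulAct.mem_stabilizer_iff).symm
    _ = _ := by
        rw [DomMulAct.stabilizer_card']
        simp only [Fintype.card_fiber_eq_count_map_univ_val]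
        rfl

theorem ncard_setOf_map_univ_val_eq_countPerms {μ : Multiset β}
    (h : Multiset.card μ = Fintype.card α) :
    {f : α → β | univ.val.map f = μ}.ncard = μ.countPerms := by
  obtain ⟨f, rfl⟩ := Multiset.exists_map_univ_val_eq h
  apply Nat.eq_of_mul_eq_mul_left (prod_pos fun b _ => factorial_pos _)
  rw [Multiset.prod_factorial_count_mul_countPerms, mul_comm,
    ← DomMulAct.orbit_perm_eq_setOf_map_univ_val_eq, ← index_stabilizer,
    ← DomMulAct.card_stabilizer_perm_eq_prod_factorial_count, Subgroup.index_mul_card,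
    Nat.card_congr DomMulAct.mk.symm, Nat.card_perm, Nat.card_eq_fintype_card, h]

end ValueMultiset

namespace Nat.Partition

variable {n : ℕ}

def padded (p : n.Partition) (m : ℕ) : Multiset ℕ :=
  p.parts + Multiset.replicate (m - Multiset.card p.parts) 0

theorem card_parts_le (p : n.Partition) : Multiset.card p.parts ≤ n := by
  simpa [p.parts_sum] using Multiset.card_nsmul_le_sum (fun x hx => p.parts_pos hx)

theorem zero_notMem_parts (p : n.Partition) : 0 ∉ p.parts :=
  fun h => (p.parts_pos h).false

theorem card_padded (p : n.Partition) {m : ℕ} (h : Multiset.card p.parts ≤ m) :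
    Multiset.card (p.padded m) = m := by
  rw [padded, Multiset.card_add, Multiset.card_replicate]
  omega

theorem filter_padded (p : n.Partition) (m : ℕ) : (p.padded m).filter (0 ≠ ·) = p.parts := by
  rw [Multiset.filter_ne_eq_iff_eq_add_replicate p.zero_notMem_parts, padded, Multiset.card_add,
    Multiset.card_replicate, Nat.add_sub_cancel_left]

theorem countPerms_padded (p : n.Partition) {m : ℕ} (h : Multiset.card p.parts ≤ m) :
    (p.padded m).countPerms =
      m.choose (Multiset.card p.parts) * ((Multiset.card p.parts)! / mLambda p.parts) := by
  rw [Multiset.countPerms_filter_ne 0, filter_padded, card_padded p h, padded, Multiset.count_add,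
    Multiset.count_replicate_self, Multiset.count_eq_zero.2 p.zero_notMem_parts, zero_add,
    Nat.choose_symm h, Multiset.countPerms_eq_factorial_card_div]
  rfl

variable {α : Type*} [Fintype α]

theorem multinomial_univ_eq_of_map_univ_val_eq_padded (p : n.Partition) {m : ℕ} {k : α → ℕ}
    (h : univ.val.map k = p.padded m) :
    Nat.multinomial univ k = n ! / (p.parts.map factorial).prod := by
  have hprod : ∏ i, (k i)! = ((univ.val.map k).map factorial).prod := by
    rw [Multiset.map_map]; rfl
  rw [Nat.multinomial, sum_eq_multiset_sum, hprod, h]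
  simp [padded, p.parts_sum]

theorem mem_filter_piAntidiag_iff [DecidableEq α] (p : n.Partition) {k : α → ℕ} :
    k ∈ {k ∈ piAntidiag (univ : Finset α) n | (univ.val.map k).filter (0 ≠ ·) = p.parts} ↔
      univ.val.map k = p.padded (Fintype.card α) := by
  rw [mem_filter, mem_piAntidiag, Multiset.filter_ne_eq_iff_eq_add_replicate p.zero_notMem_parts,
    Multiset.card_map, card_val, Finset.card_univ]
  refine ⟨And.right, fun hk => ⟨⟨?_, fun i _ => mem_univ i⟩, hk⟩⟩
  rw [sum_eq_multiset_sum, hk]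
  simp [padded, p.parts_sum]

theorem card_filter_piAntidiag_eq [DecidableEq α] (p : n.Partition)
    (h : Multiset.card p.parts ≤ Fintype.card α) :
    #{k ∈ piAntidiag (univ : Finset α) n | (univ.val.map k).filter (0 ≠ ·) = p.parts} =
      (Fintype.card α).choose (Multiset.card p.parts) *
        ((Multiset.card p.parts)! / mLambda p.parts) := by
  rw [← Set.ncard_coe_finset,
    show _ = {k : α → ℕ | _} from Set.ext fun k => p.mem_filter_piAntidiag_iff,
    ncard_setOf_map_univ_val_eq_countPerms (p.card_padded h), p.countPerms_padded h]

end Nat.Partition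

theorem sum_partitions_eq_general (n : ℕ) :
    ∑ lam : Nat.Partition n,
      (n + 1).choose (Multiset.card lam.parts) *
        (Nat.factorial (Multiset.card lam.parts) / mLambda lam.parts) *
        (Nat.factorial n / (lam.parts.map Nat.factorial).prod) = (n + 1) ^ n := by
  set A := piAntidiag (univ : Finset (Fin (n + 1))) n
  set profile : (Fin (n + 1) → ℕ) → Multiset ℕ := fun k => (univ.val.map k).filter (0 ≠ ·)
  have hmaps : ∀ k ∈ A, profile k ∈ univ.image Nat.Partition.parts := fun k hk =>
    mem_image.2 ⟨.ofSums n (univ.val.map k) (by simpa [A, sum_eq_multiset_sum] using hk),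
      mem_univ _, by simp [profile, ne_comm]⟩
  symm
  calc (n + 1) ^ n = ∑ k ∈ A, Nat.multinomial univ k := by
        simpa using sum_pow_eq_sum_piAntidiag univ (fun _ : Fin (n + 1) => (1 : ℕ)) n
    _ = ∑ μ ∈ univ.image Nat.Partition.parts, ∑ k ∈ A with profile k = μ,
          Nat.multinomial univ k :=
        (sum_fiberwise_of_maps_to hmaps _).symm
    _ = ∑ p : n.Partition, ∑ k ∈ A with profile k = p.parts, Nat.multinomial univ k :=
        sum_image fun p _ q _ h => Nat.Partition.ext h
    _ = _ := sum_congr rfl fun p _ => by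
        rw [sum_const_nat fun k hk => p.multinomial_univ_eq_of_map_univ_val_eq_padded
          (p.mem_filter_piAntidiag_iff.1 hk),
          p.card_filter_piAntidiag_eq (by simpa using p.card_parts_le.trans n.le_succ),
          Fintype.card_fin]

/-- `∑_{λ ⊢ n} C(n+1, d) ⋅ (d!/m_λ) ⋅ n!/(λ₁!⋯λ_d!) = (n+1)^n`, where `d` is the number
of parts of `λ`. -/
theorem sum_partitions_eq (n : ℕ) (hn : 1 ≤ n) :
    ∑ lam : Nat.Partition n,
      (n + 1).choose (Multiset.card lam.parts) *
        (Nat.factorial (Multiset.card lam.parts) / mLambda lam.parts) *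
        (Nat.factorial n / (lam.parts.map Nat.factorial).prod) = (n + 1) ^ n :=
  sum_partitions_eq_general n
end
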